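/- arXiv:2111.09458 — 5 statements merged into one kernel-verified Lean document; each statement's English description precedes it below -/
import Mathlib

section
/- (Theorem 2.1, joint survival function) For all s, t ≥ 0, the joint survival function of (τ_1, τ_2) satisfies P(τ_1 > s, τ_2 > t) = E[exp(−A^1_s − A^2_t − A^3_{max(s,t)})]. -/
open MeasureTheory ProbabilityTheory Filter Set Topology ENNReal
open scoped ENNReal

private lemma aux_intInt {f : ℝ → ℝ}
    (hmono : StrictMonoOn (fun u => ∫ r in (0:ℝ)..u, f r) (Set.Ici 0))
    {v : ℝ} (hv : 0 ≤ v) : IntervalIntegrable f MeasureTheory.volume 0 v := by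
  rcases eq_or_lt_of_le hv with h0 | h0
  · rw [← h0]
  · by_contra h
    have h1 : (∫ r in (0:ℝ)..v, f r) = 0 := intervalIntegral.integral_undef h
    have h2 := hmono Set.self_mem_Ici (le_of_lt h0 : (0:ℝ) ≤ v) h0
    simp only [intervalIntegral.integral_same, h1] at h2
    exact lt_irrefl _ h2

private lemma aux_lt_sInf {f : ℝ → ℝ}
    (hmono : StrictMonoOn (fun u => ∫ r in (0:ℝ)..u, f r) (Set.Ici 0))
    (htop : Tendsto (fun u => ∫ r in (0:ℝ)..u, f r) atTop atTop)
    {z u : ℝ} (hu : 0 ≤ u) :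
    u < sInf {r : ℝ | 0 ≤ r ∧ z ≤ ∫ x in (0:ℝ)..r, f x} ↔ (∫ r in (0:ℝ)..u, f r) < z := by
  set F : ℝ → ℝ := fun v => ∫ r in (0:ℝ)..v, f r with hF
  set S : Set ℝ := {r : ℝ | 0 ≤ r ∧ z ≤ F r} with hS
  have hne : S.Nonempty := by
    obtain ⟨r, hr1, hr2⟩ := ((htop.eventually_ge_atTop z).and (eventually_ge_atTop (0:ℝ))).exists
    exact ⟨r, hr2, hr1⟩
  have hbdd : BddBelow S := ⟨0, fun r hr => hr.1⟩
  constructor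
  · intro h
    by_contra hle
    push_neg at hle
    exact absurd (csInf_le hbdd ⟨hu, hle⟩) (not_le.2 h)
  · intro hFu
    have hmem : ∀ r ∈ S, u ≤ r := by
      intro r hr
      by_contra hru
      push_neg at hru
      have : F r ≤ F u := hmono.monotoneOn hr.1 hu hru.le
      linarith [hr.2]
    have hge : u ≤ sInf S := le_csInf hne hmem
    rcases eq_or_lt_of_le hge with heq | hlt
    · exfalso
      obtain ⟨seq, hanti, hlim, hmemS⟩ := exists_seq_tendsto_sInf hne hbdd
      rw [← heq] at hlim
      have hcont : ContinuousWithinAt F (Set.Icc u (u + 1)) u := by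
        have hi : IntervalIntegrable f MeasureTheory.volume (min 0 u) (max 0 (u + 1)) := by
          rw [min_eq_left hu, max_eq_right (by linarith : (0:ℝ) ≤ u + 1)]
          exact aux_intInt hmono (by linarith)
        exact intervalIntegral.continuousWithinAt_primitive (measure_singleton u) hi
      have hseq_mem : ∀ᶠ n in atTop, seq n ∈ Set.Icc u (u + 1) := by
        filter_upwards [hlim.eventually_le_const (lt_add_one u)] with n hn
        exact ⟨hmem _ (hmemS n), hn⟩
      have htend : Tendsto (fun n => F (seq n)) atTop (𝓝 (F u)) :=
        hcont.tendsto.comp (tendsto_nhdsWithin_iff.2 ⟨hlim, hseq_mem⟩)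
      have : z ≤ F u := ge_of_tendsto htend (Eventually.of_forall fun n => (hmemS n).2)
      linarith
    · exact hlt

@[irreducible] private noncomputable def egrid (n : ℕ) (r : ℝ) : ℕ := (⌈(n + 1 : ℝ) * r⌉).toNat

private lemma egrid_meas (n : ℕ) : Measurable (egrid n) := by
  unfold egrid
  have h' : Measurable fun r : ℝ => ⌈(n + 1 : ℝ) * r⌉ :=
    Int.measurable_ceil.comp (measurable_const_mul _)
  exact (measurable_of_countable Int.toNat).comp h'

private lemma egrid_cast {n : ℕ} {r : ℝ} (hr : 0 < r) :
    ((egrid n r : ℕ) : ℝ) = ((⌈(n + 1 : ℝ) * r⌉ : ℤ) : ℝ) := by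
  have hpos : (0:ℤ) ≤ ⌈(n + 1 : ℝ) * r⌉ := Int.ceil_nonneg (by positivity)
  unfold egrid
  exact_mod_cast congrArg (fun z : ℤ => (z : ℝ)) (Int.toNat_of_nonneg hpos)

private lemma egrid_low {n : ℕ} {r : ℝ} (hr : 0 < r) : r ≤ (egrid n r : ℝ) / (n + 1) := by
  have hnpos : (0:ℝ) < (n : ℝ) + 1 := by positivity
  rw [le_div_iff₀ hnpos, egrid_cast hr]
  calc r * ((n:ℝ) + 1) = ((n:ℝ) + 1) * r := by ring
  _ ≤ _ := Int.le_ceil _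

private lemma egrid_up {n : ℕ} {r : ℝ} (hr : 0 < r) :
    (egrid n r : ℝ) / (n + 1) ≤ r + 1 / (n + 1) := by
  have hnpos : (0:ℝ) < (n : ℝ) + 1 := by positivity
  rw [div_le_iff₀ hnpos, egrid_cast hr]
  have h := (Int.ceil_lt_add_one ((n + 1 : ℝ) * r)).le
  calc ((⌈(n + 1 : ℝ) * r⌉ : ℤ) : ℝ) ≤ (n + 1 : ℝ) * r + 1 := h
  _ = (r + 1 / ((n:ℝ) + 1)) * ((n:ℝ) + 1) := by field_simp

set_option maxHeartbeats 1000000 in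
private lemma aux_meas {Ω : Type*} [mΩ : MeasurableSpace Ω] {d : ℕ}
    (X : ℝ → Ω → (Fin d → ℝ)) (hX : Measurable (Function.uncurry X))
    (hXrc : ∀ ω, ∀ t : ℝ, ContinuousWithinAt (fun s => X s ω) (Set.Ici t) t)
    (β : (Fin d → ℝ) → ℝ) (hβc : Continuous β) (u : ℝ)
    (m' : MeasurableSpace Ω)
    (hXG : ∀ q : ℝ, 0 ≤ q → Measurable[m'] (X q)) :
    Measurable[m'] (fun ω => ∫⁻ r in Set.Ioc (0:ℝ) u, ENNReal.ofReal (β (X r ω))) := by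
  have hpath : ∀ ω, Measurable (fun r => X r ω) := fun ω =>
    hX.comp (measurable_id.prodMk measurable_const)
  have hq_meas : ∀ n : ℕ, Measurable (fun r : ℝ => ((egrid n r : ℝ) / (n + 1))) := fun n =>
    ((measurable_of_countable _).comp (egrid_meas n)).div_const _
  have key : ∀ M : ℕ, Measurable[m']
      (fun ω => ∫⁻ r in Set.Ioc (0:ℝ) u, ENNReal.ofReal (min (β (X r ω)) M)) := by
    intro M
    have hFmeas : ∀ n : ℕ, Measurable[m'] (fun ω => ∫⁻ r in Set.Ioc (0:ℝ) u,
        ENNReal.ofReal (min (β (X ((egrid n r : ℝ) / (n + 1)) ω)) M)) := by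
      intro n
      letI : MeasurableSpace Ω := m'
      have h0 : ∀ k : ℕ,
          Measurable fun ω => ENNReal.ofReal (min (β (X ((k : ℝ) / (n + 1)) ω)) M) := by
        intro k
        have hk : (0:ℝ) ≤ (k : ℝ) / (n + 1) := by positivity
        exact ENNReal.measurable_ofReal.comp
          (((hβc.measurable.comp (hXG _ hk))).min measurable_const)
      have h1 : Measurable
          (fun p : Ω × ℕ => ENNReal.ofReal (min (β (X ((p.2 : ℝ) / (n + 1)) p.1)) M)) :=
        measurable_from_prod_countable_left fun k => h0 k
      have h2 : Measurable
          (fun p : Ω × ℝ => ENNReal.ofReal (min (β (X ((egrid n p.2 : ℝ) / (n + 1)) p.1)) M)) :=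
        h1.comp (measurable_fst.prodMk ((egrid_meas n).comp measurable_snd))
      exact h2.lintegral_prod_right'
    have hFtend : ∀ ω, Tendsto (fun n : ℕ => ∫⁻ r in Set.Ioc (0:ℝ) u,
        ENNReal.ofReal (min (β (X ((egrid n r : ℝ) / (n + 1)) ω)) M)) atTop
        (𝓝 (∫⁻ r in Set.Ioc (0:ℝ) u, ENNReal.ofReal (min (β (X r ω)) M))) := by
      intro ω
      refine tendsto_lintegral_of_dominated_convergence (fun _ => ENNReal.ofReal M)
        (fun n => ?_) (fun n => Eventually.of_forall fun r => ?_) ?_ ?_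
      · exact ENNReal.measurable_ofReal.comp
          (((hβc.measurable.comp ((hpath ω).comp (hq_meas n)))).min measurable_const)
      · exact ENNReal.ofReal_le_ofReal (min_le_right _ _)
      · rw [lintegral_const, Measure.restrict_apply_univ]
        exact ENNReal.mul_ne_top ENNReal.ofReal_ne_top
          (by rw [Real.volume_Ioc]; exact ENNReal.ofReal_ne_top)
      · rw [ae_restrict_iff' measurableSet_Ioc]
        refine Eventually.of_forall fun r hr => ?_
        have hr0 : 0 < r := hr.1
        have htendq : Tendsto (fun n : ℕ => (egrid n r : ℝ) / (n + 1)) atTop (𝓝 r) := by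
          refine tendsto_of_tendsto_of_tendsto_of_le_of_le
            (tendsto_const_nhds : Tendsto (fun _ : ℕ => r) atTop (𝓝 r)) ?_
            (fun n => egrid_low hr0) (fun n => egrid_up hr0)
          have h1 : Tendsto (fun n : ℕ => r + 1 / ((n:ℝ) + 1)) atTop (𝓝 (r + 0)) :=
            tendsto_const_nhds.add tendsto_one_div_add_atTop_nhds_zero_nat
          simpa using h1
        have hwithin : Tendsto (fun n : ℕ => (egrid n r : ℝ) / (n + 1)) atTop (𝓝[Set.Ici r] r) :=
          tendsto_nhdsWithin_iff.2 ⟨htendq, Eventually.of_forall fun n => egrid_low hr0⟩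
        have hXlim : Tendsto (fun n : ℕ => X ((egrid n r : ℝ) / (n + 1)) ω) atTop
            (𝓝 (X r ω)) := (hXrc ω r).tendsto.comp hwithin
        exact (ENNReal.continuous_ofReal.tendsto _).comp
          (((hβc.tendsto _).comp hXlim).min tendsto_const_nhds)
    letI : MeasurableSpace Ω := m'
    exact ENNReal.measurable_of_tendsto' atTop hFmeas (tendsto_pi_nhds.2 hFtend)
  have hfinal : (fun ω => ∫⁻ r in Set.Ioc (0:ℝ) u, ENNReal.ofReal (β (X r ω)))
      = fun ω => ⨆ M : ℕ, ∫⁻ r in Set.Ioc (0:ℝ) u, ENNReal.ofReal (min (β (X r ω)) M) := by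
    funext ω
    rw [← lintegral_iSup]
    · refine lintegral_congr fun r => ?_
      refine (le_antisymm (iSup_le fun M => ENNReal.ofReal_le_ofReal (min_le_left _ _)) ?_).symm
      calc ENNReal.ofReal (β (X r ω))
          = ENNReal.ofReal (min (β (X r ω)) (⌈β (X r ω)⌉₊ : ℝ)) := by
            rw [min_eq_left (Nat.le_ceil _)]
        _ ≤ ⨆ M : ℕ, ENNReal.ofReal (min (β (X r ω)) M) :=
            le_iSup (fun M : ℕ => ENNReal.ofReal (min (β (X r ω)) (M : ℝ))) ⌈β (X r ω)⌉₊
    · exact fun M => ENNReal.measurable_ofReal.comp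
        ((hβc.measurable.comp (hpath ω)).min measurable_const)
    · intro a b hab r
      exact ENNReal.ofReal_le_ofReal (min_le_min le_rfl (by exact_mod_cast hab))
  rw [hfinal]
  exact Measurable.iSup fun M => key M

private def sigX {Ω : Type*} {d : ℕ} (X : ℝ → Ω → (Fin d → ℝ)) : MeasurableSpace Ω :=
  ⨆ t ∈ Set.Ici (0:ℝ), MeasurableSpace.comap (X t) inferInstance

set_option maxHeartbeats 1000000 in
theorem stmt0
    {Ω : Type*} [MeasurableSpace Ω] (P : Measure Ω) [IsProbabilityMeasure P]
    {d : ℕ} (X : ℝ → Ω → (Fin d → ℝ))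
    (hX : Measurable (Function.uncurry X))
    (hXrc : ∀ ω, ∀ t : ℝ, ContinuousWithinAt (fun s => X s ω) (Set.Ici t) t)
    (Z : Fin 3 → Ω → ℝ) (hZmeas : ∀ i, Measurable (Z i))
    (hZexp : ∀ i, ∀ s : ℝ, 0 ≤ s →
      P {ω | s < Z i ω} = ENNReal.ofReal (Real.exp (-s)))
    (hindep : iIndep
      (fun j : Option (Fin 3) =>
        Option.elim j
          (⨆ t ∈ Set.Ici (0 : ℝ), MeasurableSpace.comap (X t) inferInstance)
          (fun i => MeasurableSpace.comap (Z i) inferInstance)) P)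
    (α : Fin 3 → (Fin d → ℝ) → ℝ)
    (hαcont : ∀ i, Continuous (α i)) (hαpos : ∀ i x, 0 ≤ α i x)
    (A : Fin 3 → ℝ → Ω → ℝ)
    (hA : ∀ i s ω, A i s ω = ∫ r in (0 : ℝ)..s, α i (X r ω))
    (hAmono : ∀ᵐ ω ∂P, ∀ i, StrictMonoOn (fun s => A i s ω) (Set.Ici (0 : ℝ)))
    (hAtop : ∀ᵐ ω ∂P, ∀ i, Filter.Tendsto (fun s => A i s ω) Filter.atTop Filter.atTop)
    (η : Fin 3 → Ω → ℝ)
    (hη : ∀ i ω, η i ω = sInf {s : ℝ | 0 ≤ s ∧ Z i ω ≤ A i s ω})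
    (τ₁ τ₂ : Ω → ℝ)
    (hτ₁ : ∀ ω, τ₁ ω = min (η 0 ω) (η 2 ω))
    (hτ₂ : ∀ ω, τ₂ ω = min (η 1 ω) (η 2 ω))
    (s t : ℝ) (hs : 0 ≤ s) (ht : 0 ≤ t) :
    (P {ω | s < τ₁ ω ∧ t < τ₂ ω}).toReal
      = ∫ ω, Real.exp (-(A 0 s ω) - A 1 t ω - A 2 (max s t) ω) ∂P := by
  classical
  have hXt : ∀ q : ℝ, Measurable (X q) := fun q =>
    hX.comp measurable_prodMk_left
  have hXG : ∀ q : ℝ, 0 ≤ q → Measurable[sigX X] (X q) := fun q hq =>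
    measurable_iff_comap_le.2
      (le_biSup (f := fun t => MeasurableSpace.comap (X t) inferInstance) (Set.mem_Ici.2 hq))
  have h𝔊le : sigX X ≤ ‹MeasurableSpace Ω› := by
    refine iSup₂_le fun q _ => (hXt q).comap_le
  -- the three time horizons
  set T : Fin 3 → ℝ := ![s, t, max s t] with hT
  have hTnn : ∀ i, 0 ≤ T i := by
    intro i
    fin_cases i
    · exact hs
    · exact ht
    · exact le_trans hs (le_max_left _ _)
  -- the 𝔊-measurable versions of the integrated intensities
  set W : Ω → Fin 3 → ℝ := fun ω i =>
    (∫⁻ r in Set.Ioc (0:ℝ) (T i), ENNReal.ofReal (α i (X r ω))).toReal with hWdef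
  have hWmeasG : Measurable[sigX X] W := by
    refine @measurable_pi_lambda Ω (Fin 3) (fun _ => ℝ) (sigX X) _ W fun i => ?_
    exact ENNReal.measurable_toReal.comp
      (aux_meas X hX hXrc (α i) (hαcont i) (T i) (sigX X) hXG)
  have hWmeas : Measurable W := hWmeasG.mono h𝔊le le_rfl
  have hWnn : ∀ ω i, 0 ≤ W ω i := fun ω i => ENNReal.toReal_nonneg
  -- a.e. identification of A with W
  have hAW : ∀ ω, (∀ i, StrictMonoOn (fun v => A i v ω) (Set.Ici (0:ℝ))) →
      ∀ (i : Fin 3) (u : ℝ), 0 ≤ u →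
      A i u ω = (∫⁻ r in Set.Ioc (0:ℝ) u, ENNReal.ofReal (α i (X r ω))).toReal := by
    intro ω hm i u hu
    have hmono' : StrictMonoOn (fun v => ∫ r in (0:ℝ)..v, α i (X r ω)) (Set.Ici 0) := by
      have hfun : (fun v => ∫ r in (0:ℝ)..v, α i (X r ω)) = fun v => A i v ω := by
        funext v; rw [hA]
      rw [hfun]; exact hm i
    have hint : IntervalIntegrable (fun r => α i (X r ω)) volume 0 u := aux_intInt hmono' hu
    have hio : IntegrableOn (fun r => α i (X r ω)) (Set.Ioc 0 u) volume :=
      (intervalIntegrable_iff_integrableOn_Ioc_of_le hu).1 hint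
    have hnn : 0 ≤ᵐ[volume.restrict (Set.Ioc (0:ℝ) u)] fun r => α i (X r ω) :=
      Filter.Eventually.of_forall fun r => hαpos i _
    have h1 : ENNReal.ofReal (∫ r in Set.Ioc (0:ℝ) u, α i (X r ω))
        = ∫⁻ r in Set.Ioc (0:ℝ) u, ENNReal.ofReal (α i (X r ω)) :=
      ofReal_integral_eq_lintegral_ofReal hio hnn
    rw [hA, intervalIntegral.integral_of_le hu, ← h1,
      ENNReal.toReal_ofReal (setIntegral_nonneg measurableSet_Ioc fun r _ => hαpos i _)]
  -- characterization of the event u < η i ω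
  have hchar : ∀ ω, (∀ i, StrictMonoOn (fun v => A i v ω) (Set.Ici (0:ℝ))) →
      (∀ i, Filter.Tendsto (fun v => A i v ω) Filter.atTop Filter.atTop) →
      ∀ (i : Fin 3) (u : ℝ), 0 ≤ u → (u < η i ω ↔ A i u ω < Z i ω) := by
    intro ω hm htp i u hu
    have hfun : (fun v => ∫ r in (0:ℝ)..v, α i (X r ω)) = fun v => A i v ω := by
      funext v; rw [hA]
    have hmono' : StrictMonoOn (fun v => ∫ r in (0:ℝ)..v, α i (X r ω)) (Set.Ici 0) := by
      rw [hfun]; exact hm i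
    have htop' : Filter.Tendsto (fun v => ∫ r in (0:ℝ)..v, α i (X r ω))
        Filter.atTop Filter.atTop := by rw [hfun]; exact htp i
    have h := aux_lt_sInf hmono' htop' (z := Z i ω) hu
    rw [hη, hA]
    have hset : {v : ℝ | 0 ≤ v ∧ Z i ω ≤ A i v ω}
        = {r : ℝ | 0 ≤ r ∧ Z i ω ≤ ∫ x in (0:ℝ)..r, α i (X x ω)} := by
      ext v; simp only [Set.mem_setOf_eq, hA]
    rw [hset]
    exact h
  -- identify W with A at the three time horizons
  have hWA : ∀ ω, (∀ i, StrictMonoOn (fun v => A i v ω) (Set.Ici (0:ℝ))) →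
      W ω 0 = A 0 s ω ∧ W ω 1 = A 1 t ω ∧ W ω 2 = A 2 (max s t) ω := by
    intro ω hm
    have hT0 : T 0 = s := by simp [hT]
    have hT1 : T 1 = t := by simp [hT]
    have hT2' : T 2 = max s t := by simp [hT]
    refine ⟨?_, ?_, ?_⟩
    · simp only [hWdef, hT0]
      exact (hAW ω hm 0 s hs).symm
    · simp only [hWdef, hT1]
      exact (hAW ω hm 1 t ht).symm
    · simp only [hWdef, hT2']
      exact (hAW ω hm 2 (max s t) (le_trans hs (le_max_left _ _))).symm
  -- the a.e. event rewrite
  have heq : {ω | s < τ₁ ω ∧ t < τ₂ ω} =ᵐ[P] {ω | ∀ i, W ω i < Z i ω} := by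
    rw [Filter.eventuallyEq_set]
    filter_upwards [hAmono, hAtop] with ω hm htp
    obtain ⟨hW0, hW1, hW2⟩ := hWA ω hm
    show (s < τ₁ ω ∧ t < τ₂ ω) ↔ ∀ i, W ω i < Z i ω
    constructor
    · rintro ⟨h1, h2⟩
      rw [hτ₁, lt_min_iff] at h1
      rw [hτ₂, lt_min_iff] at h2
      intro i
      fin_cases i
      · show W ω 0 < Z 0 ω
        rw [hW0]
        exact (hchar ω hm htp 0 s hs).1 h1.1
      · show W ω 1 < Z 1 ω
        rw [hW1]
        exact (hchar ω hm htp 1 t ht).1 h2.1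
      · show W ω 2 < Z 2 ω
        rw [hW2]
        exact (hchar ω hm htp 2 (max s t) (le_trans hs (le_max_left _ _))).1
          (max_lt h1.2 h2.2)
    · intro h
      have h0 := h 0; have h1 := h 1; have h2 := h 2
      rw [hW0] at h0; rw [hW1] at h1; rw [hW2] at h2
      have e0 := (hchar ω hm htp 0 s hs).2 h0
      have e1 := (hchar ω hm htp 1 t ht).2 h1
      have e2 := (hchar ω hm htp 2 (max s t) (le_trans hs (le_max_left _ _))).2 h2
      have e2s : s < η 2 ω := lt_of_le_of_lt (le_max_left s t) e2
      have e2t : t < η 2 ω := lt_of_le_of_lt (le_max_right s t) e2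
      exact ⟨by rw [hτ₁]; exact lt_min e0 e2s, by rw [hτ₂]; exact lt_min e1 e2t⟩
  -- V and independence
  set V : Ω → Fin 3 → ℝ := fun ω i => Z i ω with hVdef
  have hVmeas : Measurable V := measurable_pi_lambda _ fun i => hZmeas i
  have hVmeasG : Measurable[⨆ i : Fin 3, MeasurableSpace.comap (Z i) inferInstance] V := by
    refine @measurable_pi_lambda Ω (Fin 3) (fun _ => ℝ)
      (⨆ i : Fin 3, MeasurableSpace.comap (Z i) inferInstance) _ V fun i => ?_
    exact measurable_iff_comap_le.2
      (le_iSup (fun i => MeasurableSpace.comap (Z i) inferInstance) i)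
  have h_le : ∀ j : Option (Fin 3),
      (fun j : Option (Fin 3) =>
        Option.elim j
          (⨆ t ∈ Set.Ici (0 : ℝ), MeasurableSpace.comap (X t) inferInstance)
          (fun i => MeasurableSpace.comap (Z i) inferInstance)) j
        ≤ ‹MeasurableSpace Ω› := by
    intro j
    cases j with
    | none => exact h𝔊le
    | some i => exact (hZmeas i).comap_le
  have hbig := ProbabilityTheory.indep_biSup_compl h_le hindep {none}
  have hIndep : Indep (sigX X) (⨆ i : Fin 3, MeasurableSpace.comap (Z i) inferInstance) P := by
    refine indep_of_indep_of_le_left (indep_of_indep_of_le_right hbig ?_) ?_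
    · refine iSup_le fun i => ?_
      exact le_biSup (f := fun j : Option (Fin 3) =>
        Option.elim j
          (⨆ t ∈ Set.Ici (0 : ℝ), MeasurableSpace.comap (X t) inferInstance)
          (fun i => MeasurableSpace.comap (Z i) inferInstance))
        (by simp : (some i : Option (Fin 3)) ∈ ({none}ᶜ : Set (Option (Fin 3))))
    · exact le_biSup (f := fun j : Option (Fin 3) =>
        Option.elim j
          (⨆ t ∈ Set.Ici (0 : ℝ), MeasurableSpace.comap (X t) inferInstance)
          (fun i => MeasurableSpace.comap (Z i) inferInstance))
        (Set.mem_singleton (none : Option (Fin 3)))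
  have hIndepF : IndepFun W V P := by
    rw [IndepFun_iff_Indep]
    exact indep_of_indep_of_le_left
      (indep_of_indep_of_le_right hIndep hVmeasG.comap_le) hWmeasG.comap_le
  have hprod : P.map (fun ω => (W ω, V ω)) = (P.map W).prod (P.map V) :=
    (ProbabilityTheory.indepFun_iff_map_prod_eq_prod_map_map
      hWmeas.aemeasurable hVmeas.aemeasurable).1 hIndepF
  have hT2 : MeasurableSet {p : (Fin 3 → ℝ) × (Fin 3 → ℝ) | ∀ i, p.1 i < p.2 i} := by
    have hrw : {p : (Fin 3 → ℝ) × (Fin 3 → ℝ) | ∀ i, p.1 i < p.2 i}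
        = ⋂ i, {p : (Fin 3 → ℝ) × (Fin 3 → ℝ) | p.1 i < p.2 i} := by ext p; simp
    rw [hrw]
    refine MeasurableSet.iInter fun i => measurableSet_lt ?_ ?_
    · exact (measurable_pi_apply i).comp measurable_fst
    · exact (measurable_pi_apply i).comp measurable_snd
  haveI hPV : IsProbabilityMeasure (P.map V) := Measure.isProbabilityMeasure_map hVmeas.aemeasurable
  -- slice computation using independence of the Z's
  have hslice : ∀ w : Fin 3 → ℝ, (∀ i, 0 ≤ w i) →
      (P.map V) {v : Fin 3 → ℝ | ∀ i, w i < v i}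
        = ENNReal.ofReal (Real.exp (-(w 0 + w 1 + w 2))) := by
    intro w hw
    have hms : MeasurableSet {v : Fin 3 → ℝ | ∀ i, w i < v i} := by
      have hrw : {v : Fin 3 → ℝ | ∀ i, w i < v i} = ⋂ i, {v : Fin 3 → ℝ | w i < v i} := by
        ext v; simp
      rw [hrw]
      exact MeasurableSet.iInter fun i =>
        measurableSet_lt measurable_const (measurable_pi_apply i)
    rw [Measure.map_apply hVmeas hms]
    have hVpre : V ⁻¹' {v : Fin 3 → ℝ | ∀ i, w i < v i}
        = ⋂ j ∈ (Finset.univ.image (some : Fin 3 → Option (Fin 3))),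
            Option.elim j Set.univ (fun i => {ω | w i < Z i ω}) := by
      ext ω
      simp only [Set.mem_preimage, Set.mem_setOf_eq, Set.mem_iInter, Finset.mem_image,
        Finset.mem_univ, true_and, hVdef]
      constructor
      · rintro h j ⟨i, rfl⟩
        exact h i
      · intro h i
        exact h (some i) ⟨i, rfl⟩
    rw [hVpre, hindep.meas_biInter ?hmeasb]
    case hmeasb =>
      intro j hj
      simp only [Finset.mem_image, Finset.mem_univ, true_and] at hj
      obtain ⟨i, rfl⟩ := hj
      exact ⟨Set.Ioi (w i), measurableSet_Ioi, rfl⟩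
    rw [Finset.prod_image (by intro x _ y _ h; exact Option.some_injective _ h)]
    have hval : ∀ i : Fin 3,
        P (Option.elim (some i) Set.univ (fun i => {ω | w i < Z i ω}))
          = ENNReal.ofReal (Real.exp (-(w i))) := fun i => by
      simpa using hZexp i (w i) (hw i)
    rw [Fin.prod_univ_three, hval 0, hval 1, hval 2]
    have hexp : Real.exp (-(w 0)) * Real.exp (-(w 1)) * Real.exp (-(w 2))
        = Real.exp (-(w 0 + w 1 + w 2)) := by
      rw [← Real.exp_add, ← Real.exp_add]; ring_nf
    rw [← ENNReal.ofReal_mul (Real.exp_nonneg _),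
      ← ENNReal.ofReal_mul (mul_nonneg (Real.exp_nonneg _) (Real.exp_nonneg _)), hexp]
  -- the exponential integrand measurability
  have hexp_meas : Measurable fun w : Fin 3 → ℝ =>
      ENNReal.ofReal (Real.exp (-(w 0 + w 1 + w 2))) := by
    apply ENNReal.measurable_ofReal.comp
    apply Real.measurable_exp.comp
    exact (((measurable_pi_apply 0).add (measurable_pi_apply 1)).add
      (measurable_pi_apply 2)).neg
  -- the main identity
  have hmain : P {ω | ∀ i, W ω i < Z i ω}
      = ∫⁻ ω, ENNReal.ofReal (Real.exp (-(W ω 0 + W ω 1 + W ω 2))) ∂P := by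
    have h1 : {ω | ∀ i, W ω i < Z i ω}
        = (fun ω => (W ω, V ω)) ⁻¹' {p : (Fin 3 → ℝ) × (Fin 3 → ℝ) | ∀ i, p.1 i < p.2 i} := rfl
    rw [h1, ← Measure.map_apply (hWmeas.prodMk hVmeas) hT2, hprod, Measure.prod_apply hT2]
    have hnnae : ∀ᵐ w ∂(P.map W), ∀ i, 0 ≤ w i := by
      have hmsnn : MeasurableSet {w : Fin 3 → ℝ | ∀ i, 0 ≤ w i} := by
        have hrw : {w : Fin 3 → ℝ | ∀ i, 0 ≤ w i} = ⋂ i, {w : Fin 3 → ℝ | 0 ≤ w i} := by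
          ext w; simp
        rw [hrw]
        exact MeasurableSet.iInter fun i =>
          measurableSet_le measurable_const (measurable_pi_apply i)
      rw [ae_map_iff hWmeas.aemeasurable hmsnn]
      exact Filter.Eventually.of_forall fun ω i => hWnn ω i
    have h3 : ∫⁻ w, (P.map V)
          (Prod.mk w ⁻¹' {p : (Fin 3 → ℝ) × (Fin 3 → ℝ) | ∀ i, p.1 i < p.2 i}) ∂(P.map W)
        = ∫⁻ w, ENNReal.ofReal (Real.exp (-(w 0 + w 1 + w 2))) ∂(P.map W) := by
      refine lintegral_congr_ae ?_
      filter_upwards [hnnae] with w hw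
      exact hslice w hw
    rw [h3, lintegral_map hexp_meas hWmeas]
  -- Bochner translation
  have hRmeas : Measurable fun ω => Real.exp (-(W ω 0 + W ω 1 + W ω 2)) := by
    apply Real.measurable_exp.comp
    exact ((((measurable_pi_apply 0).comp hWmeas).add
      ((measurable_pi_apply 1).comp hWmeas)).add
      ((measurable_pi_apply 2).comp hWmeas)).neg
  have hInt : ∫ ω, Real.exp (-(W ω 0 + W ω 1 + W ω 2)) ∂P
      = (∫⁻ ω, ENNReal.ofReal (Real.exp (-(W ω 0 + W ω 1 + W ω 2))) ∂P).toReal := by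
    rw [integral_eq_lintegral_of_nonneg_ae
      (Filter.Eventually.of_forall fun ω => Real.exp_nonneg _) hRmeas.aestronglyMeasurable]
  have hcongr : ∫ ω, Real.exp (-(A 0 s ω) - A 1 t ω - A 2 (max s t) ω) ∂P
      = ∫ ω, Real.exp (-(W ω 0 + W ω 1 + W ω 2)) ∂P := by
    refine integral_congr_ae ?_
    filter_upwards [hAmono] with ω hm
    obtain ⟨hW0, hW1, hW2⟩ := hWA ω hm
    rw [hW0, hW1, hW2]
    congr 1
    ring
  calc (P {ω | s < τ₁ ω ∧ t < τ₂ ω}).toReal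
      = (P {ω | ∀ i, W ω i < Z i ω}).toReal := by rw [measure_congr heq]
    _ = (∫⁻ ω, ENNReal.ofReal (Real.exp (-(W ω 0 + W ω 1 + W ω 2))) ∂P).toReal := by
        rw [hmain]
    _ = ∫ ω, Real.exp (-(W ω 0 + W ω 1 + W ω 2)) ∂P := hInt.symm
    _ = ∫ ω, Real.exp (-(A 0 s ω) - A 1 t ω - A 2 (max s t) ω) ∂P := hcongr.symm
end

section
/- (Theorem 2.2, decomposition of the joint law) The law μ of the random vector (τ_1, τ_2) on [0,∞)² decomposes as μ = μ_ac + μ_sing, where: (i) μ_ac is absolutely continuous with respect to two-dimensional Lebesgue measure and satisfies μ_ac((s,∞)×(t,∞)) = exp(−A^1_s − A^2_t − A^3_{max(s,t)}) − ∫_{max(s,t)}^∞ α^3(x) exp(−A^1_x − A^2_x − A^3_x) dx for all s, t ≥ 0; and (ii) μ_sing is concentrated on the diagonal {(x,x) : x ≥ 0} (hence singular with respect to two-dimensional Lebesgue measure whenever it is nonzero) and satisfies μ_sing((s,∞)×(t,∞)) = ∫_{max(s,t)}^∞ α^3(x) exp(−A^1_x − A^2_x − A^3_x) dx for all s, t ≥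 0. -/
/-!
Each `η i` is the first passage of the cumulative hazard `A i` over an independent standard
exponential level, so `P (η i > s) = exp (-A i s)` and `η i` has density `α i * exp (-A i)` on
`(0, ∞)`. Split `Ω` along the event that the common shock `η 2` comes strictly first. There
`τ₁ = τ₂ = η 2`, so that part of the law lives on the diagonal, and since `η 2` is independent of
`min (η 0) (η 1)` its mass on `(s, ∞) × (t, ∞)` is `∫_{max s t}^∞ α₂ e^{-A₀-A₁-A₂}`. Off that
event `(τ₁, τ₂)` is one of the pairs `(η 0, η 1)`, `(η 0, η 2)`, `(η 2, η 1)` of independent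
absolutely continuous variables, hence absolutely continuous, and its mass on the quadrant is the
joint survival function `exp (-A₀ s - A₁ t - A₂ (max s t))` minus the singular part.
-/

open MeasureTheory ProbabilityTheory Set Filter Real

section Hazard

variable {α A : ℝ → ℝ}

lemma hasDerivAt_of_forall_eq_integral (hα : Continuous α)
    (hA : ∀ s, A s = ∫ r in (0 : ℝ)..s, α r) (x : ℝ) : HasDerivAt A (α x) x := by
  rw [show A = fun s => ∫ r in (0 : ℝ)..s, α r from funext hA]
  exact (hα.integral_hasStrictDerivAt 0 x).hasDerivAt

lemma hasDerivAt_neg_exp_neg (hA : ∀ x, HasDerivAt A (α x) x) (x : ℝ) :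
    HasDerivAt (fun x => -exp (-A x)) (α x * exp (-A x)) x := by
  have h : HasDerivAt (fun x => -exp (-A x)) (-(exp (-A x) * -α x)) x := ((hA x).neg.exp).neg
  rwa [mul_neg, neg_neg, mul_comm] at h

lemma tendsto_neg_exp_neg (htop : Tendsto A atTop atTop) :
    Tendsto (fun x => -exp (-A x)) atTop (nhds 0) := by
  simpa using (tendsto_exp_atBot.comp (tendsto_neg_atBot_iff.2 htop)).neg

lemma integrableOn_Ioi_mul_exp_neg (hA : ∀ x, HasDerivAt A (α x) x) (hα : ∀ x, 0 ≤ α x)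
    (htop : Tendsto A atTop atTop) (a : ℝ) :
    IntegrableOn (fun x => α x * exp (-A x)) (Ioi a) :=
  integrableOn_Ioi_deriv_of_nonneg' (fun x _ => hasDerivAt_neg_exp_neg hA x)
    (fun x _ => mul_nonneg (hα x) (exp_nonneg _)) (tendsto_neg_exp_neg htop)

lemma integral_Ioi_mul_exp_neg (hA : ∀ x, HasDerivAt A (α x) x) (hα : ∀ x, 0 ≤ α x)
    (htop : Tendsto A atTop atTop) (a : ℝ) :
    ∫ x in Ioi a, α x * exp (-A x) = exp (-A a) := by
  rw [integral_Ioi_of_hasDerivAt_of_nonneg' (fun x _ => hasDerivAt_neg_exp_neg hA x)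
    (fun x _ => mul_nonneg (hα x) (exp_nonneg _)) (tendsto_neg_exp_neg htop)]
  ring

lemma integrableOn_Ioi_mul_exp_neg_sub {B : ℝ → ℝ} (hA : ∀ x, HasDerivAt A (α x) x)
    (hα : ∀ x, 0 ≤ α x) (htop : Tendsto A atTop atTop) (hB : Continuous B) {a : ℝ}
    (hB₀ : ∀ x ∈ Ioi a, 0 ≤ B x) :
    IntegrableOn (fun x => α x * exp (-B x - A x)) (Ioi a) := by
  have hbdd : ∀ x ∈ Ioi a, ‖exp (-B x)‖ ≤ 1 := fun x hx => by
    rw [norm_of_nonneg (exp_nonneg _), exp_le_one_iff, neg_nonpos]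
    exact hB₀ x hx
  refine IntegrableOn.congr_fun ((integrableOn_Ioi_mul_exp_neg hA hα htop a).mul_bdd
    (by fun_prop : Continuous fun x => exp (-B x)).aestronglyMeasurable
    (ae_restrict_of_forall_mem measurableSet_Ioi hbdd)) (fun x _ => ?_) measurableSet_Ioi
  rw [mul_assoc, ← exp_add, neg_sub_left, add_comm]
  ring_nf

lemma setLIntegral_Ioi_ofReal_mul_exp_neg (hA : ∀ x, HasDerivAt A (α x) x)
    (hα : ∀ x, 0 ≤ α x) (htop : Tendsto A atTop atTop) (a : ℝ) :
    ∫⁻ x in Ioi a, ENNReal.ofReal (α x * exp (-A x)) = ENNReal.ofReal (exp (-A a)) := by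
  rw [← ofReal_integral_eq_lintegral_ofReal (integrableOn_Ioi_mul_exp_neg hA hα htop a)
    (ae_of_all _ fun x => mul_nonneg (hα x) (exp_nonneg _)), integral_Ioi_mul_exp_neg hA hα htop]

lemma map_eq_withDensity_of_measure_Ioi {Ω : Type*} [MeasurableSpace Ω] {P : Measure Ω}
    [IsProbabilityMeasure P] {X : Ω → ℝ} (hX : Measurable X)
    (hA : ∀ x, HasDerivAt A (α x) x) (hα : ∀ x, 0 ≤ α x) (htop : Tendsto A atTop atTop)
    (hA0 : A 0 = 0) (hsurv : ∀ s, 0 ≤ s → P (X ⁻¹' Ioi s) = ENNReal.ofReal (exp (-A s))) :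
    P.map X = (volume.restrict (Ioi 0)).withDensity fun x => ENNReal.ofReal (α x * exp (-A x)) := by
  have hlaw : ∀ a, P.map X (Ioi a) = ENNReal.ofReal (exp (-A (a ⊔ 0))) := by
    intro a
    rw [Measure.map_apply hX measurableSet_Ioi]
    rcases le_total 0 a with ha | ha
    · rw [sup_of_le_left ha, hsurv a ha]
    · have hpos : P (X ⁻¹' Ioi 0) = 1 := by simp [hsurv 0 le_rfl, hA0]
      rw [sup_of_le_right ha, hA0, neg_zero, exp_zero, ENNReal.ofReal_one]
      exact le_antisymm prob_le_one (hpos ▸ measure_mono (preimage_mono (Ioi_subset_Ioi ha)))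
  have : IsProbabilityMeasure (P.map X) := Measure.isProbabilityMeasure_map hX.aemeasurable
  refine ext_of_generate_finite (range Ioi)
    (BorelSpace.measurable_eq.trans (borel_eq_generateFrom_Ioi ℝ)) isPiSystem_Ioi ?_ ?_
  · rintro _ ⟨a, rfl⟩
    rw [hlaw, withDensity_apply _ measurableSet_Ioi, Measure.restrict_restrict measurableSet_Ioi,
      Ioi_inter_Ioi, setLIntegral_Ioi_ofReal_mul_exp_neg hA hα htop]
  · rw [measure_univ, withDensity_apply _ MeasurableSet.univ, Measure.restrict_univ,
      setLIntegral_Ioi_ofReal_mul_exp_neg hA hα htop, hA0]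
    simp

lemma map_absolutelyContinuous_of_measure_Ioi {Ω : Type*} [MeasurableSpace Ω] {P : Measure Ω}
    [IsProbabilityMeasure P] {X : Ω → ℝ} (hX : Measurable X)
    (hA : ∀ x, HasDerivAt A (α x) x) (hα : ∀ x, 0 ≤ α x) (htop : Tendsto A atTop atTop)
    (hA0 : A 0 = 0) (hsurv : ∀ s, 0 ≤ s → P (X ⁻¹' Ioi s) = ENNReal.ofReal (exp (-A s))) :
    P.map X ≪ volume := by
  rw [map_eq_withDensity_of_measure_Ioi hX hA hα htop hA0 hsurv]
  exact (withDensity_absolutelyContinuous _ _).trans Measure.restrict_le_self.absolutelyContinuous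

end Hazard

section FirstPassage

variable {A : ℝ → ℝ}

noncomputable def firstPassage (A : ℝ → ℝ) (z : ℝ) : ℝ := sInf {s | 0 ≤ s ∧ z ≤ A s}

lemma bddBelow_firstPassage_set (z : ℝ) : BddBelow {r | 0 ≤ r ∧ z ≤ A r} :=
  ⟨0, fun _ hs => hs.1⟩

lemma nonempty_firstPassage_set (htop : Tendsto A atTop atTop) (z : ℝ) :
    {r | 0 ≤ r ∧ z ≤ A r}.Nonempty := by
  obtain ⟨r, hr⟩ := ((htop.eventually (eventually_ge_atTop z)).and (eventually_ge_atTop 0)).exists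
  exact ⟨r, hr.2, hr.1⟩

lemma monotone_firstPassage (htop : Tendsto A atTop atTop) : Monotone (firstPassage A) :=
  fun _ _ hz => csInf_le_csInf (bddBelow_firstPassage_set _) (nonempty_firstPassage_set htop _)
    fun _ hs => ⟨hs.1, hz.trans hs.2⟩

lemma lt_firstPassage_iff (hcont : Continuous A) (hmono : MonotoneOn A (Ici 0))
    (htop : Tendsto A atTop atTop) {s z : ℝ} (hs : 0 ≤ s) :
    s < firstPassage A z ↔ A s < z := by
  have hclosed : IsClosed {r | 0 ≤ r ∧ z ≤ A r} :=
    (isClosed_le continuous_const continuous_id).inter (isClosed_le continuous_const hcont)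
  obtain ⟨h0, hz⟩ : firstPassage A z ∈ {r | 0 ≤ r ∧ z ≤ A r} :=
    hclosed.csInf_mem (nonempty_firstPassage_set htop z) (bddBelow_firstPassage_set z)
  constructor
  · intro h
    by_contra! hle
    exact h.not_ge (csInf_le (bddBelow_firstPassage_set z) ⟨hs, hle⟩)
  · intro h
    by_contra! hle
    exact (hz.trans (hmono h0 hs hle)).not_gt h

lemma preimage_firstPassage_Ioi (hcont : Continuous A) (hmono : MonotoneOn A (Ici 0))
    (htop : Tendsto A atTop atTop) {s : ℝ} (hs : 0 ≤ s) :
    firstPassage A ⁻¹' Ioi s = Ioi (A s) :=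
  ext fun _ => lt_firstPassage_iff hcont hmono htop hs

lemma measure_firstPassage_comp_preimage_Ioi {Ω : Type*} [MeasurableSpace Ω] {P : Measure Ω}
    {Z : Ω → ℝ} (hcont : Continuous A) (hmono : MonotoneOn A (Ici 0))
    (htop : Tendsto A atTop atTop) (hA0 : A 0 = 0)
    (hZ : ∀ s, 0 ≤ s → P {ω | s < Z ω} = ENNReal.ofReal (exp (-s))) {s : ℝ} (hs : 0 ≤ s) :
    P ((firstPassage A ∘ Z) ⁻¹' Ioi s) = ENNReal.ofReal (exp (-A s)) := by
  rw [preimage_comp, preimage_firstPassage_Ioi hcont hmono htop hs]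
  exact hZ _ (hA0 ▸ hmono self_mem_Ici hs hs)

end FirstPassage

namespace ProbabilityTheory.IndepFun

variable {Ω β γ : Type*} [MeasurableSpace Ω] [MeasurableSpace β] [MeasurableSpace γ]
  {P : Measure Ω} [IsFiniteMeasure P]

lemma map_prodMk_absolutelyContinuous {Y : Ω → β} {W : Ω → γ} {ν₁ : Measure β}
    {ν₂ : Measure γ} [SFinite ν₂] (h : IndepFun Y W P) (hY : Measurable Y) (hW : Measurable W)
    (hYν : P.map Y ≪ ν₁) (hWν : P.map W ≪ ν₂) :
    P.map (fun ω => (Y ω, W ω)) ≪ ν₁.prod ν₂ := by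
  rw [(indepFun_iff_map_prod_eq_prod_map_map hY.aemeasurable hW.aemeasurable).1 h]
  exact hYν.prod hWν

lemma measure_lt_and_lt {Y W : Ω → ℝ} (h : IndepFun Y W P) (hY : Measurable Y)
    (hW : Measurable W) (m : ℝ) :
    P {ω | m < Y ω ∧ Y ω < W ω} = ∫⁻ y in Ioi m, P (W ⁻¹' Ioi y) ∂(P.map Y) := by
  set T : Set (ℝ × ℝ) := {p | m < p.1 ∧ p.1 < p.2}
  have hT : MeasurableSet T :=
    (measurableSet_lt measurable_const measurable_fst).inter
      (measurableSet_lt measurable_fst measurable_snd)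
  have hslice : ∀ y, Prod.mk y ⁻¹' T = if m < y then Ioi y else ∅ := by
    intro y
    split_ifs with hy <;> ext <;> simp [T, hy]
  calc P {ω | m < Y ω ∧ Y ω < W ω} = P.map (fun ω => (Y ω, W ω)) T :=
        (Measure.map_apply (hY.prodMk hW) hT).symm
    _ = ∫⁻ y, P.map W (Prod.mk y ⁻¹' T) ∂(P.map Y) := by
        rw [(indepFun_iff_map_prod_eq_prod_map_map hY.aemeasurable hW.aemeasurable).1 h,
          Measure.prod_apply hT]
    _ = ∫⁻ y, (Ioi m).indicator (fun y => P (W ⁻¹' Ioi y)) y ∂(P.map Y) := by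
        refine lintegral_congr fun y => ?_
        rw [hslice]
        split_ifs with hy
        · rw [indicator_of_mem (mem_Ioi.2 hy), Measure.map_apply hW measurableSet_Ioi]
        · rw [indicator_of_notMem (notMem_Ioi.2 (not_lt.1 hy)), measure_empty]
    _ = ∫⁻ y in Ioi m, P (W ⁻¹' Ioi y) ∂(P.map Y) := lintegral_indicator measurableSet_Ioi _

end ProbabilityTheory.IndepFun

section MarshallOlkin

variable {Ω : Type*} {X : Fin 3 → Ω → ℝ}

def marshallOlkin (X : Fin 3 → Ω → ℝ) (ω : Ω) : ℝ × ℝ :=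
  (min (X 0 ω) (X 2 ω), min (X 1 ω) (X 2 ω))

def commonShockFirst (X : Fin 3 → Ω → ℝ) : Set Ω := {ω | X 2 ω < X 0 ω ∧ X 2 ω < X 1 ω}

lemma marshallOlkin_preimage_Ioi_prod (s t : ℝ) :
    marshallOlkin X ⁻¹' (Ioi s ×ˢ Ioi t)
      = X 0 ⁻¹' Ioi s ∩ X 1 ⁻¹' Ioi t ∩ X 2 ⁻¹' Ioi (max s t) := by
  ext ω
  simp only [marshallOlkin, mem_preimage, mem_prod, mem_Ioi, mem_inter_iff, lt_min_iff, max_lt_iff]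
  tauto

lemma marshallOlkin_preimage_Ioi_prod_inter_commonShockFirst (s t : ℝ) :
    marshallOlkin X ⁻¹' (Ioi s ×ˢ Ioi t) ∩ commonShockFirst X
      = {ω | max s t < X 2 ω ∧ X 2 ω < min (X 0 ω) (X 1 ω)} := by
  ext ω
  simp only [marshallOlkin_preimage_Ioi_prod, commonShockFirst, mem_inter_iff, mem_preimage,
    mem_Ioi, mem_ofPred_eq, max_lt_iff, lt_min_iff]
  constructor
  · rintro ⟨⟨-, h2⟩, h0, h1⟩
    exact ⟨h2, h0, h1⟩
  · rintro ⟨⟨hs, ht⟩, h0, h1⟩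
    exact ⟨⟨⟨hs.trans h0, ht.trans h1⟩, hs, ht⟩, h0, h1⟩

lemma marshallOlkin_eq_of_notMem_commonShockFirst {ω : Ω} (h : ω ∉ commonShockFirst X) :
    marshallOlkin X ω = (X 0 ω, X 1 ω) ∨ marshallOlkin X ω = (X 0 ω, X 2 ω)
      ∨ marshallOlkin X ω = (X 2 ω, X 1 ω) := by
  simp only [commonShockFirst, mem_ofPred_eq, not_and, not_lt] at h
  simp only [marshallOlkin, Prod.mk.injEq]
  rcases le_or_gt (X 0 ω) (X 2 ω) with h02 | h20
  · rcases le_total (X 1 ω) (X 2 ω) with h12 | h21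
    · simp [h02, h12]
    · simp [h02, h21]
  · simp [h20.le, h h20]

variable [MeasurableSpace Ω] {P : Measure Ω}

lemma measurable_marshallOlkin (hX : ∀ i, Measurable (X i)) : Measurable (marshallOlkin X) :=
  ((hX 0).min (hX 2)).prodMk ((hX 1).min (hX 2))

lemma measurableSet_commonShockFirst (hX : ∀ i, Measurable (X i)) :
    MeasurableSet (commonShockFirst X) :=
  (measurableSet_lt (hX 2) (hX 0)).inter (measurableSet_lt (hX 2) (hX 1))

lemma map_marshallOlkin_eq_add (hX : ∀ i, Measurable (X i)) :
    P.map (marshallOlkin X) = (P.restrict (commonShockFirst X)ᶜ).map (marshallOlkin X)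
      + (P.restrict (commonShockFirst X)).map (marshallOlkin X) := by
  rw [← Measure.map_add _ _ (measurable_marshallOlkin hX),
    Measure.restrict_compl_add_restrict (measurableSet_commonShockFirst hX)]

lemma measure_marshallOlkin_preimage_Ioi_prod (hind : iIndepFun X P) (hX : ∀ i, Measurable (X i))
    (s t : ℝ) :
    P (marshallOlkin X ⁻¹' (Ioi s ×ˢ Ioi t))
      = P (X 0 ⁻¹' Ioi s) * P (X 1 ⁻¹' Ioi t) * P (X 2 ⁻¹' Ioi (max s t)) := by
  rw [marshallOlkin_preimage_Ioi_prod, ← mk_preimage_prod,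
    (hind.indepFun_prodMk hX 0 1 2 (by decide) (by decide)).measure_inter_preimage_eq_mul _ _
      (measurableSet_Ioi.prod measurableSet_Ioi) measurableSet_Ioi, mk_preimage_prod,
    (hind.indepFun (by decide : (0 : Fin 3) ≠ 1)).measure_inter_preimage_eq_mul _ _
      measurableSet_Ioi measurableSet_Ioi]

lemma map_marshallOlkin_restrict_commonShockFirst_diagonal_compl (hX : ∀ i, Measurable (X i)) :
    (P.restrict (commonShockFirst X)).map (marshallOlkin X) {p : ℝ × ℝ | p.1 = p.2}ᶜ = 0 := by
  have hD : MeasurableSet {p : ℝ × ℝ | p.1 = p.2}ᶜ :=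
    (measurableSet_eq_fun measurable_fst measurable_snd).compl
  have hempty : marshallOlkin X ⁻¹' {p : ℝ × ℝ | p.1 = p.2}ᶜ ∩ commonShockFirst X = ∅ := by
    ext ω
    simp only [commonShockFirst, marshallOlkin, mem_inter_iff, mem_preimage, mem_compl_iff,
      mem_ofPred_eq, mem_empty_iff_false, iff_false, not_and]
    intro hne h0 h1
    exact hne (by rw [min_eq_right h0.le, min_eq_right h1.le])
  rw [Measure.map_apply (measurable_marshallOlkin hX) hD,
    Measure.restrict_apply (measurable_marshallOlkin hX hD), hempty, measure_empty]

variable [IsFiniteMeasure P]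

lemma map_marshallOlkin_restrict_commonShockFirst_Ioi_prod (hind : iIndepFun X P)
    (hX : ∀ i, Measurable (X i)) (s t : ℝ) :
    (P.restrict (commonShockFirst X)).map (marshallOlkin X) (Ioi s ×ˢ Ioi t)
      = ∫⁻ x in Ioi (max s t), P (X 0 ⁻¹' Ioi x) * P (X 1 ⁻¹' Ioi x) ∂(P.map (X 2)) := by
  have hbox : MeasurableSet (Ioi s ×ˢ Ioi t) := measurableSet_Ioi.prod measurableSet_Ioi
  have hW : IndepFun (X 2) (fun ω => min (X 0 ω) (X 1 ω)) P :=
    (hind.indepFun_prodMk hX 0 1 2 (by decide) (by decide)).symm.comp measurable_id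
      (measurable_fst.min measurable_snd)
  rw [Measure.map_apply (measurable_marshallOlkin hX) hbox,
    Measure.restrict_apply (measurable_marshallOlkin hX hbox),
    marshallOlkin_preimage_Ioi_prod_inter_commonShockFirst,
    hW.measure_lt_and_lt (hX 2) ((hX 0).min (hX 1))]
  refine lintegral_congr fun x => ?_
  rw [← (hind.indepFun (by decide : (0 : Fin 3) ≠ 1)).measure_inter_preimage_eq_mul _ _
    measurableSet_Ioi measurableSet_Ioi]
  congr 1
  ext ω
  simp

lemma map_marshallOlkin_restrict_commonShockFirst_compl_absolutelyContinuous
    (hind : iIndepFun X P) (hX : ∀ i, Measurable (X i)) (hac : ∀ i, P.map (X i) ≪ volume) :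
    (P.restrict (commonShockFirst X)ᶜ).map (marshallOlkin X) ≪ volume := by
  refine Measure.AbsolutelyContinuous.mk fun N hN hN0 => ?_
  have hnull : ∀ i j, i ≠ j → P ((fun ω => (X i ω, X j ω)) ⁻¹' N) = 0 := fun i j hij => by
    rw [← Measure.map_apply ((hX i).prodMk (hX j)) hN]
    refine (hind.indepFun hij).map_prodMk_absolutelyContinuous (hX i) (hX j) (hac i) (hac j) ?_
    rwa [← Measure.volume_eq_prod]
  have hsub : marshallOlkin X ⁻¹' N ∩ (commonShockFirst X)ᶜ ⊆ (fun ω => (X 0 ω, X 1 ω)) ⁻¹' N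
      ∪ (fun ω => (X 0 ω, X 2 ω)) ⁻¹' N ∪ (fun ω => (X 2 ω, X 1 ω)) ⁻¹' N := by
    rintro ω ⟨hωN, hω⟩
    rcases marshallOlkin_eq_of_notMem_commonShockFirst hω with h | h | h <;>
      rw [mem_preimage, h] at hωN <;> simp [hωN]
  rw [Measure.map_apply (measurable_marshallOlkin hX) hN,
    Measure.restrict_apply (measurable_marshallOlkin hX hN)]
  exact measure_mono_null hsub (measure_union_null (measure_union_null (hnull 0 1 (by decide))
    (hnull 0 2 (by decide))) (hnull 2 1 (by decide)))

end MarshallOlkin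

section ExponentialClocks

variable {Ω : Type*} [MeasurableSpace Ω] {P : Measure Ω}
  {X : Fin 3 → Ω → ℝ} {α A : Fin 3 → ℝ → ℝ}

lemma map_marshallOlkin_Ioi_prod_eq_exp (hind : iIndepFun X P) (hX : ∀ i, Measurable (X i))
    (hsurv : ∀ i s, 0 ≤ s → P (X i ⁻¹' Ioi s) = ENNReal.ofReal (exp (-A i s)))
    {s t : ℝ} (hs : 0 ≤ s) (ht : 0 ≤ t) :
    P.map (marshallOlkin X) (Ioi s ×ˢ Ioi t)
      = ENNReal.ofReal (exp (-(A 0 s) - A 1 t - A 2 (max s t))) := by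
  rw [Measure.map_apply (measurable_marshallOlkin hX) (measurableSet_Ioi.prod measurableSet_Ioi),
    measure_marshallOlkin_preimage_Ioi_prod hind hX, hsurv 0 s hs, hsurv 1 t ht,
    hsurv 2 _ (le_max_of_le_left hs), ← ENNReal.ofReal_mul (exp_nonneg _),
    ← ENNReal.ofReal_mul (by positivity), ← exp_add, ← exp_add]
  ring_nf

variable [IsProbabilityMeasure P]

lemma nonneg_of_measure_preimage_Ioi_eq {Y : Ω → ℝ} {s a : ℝ}
    (h : P (Y ⁻¹' Ioi s) = ENNReal.ofReal (exp (-a))) : 0 ≤ a := by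
  have := h ▸ prob_le_one (μ := P) (s := Y ⁻¹' Ioi s)
  rw [ENNReal.ofReal_le_one, exp_le_one_iff] at this
  linarith

lemma map_marshallOlkin_restrict_commonShockFirst_Ioi_prod_eq_integral (hind : iIndepFun X P)
    (hX : ∀ i, Measurable (X i)) (hA : ∀ i x, HasDerivAt (A i) (α i x) x) (hα : ∀ x, 0 ≤ α 2 x)
    (htop : Tendsto (A 2) atTop atTop) (hA0 : A 2 0 = 0)
    (hsurv : ∀ i s, 0 ≤ s → P (X i ⁻¹' Ioi s) = ENNReal.ofReal (exp (-A i s)))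
    (s t : ℝ) (hm : 0 ≤ max s t) :
    (P.restrict (commonShockFirst X)).map (marshallOlkin X) (Ioi s ×ˢ Ioi t)
      = ENNReal.ofReal (∫ x in Ioi (max s t), α 2 x * exp (-(A 0 x) - A 1 x - A 2 x)) := by
  set m := max s t
  have hAcont : ∀ i, Continuous (A i) := fun i =>
    continuous_iff_continuousAt.2 fun x => (hA i x).continuousAt
  have hα2 : Measurable (α 2) := (funext fun x => (hA 2 x).deriv) ▸ measurable_deriv (A 2)
  have hint : IntegrableOn (fun x => α 2 x * exp (-(A 0 x) - A 1 x - A 2 x)) (Ioi m) := by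
    simpa only [neg_add'] using integrableOn_Ioi_mul_exp_neg_sub (B := fun x => A 0 x + A 1 x)
      (hA 2) hα htop (by fun_prop) fun x hx =>
        have hx : 0 ≤ x := hm.trans hx.le
        add_nonneg (nonneg_of_measure_preimage_Ioi_eq (hsurv 0 x hx))
          (nonneg_of_measure_preimage_Ioi_eq (hsurv 1 x hx))
  rw [map_marshallOlkin_restrict_commonShockFirst_Ioi_prod hind hX,
    ofReal_integral_eq_lintegral_ofReal hint
      (ae_of_all _ fun x => mul_nonneg (hα x) (exp_nonneg _))]
  calc ∫⁻ x in Ioi m, P (X 0 ⁻¹' Ioi x) * P (X 1 ⁻¹' Ioi x) ∂(P.map (X 2))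
      = ∫⁻ x in Ioi m, ENNReal.ofReal (exp (-A 0 x)) * ENNReal.ofReal (exp (-A 1 x))
          ∂(P.map (X 2)) := setLIntegral_congr_fun measurableSet_Ioi fun x hx => by
        rw [hsurv 0 x (hm.trans hx.le), hsurv 1 x (hm.trans hx.le)]
    _ = ∫⁻ x in Ioi m, ENNReal.ofReal (α 2 x * exp (-A 2 x))
          * (ENNReal.ofReal (exp (-A 0 x)) * ENNReal.ofReal (exp (-A 1 x))) := by
        rw [map_eq_withDensity_of_measure_Ioi (hX 2) (hA 2) hα htop hA0 (hsurv 2),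
          setLIntegral_withDensity_eq_setLIntegral_mul _ (by fun_prop) (by fun_prop)
            measurableSet_Ioi, Measure.restrict_restrict measurableSet_Ioi,
          inter_eq_left.2 (Ioi_subset_Ioi hm)]
        rfl
    _ = ∫⁻ x in Ioi m, ENNReal.ofReal (α 2 x * exp (-(A 0 x) - A 1 x - A 2 x)) := by
        refine lintegral_congr fun x => ?_
        rw [← ENNReal.ofReal_mul (exp_nonneg _),
          ← ENNReal.ofReal_mul (mul_nonneg (hα x) (exp_nonneg _)),
          ← exp_add, mul_assoc, ← exp_add]
        ring_nf

end ExponentialClocks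

theorem stmt2
    {Ω : Type*} [MeasurableSpace Ω] (P : Measure Ω) [IsProbabilityMeasure P]
    (Z : Fin 3 → Ω → ℝ) (hZmeas : ∀ i, Measurable (Z i))
    (hZexp : ∀ i, ∀ s : ℝ, 0 ≤ s →
      P {ω | s < Z i ω} = ENNReal.ofReal (Real.exp (-s)))
    (hindep : iIndepFun Z P)
    (α : Fin 3 → ℝ → ℝ)
    (hαcont : ∀ i, Continuous (α i)) (hαpos : ∀ i x, 0 ≤ α i x)
    (A : Fin 3 → ℝ → ℝ)
    (hA : ∀ i s, A i s = ∫ r in (0 : ℝ)..s, α i r)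
    (hAmono : ∀ i, StrictMonoOn (A i) (Set.Ici (0 : ℝ)))
    (hAtop : ∀ i, Filter.Tendsto (A i) Filter.atTop Filter.atTop)
    (η : Fin 3 → Ω → ℝ)
    (hη : ∀ i ω, η i ω = sInf {s : ℝ | 0 ≤ s ∧ Z i ω ≤ A i s})
    (τ₁ τ₂ : Ω → ℝ)
    (hτ₁ : ∀ ω, τ₁ ω = min (η 0 ω) (η 2 ω))
    (hτ₂ : ∀ ω, τ₂ ω = min (η 1 ω) (η 2 ω))
    (μ : Measure (ℝ × ℝ)) (hμ : μ = Measure.map (fun ω => (τ₁ ω, τ₂ ω)) P) :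
    ∃ μac μsing : Measure (ℝ × ℝ),
      μ = μac + μsing ∧
      μac ≪ (volume : Measure (ℝ × ℝ)) ∧
      (∀ s t : ℝ, 0 ≤ s → 0 ≤ t →
        μac (Set.Ioi s ×ˢ Set.Ioi t)
          = ENNReal.ofReal (Real.exp (-(A 0 s) - A 1 t - A 2 (max s t))
              - ∫ x in Set.Ioi (max s t),
                  α 2 x * Real.exp (-(A 0 x) - A 1 x - A 2 x))) ∧
      μsing {p : ℝ × ℝ | p.1 = p.2}ᶜ = 0 ∧
      (∀ s t : ℝ, 0 ≤ s → 0 ≤ t →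
        μsing (Set.Ioi s ×ˢ Set.Ioi t)
          = ENNReal.ofReal (∫ x in Set.Ioi (max s t),
              α 2 x * Real.exp (-(A 0 x) - A 1 x - A 2 x))) := by
  have hAderiv : ∀ i x, HasDerivAt (A i) (α i x) x := fun i =>
    hasDerivAt_of_forall_eq_integral (hαcont i) (hA i)
  have hA0 : ∀ i, A i 0 = 0 := fun i => by simp [hA]
  have hfp : η = fun i => firstPassage (A i) ∘ Z i := funext fun i => funext (hη i)
  have hfpm : ∀ i, Measurable (firstPassage (A i)) := fun i =>
    (monotone_firstPassage (hAtop i)).measurable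
  have hηm : ∀ i, Measurable (η i) := hfp ▸ fun i => (hfpm i).comp (hZmeas i)
  have hind : iIndepFun η P := hfp ▸ hindep.comp _ hfpm
  have hsurv : ∀ i s, 0 ≤ s → P (η i ⁻¹' Ioi s) = ENNReal.ofReal (exp (-A i s)) :=
    fun i s hs => hfp ▸ measure_firstPassage_comp_preimage_Ioi
      (continuous_iff_continuousAt.2 fun x => (hAderiv i x).continuousAt)
      (hAmono i).monotoneOn (hAtop i) (hA0 i) (hZexp i) hs
  have hac : ∀ i, P.map (η i) ≪ volume := fun i =>
    map_absolutelyContinuous_of_measure_Ioi (hηm i) (hAderiv i) (hαpos i) (hAtop i) (hA0 i)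
      (hsurv i)
  have hsing := map_marshallOlkin_restrict_commonShockFirst_Ioi_prod_eq_integral hind hηm hAderiv
    (hαpos 2) (hAtop 2) (hA0 2) hsurv
  have hτ : (fun ω => (τ₁ ω, τ₂ ω)) = marshallOlkin η := funext fun ω => by
    simp [marshallOlkin, hτ₁, hτ₂]
  subst hμ
  rw [hτ]
  refine ⟨_, _, map_marshallOlkin_eq_add hηm,
    map_marshallOlkin_restrict_commonShockFirst_compl_absolutelyContinuous hind hηm hac,
    fun s t hs ht => ?_, map_marshallOlkin_restrict_commonShockFirst_diagonal_compl hηm,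
    fun s t hs _ => hsing s t (le_max_of_le_left hs)⟩
  rw [ENNReal.ofReal_sub _ (setIntegral_nonneg measurableSet_Ioi fun x _ =>
      mul_nonneg (hαpos 2 x) (exp_nonneg _)), ← hsing s t (le_max_of_le_left hs),
    ← map_marshallOlkin_Ioi_prod_eq_exp hind hηm hsurv hs ht]
  exact ENNReal.eq_sub_of_add_eq (measure_ne_top _ _)
    (by rw [← Measure.add_apply, ← map_marshallOlkin_eq_add hηm])
end

section
/- (Proposition 2.4, probability of a quadrant) For all 0 ≤ s < t, P(s < τ_1 ≤ t, s ≤ τ_2 ≤ t) = E[ exp(−(A^1_s + A^2_s + A^3_s)) + exp(−(A^1_t + A^2_t + A^3_t)) − exp(−A^1_s − A^2_t − A^3_t) − exp(−A^1_t − A^2_s − A^3_t) ]. -/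
open MeasureTheory ProbabilityTheory Filter Set
open scoped ENNReal NNReal

/-- If the primitive `s ↦ ∫ r in 0..s, f r` is strictly monotone on `[0,∞)`, then `f` is
interval integrable on every `[0,u]`, `u ≥ 0`. -/
private lemma aux_integrable_of_mono {f : ℝ → ℝ}
    (h : StrictMonoOn (fun s => ∫ r in (0:ℝ)..s, f r) (Set.Ici 0)) :
    ∀ u : ℝ, 0 ≤ u → IntervalIntegrable f MeasureTheory.volume 0 u := by
  intro u hu
  by_contra hni
  have h1 : ¬ IntervalIntegrable f MeasureTheory.volume 0 (u + 1) := by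
    intro H
    refine hni (H.mono_set ?_)
    rw [Set.uIcc_of_le hu, Set.uIcc_of_le (by linarith)]
    exact Set.Icc_subset_Icc le_rfl (by linarith)
  have h2 := h (Set.mem_Ici.2 hu) (Set.mem_Ici.2 (by linarith : (0:ℝ) ≤ u + 1))
    (by linarith : u < u + 1)
  simp only [intervalIntegral.integral_undef hni, intervalIntegral.integral_undef h1] at h2
  exact lt_irrefl _ h2

/-- Continuity of the primitive on `[0,∞)`, given interval integrability on every `[0,u]`. -/
private lemma aux_cont_primitive {f : ℝ → ℝ}
    (h : ∀ u : ℝ, 0 ≤ u → IntervalIntegrable f MeasureTheory.volume 0 u) :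
    ContinuousOn (fun s => ∫ r in (0:ℝ)..s, f r) (Set.Ici 0) := by
  intro v hv
  have hv0 : (0:ℝ) ≤ v := hv
  have huIcc : Set.uIcc (0:ℝ) (v + 1) = Set.Icc 0 (v + 1) := Set.uIcc_of_le (by linarith)
  have h2 : ContinuousOn (fun s => ∫ r in (0:ℝ)..s, f r) (Set.uIcc (0:ℝ) (v+1)) :=
    intervalIntegral.continuousOn_primitive_interval' (h (v+1) (by linarith)) Set.left_mem_uIcc
  have h3 : ContinuousWithinAt (fun s => ∫ r in (0:ℝ)..s, f r) (Set.uIcc (0:ℝ) (v+1)) v := by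
    apply h2
    rw [huIcc]
    exact ⟨hv0, by linarith⟩
  refine h3.mono_of_mem_nhdsWithin ?_
  rw [mem_nhdsWithin]
  refine ⟨Set.Iio (v+1), isOpen_Iio, by simp, ?_⟩
  rw [huIcc]
  intro x hx
  exact ⟨hx.2, le_of_lt hx.1⟩

/-- The root-comparison lemma: for a strictly increasing continuous function vanishing at `0`
and tending to infinity, comparisons with the hitting time `sInf {s | 0 ≤ s ∧ z ≤ g s}`
translate into comparisons of values. -/
private lemma aux_root_equiv {g : ℝ → ℝ} (hmono : StrictMonoOn g (Set.Ici 0))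
    (hcont : ContinuousOn g (Set.Ici 0))
    (htop : Filter.Tendsto g Filter.atTop Filter.atTop)
    (hg0 : g 0 = 0) {z : ℝ} (hz : 0 < z) {u : ℝ} (hu : 0 ≤ u) :
    (u < sInf {s : ℝ | 0 ≤ s ∧ z ≤ g s} ↔ g u < z) ∧
      (u ≤ sInf {s : ℝ | 0 ≤ s ∧ z ≤ g s} ↔ g u ≤ z) := by
  obtain ⟨b, hbz, hb0⟩ : ∃ b, z ≤ g b ∧ 0 ≤ b := by
    obtain ⟨b, hb⟩ := ((htop.eventually_ge_atTop z).and (eventually_ge_atTop 0)).exists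
    exact ⟨b, hb.1, hb.2⟩
  obtain ⟨s₀, hs₀mem, hs₀⟩ : ∃ s₀ ∈ Set.Icc (0:ℝ) b, g s₀ = z := by
    have hIVT := intermediate_value_Icc hb0 (hcont.mono (Set.Icc_subset_Ici_self))
    exact hIVT ⟨by rw [hg0]; exact hz.le, hbz⟩
  have hs₀0 : (0:ℝ) ≤ s₀ := hs₀mem.1
  have hSet : {s : ℝ | 0 ≤ s ∧ z ≤ g s} = Set.Ici s₀ := by
    ext x
    simp only [Set.mem_setOf_eq, Set.mem_Ici]
    constructor
    · rintro ⟨hx0, hxz⟩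
      by_contra hlt
      push_neg at hlt
      have := hmono (Set.mem_Ici.2 hx0) (Set.mem_Ici.2 hs₀0) hlt
      rw [hs₀] at this
      exact absurd hxz (not_le.mpr this)
    · intro hx
      refine ⟨hs₀0.trans hx, ?_⟩
      rw [← hs₀]
      exact hmono.monotoneOn (Set.mem_Ici.2 hs₀0) (Set.mem_Ici.2 (hs₀0.trans hx)) hx
  rw [hSet, csInf_Ici]
  constructor
  · rw [← hs₀]
    exact Iff.intro (fun h => hmono (Set.mem_Ici.2 hu) (Set.mem_Ici.2 hs₀0) h)
      (fun h => (hmono.lt_iff_lt (Set.mem_Ici.2 hu) (Set.mem_Ici.2 hs₀0)).mp h)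
  · rw [← hs₀]
    exact Iff.intro (fun h => hmono.monotoneOn (Set.mem_Ici.2 hu) (Set.mem_Ici.2 hs₀0) h)
      (fun h => (hmono.le_iff_le (Set.mem_Ici.2 hu) (Set.mem_Ici.2 hs₀0)).mp h)

/-- The approximating grid times. -/
private noncomputable def auxc (n : ℕ) (r : ℝ) : ℝ := ((max ⌈r * ((n:ℝ)+1)⌉ 1 : ℤ) : ℝ) / ((n:ℝ)+1)

private lemma auxc_pos (n : ℕ) (r : ℝ) : 0 < auxc n r := by
  have hn1 : (0:ℝ) < (n:ℝ) + 1 := by positivity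
  apply div_pos _ hn1
  have : (1:ℝ) ≤ ((max ⌈r * ((n:ℝ)+1)⌉ 1 : ℤ) : ℝ) := by
    exact_mod_cast le_max_right ⌈r * ((n:ℝ)+1)⌉ 1
  linarith

private lemma auxc_ge (n : ℕ) (r : ℝ) : r ≤ auxc n r := by
  have hn1 : (0:ℝ) < (n:ℝ) + 1 := by positivity
  rw [auxc, le_div_iff₀ hn1]
  calc r * ((n:ℝ)+1) ≤ (⌈r * ((n:ℝ)+1)⌉ : ℝ) := Int.le_ceil _
  _ ≤ ((max ⌈r * ((n:ℝ)+1)⌉ 1 : ℤ) : ℝ) := by exact_mod_cast le_max_left _ _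

private lemma auxc_le (n : ℕ) (r : ℝ) : auxc n r ≤ max r 0 + 1/((n:ℝ)+1) := by
  have hn1 : (0:ℝ) < (n:ℝ) + 1 := by positivity
  rw [auxc, div_le_iff₀ hn1]
  have h1 : (⌈r * ((n:ℝ)+1)⌉ : ℝ) ≤ r * ((n:ℝ)+1) + 1 := le_of_lt (Int.ceil_lt_add_one _)
  have h2 : ((max ⌈r * ((n:ℝ)+1)⌉ 1 : ℤ) : ℝ) = max (⌈r * ((n:ℝ)+1)⌉ : ℝ) 1 := by
    exact_mod_cast rfl
  rw [h2]
  have hr : r ≤ max r 0 := le_max_left _ _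
  have h0 : (0:ℝ) ≤ max r 0 := le_max_right _ _
  have hdiv : (1/((n:ℝ)+1)) * ((n:ℝ)+1) = 1 := by field_simp
  apply max_le
  · nlinarith
  · nlinarith

private lemma auxc_tendsto (r : ℝ) : Filter.Tendsto (fun n => auxc n r) Filter.atTop
    (nhdsWithin (max r 0) (Set.Ici (max r 0))) := by
  apply tendsto_nhdsWithin_of_tendsto_nhds_of_eventually_within
  · have hupper : Filter.Tendsto (fun n : ℕ => max r 0 + 1/((n:ℝ)+1)) Filter.atTop
        (nhds (max r 0)) := by
      have h1 := tendsto_one_div_add_atTop_nhds_zero_nat (𝕜 := ℝ)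
      have h2 := Filter.Tendsto.add (tendsto_const_nhds (x := max r 0)) h1
      simpa using h2
    refine tendsto_of_tendsto_of_tendsto_of_le_of_le tendsto_const_nhds hupper ?_ ?_
    · exact fun n => max_le (auxc_ge n r) (auxc_pos n r).le
    · exact fun n => auxc_le n r
  · exact Filter.Eventually.of_forall fun n =>
      Set.mem_Ici.2 (max_le (auxc_ge n r) (auxc_pos n r).le)

/-- Measurability (w.r.t. a possibly smaller σ-algebra under which each `X t`, `t ≥ 0`,
is measurable) of `ω ↦ ∫ r in 0..u, α (X r ω)`, using right-continuity of the paths. -/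
private lemma aux_measA {Ω : Type*} [m : MeasurableSpace Ω] {d : ℕ} (X : ℝ → Ω → (Fin d → ℝ))
    (hXrc : ∀ ω, ∀ t : ℝ, ContinuousWithinAt (fun s => X s ω) (Set.Ici t) t)
    (hXm : ∀ t : ℝ, 0 ≤ t → Measurable (X t))
    (α : (Fin d → ℝ) → ℝ) (hα : Continuous α) (u : ℝ) (hu : 0 ≤ u) :
    Measurable fun ω => ∫ r in (0:ℝ)..u, α (X r ω) := by
  have hn1 : ∀ n : ℕ, (0:ℝ) < (n:ℝ) + 1 := fun n => by positivity
  have hTmeas : Measurable fun p : ℝ × Ω => α (X (max p.1 0) p.2) := by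
    have hHn : ∀ n : ℕ, Measurable fun p : ℝ × Ω => α (X (auxc n p.1) p.2) := by
      intro n
      have h1 : Measurable fun p : ℝ × Ω => ((p.2, ⌈p.1 * ((n:ℝ)+1)⌉) : Ω × ℤ) :=
        measurable_snd.prodMk ((measurable_fst.mul_const _).ceil)
      have h2 : Measurable fun q : Ω × ℤ =>
          α (X (((max q.2 1 : ℤ) : ℝ) / ((n:ℝ)+1)) q.1) := by
        apply measurable_from_prod_countable_left
        intro k
        have hkpos : (0:ℝ) ≤ ((max k 1 : ℤ) : ℝ) / ((n:ℝ)+1) := by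
          apply div_nonneg _ (hn1 n).le
          have : (1:ℤ) ≤ max k 1 := le_max_right _ _
          exact_mod_cast le_trans zero_le_one this
        exact (hα.measurable).comp (hXm _ hkpos)
      have hcomp : (fun p : ℝ × Ω => α (X (auxc n p.1) p.2))
          = (fun q : Ω × ℤ => α (X (((max q.2 1 : ℤ) : ℝ) / ((n:ℝ)+1)) q.1))
            ∘ (fun p : ℝ × Ω => ((p.2, ⌈p.1 * ((n:ℝ)+1)⌉) : Ω × ℤ)) := by
        funext p
        simp only [Function.comp_apply, auxc]
      rw [hcomp]
      exact h2.comp h1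
    have hpt : ∀ p : ℝ × Ω, Filter.Tendsto (fun n => α (X (auxc n p.1) p.2)) Filter.atTop
        (nhds (α (X (max p.1 0) p.2))) := by
      intro p
      have h1 : Filter.Tendsto (fun n => X (auxc n p.1) p.2) Filter.atTop
          (nhds (X (max p.1 0) p.2)) :=
        Filter.Tendsto.comp (hXrc p.2 (max p.1 0)) (auxc_tendsto p.1)
      exact (hα.tendsto _).comp h1
    exact measurable_of_tendsto_metrizable hHn (tendsto_pi_nhds.mpr hpt)
  -- rewrite the interval integral as a set integral
  have hrw : (fun ω => ∫ r in (0:ℝ)..u, α (X r ω))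
      = fun ω => ∫ r in Set.Ioc (0:ℝ) u, (fun p : ℝ × Ω => α (X (max p.1 0) p.2)) (r, ω) := by
    funext ω
    rw [intervalIntegral.integral_of_le hu]
    apply setIntegral_congr_fun measurableSet_Ioc
    intro r hr
    simp only [max_eq_left hr.1.le]
  rw [hrw]
  exact ((hTmeas.stronglyMeasurable).integral_prod_left'
    (μ := MeasureTheory.volume.restrict (Set.Ioc (0:ℝ) u))).measurable

private lemma aux_logic {p0 p2 r0 r1 r2 n1 n2 : Prop}
    (h0 : r0 → p0) (h1 : r1 → ¬n1) (h2 : r2 → p2) (h3 : p2 → ¬n2) :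
    (((p0 ∧ p2) ∧ (¬r0 ∨ ¬r2)) ∧ ((¬n1 ∧ ¬n2) ∧ (¬r1 ∨ ¬r2))) ↔
      ((p0 ∧ ¬n1 ∧ p2) ∧ ¬((r0 ∧ ¬n1 ∧ r2) ∨ (p0 ∧ r1 ∧ r2))) := by
  tauto

/-- The σ-algebra generated by the process at nonnegative times. -/
private def sigAlg {Ω : Type*} {d : ℕ} (X : ℝ → Ω → (Fin d → ℝ)) : MeasurableSpace Ω :=
  ⨆ t ∈ Set.Ici (0 : ℝ), MeasurableSpace.comap (X t) inferInstance

/-- The central computation: probability of a "quadrant" event for exponential variables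
independent of the (nonnegative) levels. -/
private lemma aux_master {Ω : Type*} [MeasurableSpace Ω] (P : Measure Ω) [IsProbabilityMeasure P]
    (Z0 Z1 Z2 f0 f1 f2 : Ω → ℝ) (hZ0 : Measurable Z0) (hZ1 : Measurable Z1) (hZ2 : Measurable Z2)
    (hf0 : Measurable f0) (hf1 : Measurable f1) (hf2 : Measurable f2)
    (hf0n : ∀ ω, 0 ≤ f0 ω) (hf1n : ∀ ω, 0 ≤ f1 ω) (hf2n : ∀ ω, 0 ≤ f2 ω)
    (hind : IndepFun (fun ω => (f0 ω, f1 ω, f2 ω)) (fun ω => (Z0 ω, Z1 ω, Z2 ω)) P)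
    (b : Bool)
    (hconst : ∀ (a₀ a₁ a₂ : ℝ), 0 ≤ a₀ → 0 ≤ a₁ → 0 ≤ a₂ →
      P {ω | a₀ < Z0 ω ∧ (bif b then a₁ < Z1 ω else a₁ ≤ Z1 ω) ∧ a₂ < Z2 ω}
        = ENNReal.ofReal (Real.exp (-(a₀ + a₁ + a₂)))) :
    P {ω | f0 ω < Z0 ω ∧ (bif b then f1 ω < Z1 ω else f1 ω ≤ Z1 ω) ∧ f2 ω < Z2 ω}
      = ENNReal.ofReal (∫ ω, Real.exp (-(f0 ω + f1 ω + f2 ω)) ∂P) := by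
  set F : Ω → ℝ × ℝ × ℝ := fun ω => (f0 ω, f1 ω, f2 ω) with hF
  set V : Ω → ℝ × ℝ × ℝ := fun ω => (Z0 ω, Z1 ω, Z2 ω) with hV
  have hFm : Measurable F := hf0.prodMk (hf1.prodMk hf2)
  have hVm : Measurable V := hZ0.prodMk (hZ1.prodMk hZ2)
  set S : Set ((ℝ × ℝ × ℝ) × (ℝ × ℝ × ℝ)) :=
    {p | p.1.1 < p.2.1 ∧ (bif b then p.1.2.1 < p.2.2.1 else p.1.2.1 ≤ p.2.2.1)
      ∧ p.1.2.2 < p.2.2.2} with hS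
  have hSm : MeasurableSet S := by
    apply MeasurableSet.inter
    · exact measurableSet_lt measurable_fst.fst measurable_snd.fst
    apply MeasurableSet.inter
    · cases b
      · exact measurableSet_le measurable_fst.snd.fst measurable_snd.snd.fst
      · exact measurableSet_lt measurable_fst.snd.fst measurable_snd.snd.fst
    · exact measurableSet_lt measurable_fst.snd.snd measurable_snd.snd.snd
  have hmap : P.map (fun ω => (F ω, V ω)) = (P.map F).prod (P.map V) :=
    (indepFun_iff_map_prod_eq_prod_map_map hFm.aemeasurable hVm.aemeasurable).mp hind
  have hPev : P {ω | f0 ω < Z0 ω ∧ (bif b then f1 ω < Z1 ω else f1 ω ≤ Z1 ω) ∧ f2 ω < Z2 ω}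
      = (P.map (fun ω => (F ω, V ω))) S := by
    rw [Measure.map_apply (hFm.prodMk hVm) hSm]
    rfl
  haveI : IsProbabilityMeasure (P.map V) := Measure.isProbabilityMeasure_map hVm.aemeasurable
  haveI : IsProbabilityMeasure (P.map F) := Measure.isProbabilityMeasure_map hFm.aemeasurable
  rw [hPev, hmap, Measure.prod_apply hSm]
  have hae : ∀ᵐ y ∂(P.map F), (P.map V) (Prod.mk y ⁻¹' S)
      = ENNReal.ofReal (Real.exp (-(y.1 + y.2.1 + y.2.2))) := by
    have hsm0 : MeasurableSet {y : ℝ × ℝ × ℝ | 0 ≤ y.1 ∧ 0 ≤ y.2.1 ∧ 0 ≤ y.2.2} :=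
      (measurableSet_le measurable_const measurable_fst).inter
        ((measurableSet_le measurable_const measurable_snd.fst).inter
          (measurableSet_le measurable_const measurable_snd.snd))
    have h0 : ∀ᵐ y ∂(P.map F), 0 ≤ y.1 ∧ 0 ≤ y.2.1 ∧ 0 ≤ y.2.2 := by
      rw [ae_map_iff hFm.aemeasurable hsm0]
      exact Filter.Eventually.of_forall fun ω => ⟨hf0n ω, hf1n ω, hf2n ω⟩
    filter_upwards [h0] with y hy
    rw [Measure.map_apply hVm (hSm.preimage measurable_prodMk_left)]
    have hpre : V ⁻¹' (Prod.mk y ⁻¹' S)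
        = {ω | y.1 < Z0 ω ∧ (bif b then y.2.1 < Z1 ω else y.2.1 ≤ Z1 ω) ∧ y.2.2 < Z2 ω} := rfl
    rw [hpre, hconst y.1 y.2.1 y.2.2 hy.1 hy.2.1 hy.2.2]
  rw [lintegral_congr_ae hae]
  have hg : Measurable fun y : ℝ × ℝ × ℝ => ENNReal.ofReal (Real.exp (-(y.1 + y.2.1 + y.2.2))) :=
    (((measurable_fst.add measurable_snd.fst).add measurable_snd.snd).neg.exp).ennreal_ofReal
  rw [lintegral_map hg hFm]
  have hmexp : Measurable fun ω => Real.exp (-(f0 ω + f1 ω + f2 ω)) :=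
    (((hf0.add hf1).add hf2).neg.exp)
  have hint : Integrable (fun ω => Real.exp (-(f0 ω + f1 ω + f2 ω))) P := by
    refine (integrable_const (1:ℝ)).mono' hmexp.aestronglyMeasurable
      (Filter.Eventually.of_forall fun ω => ?_)
    rw [Real.norm_eq_abs, abs_of_pos (Real.exp_pos _)]
    exact Real.exp_le_one_iff.mpr (by nlinarith [hf0n ω, hf1n ω, hf2n ω])
  rw [MeasureTheory.ofReal_integral_eq_lintegral_ofReal hint
    (Filter.Eventually.of_forall fun ω => (Real.exp_pos _).le)]

theorem stmt6
    {Ω : Type*} [MeasurableSpace Ω] (P : Measure Ω) [IsProbabilityMeasure P]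
    {d : ℕ} (X : ℝ → Ω → (Fin d → ℝ))
    (hX : Measurable (Function.uncurry X))
    (hXrc : ∀ ω, ∀ t : ℝ, ContinuousWithinAt (fun s => X s ω) (Set.Ici t) t)
    (Z : Fin 3 → Ω → ℝ) (hZmeas : ∀ i, Measurable (Z i))
    (hZexp : ∀ i, ∀ s : ℝ, 0 ≤ s →
      P {ω | s < Z i ω} = ENNReal.ofReal (Real.exp (-s)))
    (hindep : iIndep
      (fun j : Option (Fin 3) =>
        Option.elim j
          (⨆ t ∈ Set.Ici (0 : ℝ), MeasurableSpace.comap (X t) inferInstance)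
          (fun i => MeasurableSpace.comap (Z i) inferInstance)) P)
    (α : Fin 3 → (Fin d → ℝ) → ℝ)
    (hαcont : ∀ i, Continuous (α i)) (hαpos : ∀ i x, 0 ≤ α i x)
    (A : Fin 3 → ℝ → Ω → ℝ)
    (hA : ∀ i s ω, A i s ω = ∫ r in (0 : ℝ)..s, α i (X r ω))
    (hAmono : ∀ᵐ ω ∂P, ∀ i, StrictMonoOn (fun s => A i s ω) (Set.Ici (0 : ℝ)))
    (hAtop : ∀ᵐ ω ∂P, ∀ i, Filter.Tendsto (fun s => A i s ω) Filter.atTop Filter.atTop)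
    (η : Fin 3 → Ω → ℝ)
    (hη : ∀ i ω, η i ω = sInf {s : ℝ | 0 ≤ s ∧ Z i ω ≤ A i s ω})
    (τ₁ τ₂ : Ω → ℝ)
    (hτ₁ : ∀ ω, τ₁ ω = min (η 0 ω) (η 2 ω))
    (hτ₂ : ∀ ω, τ₂ ω = min (η 1 ω) (η 2 ω))
    (s t : ℝ) (hs : 0 ≤ s) (hst : s < t) :
    (P {ω | (s < τ₁ ω ∧ τ₁ ω ≤ t) ∧ (s ≤ τ₂ ω ∧ τ₂ ω ≤ t)}).toReal
      = ∫ ω, (Real.exp (-(A 0 s ω + A 1 s ω + A 2 s ω))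
          + Real.exp (-(A 0 t ω + A 1 t ω + A 2 t ω))
          - Real.exp (-(A 0 s ω) - A 1 t ω - A 2 t ω)
          - Real.exp (-(A 0 t ω) - A 1 s ω - A 2 t ω)) ∂P := by
  have ht0 : (0:ℝ) ≤ t := hs.trans hst.le
  -- basic measurability facts
  have h𝓖le : sigAlg X ≤ (inferInstance : MeasurableSpace Ω) := by
    refine iSup₂_le fun r _ => ?_
    exact measurable_iff_comap_le.mp (hX.comp measurable_prodMk_left)
  have hXm𝓖 : ∀ r : ℝ, 0 ≤ r → Measurable[sigAlg X] (X r) := by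
    intro r hr
    apply measurable_iff_comap_le.mpr
    exact le_iSup₂ (f := fun (v : ℝ) (_ : v ∈ Set.Ici (0:ℝ)) =>
      MeasurableSpace.comap (X v) inferInstance) r hr
  have hAmeas𝓖 : ∀ (i : Fin 3) (u : ℝ), 0 ≤ u → Measurable[sigAlg X] (A i u) := by
    intro i u hu
    have h1 := aux_measA (m := sigAlg X) X hXrc hXm𝓖 (α i) (hαcont i) u hu
    have h2 : A i u = fun ω => ∫ r in (0:ℝ)..u, α i (X r ω) := funext fun ω => hA i u ω
    rw [h2]; exact h1
  have hAmeas : ∀ (i : Fin 3) (u : ℝ), 0 ≤ u → Measurable (A i u) := fun i u hu =>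
    (hAmeas𝓖 i u hu).mono h𝓖le le_rfl
  have hA0 : ∀ (i : Fin 3) (u : ℝ) (ω : Ω), 0 ≤ u → 0 ≤ A i u ω := by
    intro i u ω hu
    rw [hA]
    exact intervalIntegral.integral_nonneg hu fun x _ => hαpos i _
  -- tail probabilities with large inequality
  have hZtail : ∀ (i : Fin 3) (a : ℝ), 0 ≤ a →
      P {ω | a ≤ Z i ω} = ENNReal.ofReal (Real.exp (-a)) := by
    intro i a ha
    rcases eq_or_lt_of_le ha with heq | hapos
    · subst heq
      have h1 : P {ω | (0:ℝ) < Z i ω} = 1 := by simpa using hZexp i 0 le_rfl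
      have h2 : (1:ℝ≥0∞) ≤ P {ω | (0:ℝ) ≤ Z i ω} := by
        rw [← h1]
        refine measure_mono fun ω h => ?_
        simp only [Set.mem_setOf_eq] at h ⊢
        exact le_of_lt h
      rw [neg_zero, Real.exp_zero, ENNReal.ofReal_one]
      exact le_antisymm prob_le_one h2
    · set c : ℕ → ℝ := fun n => max (a - 1/((n:ℝ)+1)) 0 with hcdef
      have hc0 : ∀ n, 0 ≤ c n := fun n => le_max_right _ _
      have hcmono : Monotone c := by
        intro m n hmn
        apply max_le_max _ le_rfl
        have : 1/((n:ℝ)+1) ≤ 1/((m:ℝ)+1) := by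
          apply one_div_le_one_div_of_le (by positivity)
          exact_mod_cast by omega
        linarith
      have hAnt : Antitone fun n => {ω | c n < Z i ω} := by
        intro m n hmn ω hω
        exact lt_of_le_of_lt (hcmono hmn) hω
      have hmeasn : ∀ n, NullMeasurableSet {ω | c n < Z i ω} P := fun n =>
        (measurableSet_lt measurable_const (hZmeas i)).nullMeasurableSet
      have hlim := tendsto_measure_iInter_atTop hmeasn hAnt ⟨0, measure_ne_top P _⟩
      have hiInter : (⋂ n, {ω | c n < Z i ω}) = {ω | a ≤ Z i ω} := by
        ext ω
        simp only [Set.mem_iInter, Set.mem_setOf_eq]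
        constructor
        · intro h
          by_contra hlt
          push_neg at hlt
          have hpos2 : 0 < a - Z i ω := sub_pos.2 hlt
          obtain ⟨n, hn⟩ := exists_nat_gt (1 / (a - Z i ω))
          have hn1 : (0:ℝ) < (n:ℝ) + 1 := by positivity
          have h1n : 1/((n:ℝ)+1) < a - Z i ω := by
            rw [div_lt_iff₀ hn1]
            have hn' : 1 / (a - Z i ω) < (n:ℝ) + 1 := hn.trans (by linarith)
            have h2 := (div_lt_iff₀ hpos2).mp hn'
            nlinarith
          have := h n
          have hcn : Z i ω < c n := lt_of_lt_of_le (by linarith) (le_max_left _ _)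
          linarith
        · intro h n
          have h1 : 0 < 1/((n:ℝ)+1) := by positivity
          exact max_lt (by linarith) (lt_of_lt_of_le hapos h)
      rw [hiInter] at hlim
      have hctend : Filter.Tendsto c Filter.atTop (nhds a) := by
        have h1 := tendsto_one_div_add_atTop_nhds_zero_nat (𝕜 := ℝ)
        have h2 : Filter.Tendsto (fun n : ℕ => a - 1/((n:ℝ)+1)) Filter.atTop (nhds a) := by
          have := Filter.Tendsto.sub (tendsto_const_nhds (x := a)) h1
          simpa using this
        have h3 := h2.max (tendsto_const_nhds (x := (0:ℝ)))
        rwa [max_eq_left hapos.le] at h3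
      have hlim2 : Filter.Tendsto (P ∘ fun n => {ω | c n < Z i ω}) Filter.atTop
          (nhds (ENNReal.ofReal (Real.exp (-a)))) := by
        have hcomp : Filter.Tendsto (fun n => ENNReal.ofReal (Real.exp (-(c n)))) Filter.atTop
            (nhds (ENNReal.ofReal (Real.exp (-a)))) :=
          ((ENNReal.continuous_ofReal.comp (Real.continuous_exp.comp continuous_neg)).tendsto
            a).comp hctend
        exact Filter.Tendsto.congr (fun n => (hZexp i (c n) (hc0 n)).symm) hcomp
      exact tendsto_nhds_unique hlim hlim2
  -- rectangles probabilities
  have hconst : ∀ (b : Bool) (a₀ a₁ a₂ : ℝ), 0 ≤ a₀ → 0 ≤ a₁ → 0 ≤ a₂ →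
      P {ω | a₀ < Z 0 ω ∧ (bif b then a₁ < Z 1 ω else a₁ ≤ Z 1 ω) ∧ a₂ < Z 2 ω}
        = ENNReal.ofReal (Real.exp (-(a₀ + a₁ + a₂))) := by
    intro b a₀ a₁ a₂ h₀ h₁ h₂
    set E0 : Set Ω := {ω | a₀ < Z 0 ω} with hE0
    set E1 : Set Ω := {ω | bif b then a₁ < Z 1 ω else a₁ ≤ Z 1 ω} with hE1
    set E2 : Set Ω := {ω | a₂ < Z 2 ω} with hE2
    have hPE1 : P E1 = ENNReal.ofReal (Real.exp (-a₁)) := by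
      cases b
      · exact hZtail 1 a₁ h₁
      · exact hZexp 1 a₁ h₁
    set Ej : Option (Fin 3) → Set Ω := fun j => Option.elim j Set.univ ![E0, E1, E2] with hEj
    have hmeasj : ∀ j ∈ ({some 0, some 1, some 2} : Finset (Option (Fin 3))),
        MeasurableSet[(fun j : Option (Fin 3) => Option.elim j
          (⨆ t ∈ Set.Ici (0 : ℝ), MeasurableSpace.comap (X t) inferInstance)
          fun i => MeasurableSpace.comap (Z i) inferInstance) j] (Ej j) := by
      intro j hj
      fin_cases hj
      · exact ⟨Set.Ioi a₀, measurableSet_Ioi, rfl⟩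
      · cases b
        · exact ⟨Set.Ici a₁, measurableSet_Ici, rfl⟩
        · exact ⟨Set.Ioi a₁, measurableSet_Ioi, rfl⟩
      · exact ⟨Set.Ioi a₂, measurableSet_Ioi, rfl⟩
    have hprod := hindep.meas_biInter
      (S := ({some 0, some 1, some 2} : Finset (Option (Fin 3)))) (s := Ej) hmeasj
    have hiInter : (⋂ j ∈ ({some 0, some 1, some 2} : Finset (Option (Fin 3))), Ej j)
        = E0 ∩ (E1 ∩ E2) := by
      rw [Finset.set_biInter_insert, Finset.set_biInter_insert, Finset.set_biInter_singleton]
      rfl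
    have hevent : {ω | a₀ < Z 0 ω ∧ (bif b then a₁ < Z 1 ω else a₁ ≤ Z 1 ω) ∧ a₂ < Z 2 ω}
        = E0 ∩ (E1 ∩ E2) := rfl
    have hprodval : (∏ j ∈ ({some 0, some 1, some 2} : Finset (Option (Fin 3))), P (Ej j))
        = P E0 * (P E1 * P E2) := by
      rw [Finset.prod_insert (by decide), Finset.prod_insert (by decide),
        Finset.prod_singleton]
      rfl
    rw [hevent, ← hiInter, hprod, hprodval, hPE1]
    have hP0 : P E0 = ENNReal.ofReal (Real.exp (-a₀)) := hZexp 0 a₀ h₀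
    have hP2 : P E2 = ENNReal.ofReal (Real.exp (-a₂)) := hZexp 2 a₂ h₂
    rw [hP0, hP2, ← ENNReal.ofReal_mul (Real.exp_pos _).le, ← Real.exp_add,
      ← ENNReal.ofReal_mul (Real.exp_pos _).le, ← Real.exp_add]
    ring_nf
  -- independence of the A-levels and the Z's
  have hGZindep : Indep (sigAlg X)
      (⨆ i : Fin 3, MeasurableSpace.comap (Z i) inferInstance) P := by
    have hle : ∀ j : Option (Fin 3),
        (fun j : Option (Fin 3) => Option.elim j
          (⨆ t ∈ Set.Ici (0 : ℝ), MeasurableSpace.comap (X t) inferInstance)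
          fun i => MeasurableSpace.comap (Z i) inferInstance) j ≤
            (inferInstance : MeasurableSpace Ω) := by
      intro j
      cases j with
      | none => exact h𝓖le
      | some i => exact measurable_iff_comap_le.mp (hZmeas i)
    have hbi := indep_biSup_compl hle hindep {none}
    refine indep_of_indep_of_le_right (indep_of_indep_of_le_left hbi ?_) ?_
    · have hsing : (⨆ n ∈ ({none} : Set (Option (Fin 3))),
          (fun j : Option (Fin 3) => Option.elim j
            (⨆ t ∈ Set.Ici (0 : ℝ), MeasurableSpace.comap (X t) inferInstance)
            fun i => MeasurableSpace.comap (Z i) inferInstance) n)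
          = sigAlg X := iSup_singleton
      exact le_of_eq hsing.symm
    · refine iSup_le fun i => ?_
      exact le_iSup₂ (f := fun (j : Option (Fin 3)) (_ : j ∈ ({none}ᶜ : Set (Option (Fin 3)))) =>
        Option.elim j (⨆ t ∈ Set.Ici (0 : ℝ), MeasurableSpace.comap (X t) inferInstance)
          fun i => MeasurableSpace.comap (Z i) inferInstance) (some i) (by simp)
  have hFind : ∀ f0 f1 f2 : Ω → ℝ, Measurable[sigAlg X] f0 → Measurable[sigAlg X] f1 → Measurable[sigAlg X] f2 →
      IndepFun (fun ω => (f0 ω, f1 ω, f2 ω)) (fun ω => (Z 0 ω, Z 1 ω, Z 2 ω)) P := by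
    intro f0 f1 f2 h0 h1 h2
    rw [IndepFun_iff_Indep]
    refine indep_of_indep_of_le_right (indep_of_indep_of_le_left hGZindep ?_) ?_
    · exact measurable_iff_comap_le.mp (Measurable.prodMk h0 (Measurable.prodMk h1 h2))
    · refine measurable_iff_comap_le.mp (Measurable.prodMk ?_ (Measurable.prodMk ?_ ?_)) <;>
        exact measurable_iff_comap_le.mpr
          (le_iSup (fun i => MeasurableSpace.comap (Z i) inferInstance) _)
  -- the four quadrant probabilities
  have hPB : P {ω | A 0 s ω < Z 0 ω ∧ A 1 s ω ≤ Z 1 ω ∧ A 2 s ω < Z 2 ω}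
      = ENNReal.ofReal (∫ ω, Real.exp (-(A 0 s ω + A 1 s ω + A 2 s ω)) ∂P) :=
    aux_master P (Z 0) (Z 1) (Z 2) (A 0 s) (A 1 s) (A 2 s) (hZmeas 0) (hZmeas 1) (hZmeas 2)
      (hAmeas 0 s hs) (hAmeas 1 s hs) (hAmeas 2 s hs)
      (fun ω => hA0 0 s ω hs) (fun ω => hA0 1 s ω hs) (fun ω => hA0 2 s ω hs)
      (hFind _ _ _ (hAmeas𝓖 0 s hs) (hAmeas𝓖 1 s hs) (hAmeas𝓖 2 s hs)) false (hconst false)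
  have hPC : P {ω | A 0 t ω < Z 0 ω ∧ A 1 s ω ≤ Z 1 ω ∧ A 2 t ω < Z 2 ω}
      = ENNReal.ofReal (∫ ω, Real.exp (-(A 0 t ω + A 1 s ω + A 2 t ω)) ∂P) :=
    aux_master P (Z 0) (Z 1) (Z 2) (A 0 t) (A 1 s) (A 2 t) (hZmeas 0) (hZmeas 1) (hZmeas 2)
      (hAmeas 0 t ht0) (hAmeas 1 s hs) (hAmeas 2 t ht0)
      (fun ω => hA0 0 t ω ht0) (fun ω => hA0 1 s ω hs) (fun ω => hA0 2 t ω ht0)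
      (hFind _ _ _ (hAmeas𝓖 0 t ht0) (hAmeas𝓖 1 s hs) (hAmeas𝓖 2 t ht0)) false (hconst false)
  have hPD : P {ω | A 0 s ω < Z 0 ω ∧ A 1 t ω < Z 1 ω ∧ A 2 t ω < Z 2 ω}
      = ENNReal.ofReal (∫ ω, Real.exp (-(A 0 s ω + A 1 t ω + A 2 t ω)) ∂P) :=
    aux_master P (Z 0) (Z 1) (Z 2) (A 0 s) (A 1 t) (A 2 t) (hZmeas 0) (hZmeas 1) (hZmeas 2)
      (hAmeas 0 s hs) (hAmeas 1 t ht0) (hAmeas 2 t ht0)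
      (fun ω => hA0 0 s ω hs) (fun ω => hA0 1 t ω ht0) (fun ω => hA0 2 t ω ht0)
      (hFind _ _ _ (hAmeas𝓖 0 s hs) (hAmeas𝓖 1 t ht0) (hAmeas𝓖 2 t ht0)) true (hconst true)
  have hPE : P {ω | A 0 t ω < Z 0 ω ∧ A 1 t ω < Z 1 ω ∧ A 2 t ω < Z 2 ω}
      = ENNReal.ofReal (∫ ω, Real.exp (-(A 0 t ω + A 1 t ω + A 2 t ω)) ∂P) :=
    aux_master P (Z 0) (Z 1) (Z 2) (A 0 t) (A 1 t) (A 2 t) (hZmeas 0) (hZmeas 1) (hZmeas 2)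
      (hAmeas 0 t ht0) (hAmeas 1 t ht0) (hAmeas 2 t ht0)
      (fun ω => hA0 0 t ω ht0) (fun ω => hA0 1 t ω ht0) (fun ω => hA0 2 t ω ht0)
      (hFind _ _ _ (hAmeas𝓖 0 t ht0) (hAmeas𝓖 1 t ht0) (hAmeas𝓖 2 t ht0)) true (hconst true)
  -- a.e. facts about the hitting times
  have hZpos : ∀ᵐ ω ∂P, ∀ i : Fin 3, 0 < Z i ω := by
    rw [ae_all_iff]
    intro i
    have h1 : P {ω | (0:ℝ) < Z i ω} = 1 := by simpa using hZexp i 0 le_rfl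
    have hm : MeasurableSet {ω | (0:ℝ) < Z i ω} := measurableSet_lt measurable_const (hZmeas i)
    have h2 : P {ω | (0:ℝ) < Z i ω}ᶜ = 0 := (prob_compl_eq_zero_iff hm).mpr h1
    rw [ae_iff]
    exact h2
  have hkey : ∀ᵐ ω ∂P, ∀ (i : Fin 3) (u : ℝ), 0 ≤ u →
      ((u < η i ω ↔ A i u ω < Z i ω) ∧ (u ≤ η i ω ↔ A i u ω ≤ Z i ω)) := by
    filter_upwards [hAmono, hAtop, hZpos] with ω hmono htop hzpos
    intro i u hu
    have heqA : (fun v => ∫ r in (0:ℝ)..v, α i (X r ω)) = fun v => A i v ω :=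
      funext fun v => (hA i v ω).symm
    have hgm : StrictMonoOn (fun v => A i v ω) (Set.Ici 0) := hmono i
    have hint : ∀ v : ℝ, 0 ≤ v →
        IntervalIntegrable (fun r => α i (X r ω)) MeasureTheory.volume 0 v := by
      apply aux_integrable_of_mono
      rw [heqA]; exact hgm
    have hcont : ContinuousOn (fun v => A i v ω) (Set.Ici 0) := by
      have h := aux_cont_primitive hint
      rwa [heqA] at h
    have hg0 : A i 0 ω = 0 := by rw [hA]; exact intervalIntegral.integral_same
    have h := aux_root_equiv hgm hcont (htop i) hg0 (hzpos i) hu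
    rw [hη i ω]
    exact h
  have hAmono' : ∀ᵐ ω ∂P, ∀ i : Fin 3, A i s ω ≤ A i t ω := by
    filter_upwards [hAmono] with ω h i
    exact (h i).monotoneOn (Set.mem_Ici.2 hs) (Set.mem_Ici.2 ht0) hst.le
  -- the four events
  set SB : Set Ω := {ω | A 0 s ω < Z 0 ω ∧ A 1 s ω ≤ Z 1 ω ∧ A 2 s ω < Z 2 ω} with hSBdef
  set SC : Set Ω := {ω | A 0 t ω < Z 0 ω ∧ A 1 s ω ≤ Z 1 ω ∧ A 2 t ω < Z 2 ω} with hSCdef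
  set SD : Set Ω := {ω | A 0 s ω < Z 0 ω ∧ A 1 t ω < Z 1 ω ∧ A 2 t ω < Z 2 ω} with hSDdef
  set SE : Set Ω := {ω | A 0 t ω < Z 0 ω ∧ A 1 t ω < Z 1 ω ∧ A 2 t ω < Z 2 ω} with hSEdef
  have hSCm : MeasurableSet SC :=
    (measurableSet_lt (hAmeas 0 t ht0) (hZmeas 0)).inter
      ((measurableSet_le (hAmeas 1 s hs) (hZmeas 1)).inter
        (measurableSet_lt (hAmeas 2 t ht0) (hZmeas 2)))
  have hSDm : MeasurableSet SD :=
    (measurableSet_lt (hAmeas 0 s hs) (hZmeas 0)).inter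
      ((measurableSet_lt (hAmeas 1 t ht0) (hZmeas 1)).inter
        (measurableSet_lt (hAmeas 2 t ht0) (hZmeas 2)))
  -- identification of the target event
  have htarget : P {ω | (s < τ₁ ω ∧ τ₁ ω ≤ t) ∧ (s ≤ τ₂ ω ∧ τ₂ ω ≤ t)}
      = P (SB \ (SC ∪ SD)) := by
    apply measure_congr
    rw [Filter.eventuallyEq_set]
    filter_upwards [hkey] with ω hk
    simp only [Set.mem_setOf_eq, Set.mem_diff, Set.mem_union, hSBdef, hSCdef, hSDdef]
    rw [hτ₁ ω, hτ₂ ω, ← (hk 0 s hs).1, ← (hk 1 s hs).2, ← (hk 2 s hs).1,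
      ← (hk 0 t ht0).1, ← (hk 1 t ht0).1, ← (hk 2 t ht0).1]
    simp only [lt_min_iff, le_min_iff, min_le_iff]
    simp only [← not_lt]
    exact aux_logic (fun h => hst.trans h) (fun h => not_lt.mpr (hst.trans h).le)
      (fun h => hst.trans h) (fun h => not_lt.mpr h.le)
  -- measure computations
  have hCB : ∀ᵐ ω ∂P, ω ∈ SC → ω ∈ SB := by
    filter_upwards [hAmono'] with ω hm
    rintro ⟨h1, h2, h3⟩
    exact ⟨lt_of_le_of_lt (hm 0) h1, h2, lt_of_le_of_lt (hm 2) h3⟩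
  have hDB : ∀ᵐ ω ∂P, ω ∈ SD → ω ∈ SB := by
    filter_upwards [hAmono'] with ω hm
    rintro ⟨h1, h2, h3⟩
    exact ⟨h1, le_of_lt (lt_of_le_of_lt (hm 1) h2), lt_of_le_of_lt (hm 2) h3⟩
  have hCDE : (SC ∩ SD : Set Ω) =ᵐ[P] SE := by
    rw [Filter.eventuallyEq_set]
    filter_upwards [hAmono'] with ω hm
    simp only [Set.mem_inter_iff, hSCdef, hSDdef, hSEdef, Set.mem_setOf_eq]
    constructor
    · rintro ⟨⟨c1, _, c3⟩, ⟨_, d2, _⟩⟩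
      exact ⟨c1, d2, c3⟩
    · rintro ⟨e1, e2, e3⟩
      exact ⟨⟨e1, le_of_lt (lt_of_le_of_lt (hm 1) e2), e3⟩,
        ⟨lt_of_le_of_lt (hm 0) e1, e2, e3⟩⟩
  have hPB'eq : P (SB ∪ (SC ∪ SD)) = P SB := by
    apply measure_congr
    rw [Filter.eventuallyEq_set]
    filter_upwards [hCB, hDB] with ω h1 h2
    simp only [Set.mem_union]
    tauto
  have hPdiff : P (SB \ (SC ∪ SD)) = P (SB ∪ (SC ∪ SD)) - P (SC ∪ SD) := by
    rw [← Set.union_diff_right (s := SB) (t := SC ∪ SD)]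
    exact measure_diff Set.subset_union_right (hSCm.union hSDm).nullMeasurableSet
      (measure_ne_top P _)
  have hPunion : P (SC ∪ SD) + P SE = P SC + P SD := by
    rw [← measure_congr hCDE]
    exact measure_union_add_inter SC hSDm
  -- pass to real numbers
  have hIBnn : (0:ℝ) ≤ ∫ ω, Real.exp (-(A 0 s ω + A 1 s ω + A 2 s ω)) ∂P :=
    integral_nonneg fun ω => (Real.exp_pos _).le
  have hICnn : (0:ℝ) ≤ ∫ ω, Real.exp (-(A 0 t ω + A 1 s ω + A 2 t ω)) ∂P :=
    integral_nonneg fun ω => (Real.exp_pos _).le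
  have hIDnn : (0:ℝ) ≤ ∫ ω, Real.exp (-(A 0 s ω + A 1 t ω + A 2 t ω)) ∂P :=
    integral_nonneg fun ω => (Real.exp_pos _).le
  have hIEnn : (0:ℝ) ≤ ∫ ω, Real.exp (-(A 0 t ω + A 1 t ω + A 2 t ω)) ∂P :=
    integral_nonneg fun ω => (Real.exp_pos _).le
  have h2 : (P {ω | (s < τ₁ ω ∧ τ₁ ω ≤ t) ∧ (s ≤ τ₂ ω ∧ τ₂ ω ≤ t)}).toReal
      = (∫ ω, Real.exp (-(A 0 s ω + A 1 s ω + A 2 s ω)) ∂P) - (P (SC ∪ SD)).toReal := by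
    rw [htarget, hPdiff, ENNReal.toReal_sub_of_le
      (measure_mono Set.subset_union_right) (measure_ne_top P _),
      hPB'eq, hPB, ENNReal.toReal_ofReal hIBnn]
  have h3 : (P (SC ∪ SD)).toReal
      = (∫ ω, Real.exp (-(A 0 t ω + A 1 s ω + A 2 t ω)) ∂P)
        + (∫ ω, Real.exp (-(A 0 s ω + A 1 t ω + A 2 t ω)) ∂P)
        - (∫ ω, Real.exp (-(A 0 t ω + A 1 t ω + A 2 t ω)) ∂P) := by
    have h := congrArg ENNReal.toReal hPunion
    rw [ENNReal.toReal_add (measure_ne_top P _) (measure_ne_top P _),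
      ENNReal.toReal_add (measure_ne_top P _) (measure_ne_top P _),
      hPE, hPC, hPD, ENNReal.toReal_ofReal hIEnn, ENNReal.toReal_ofReal hICnn,
      ENNReal.toReal_ofReal hIDnn] at h
    linarith
  -- integrability of the exponentials
  have hIntExp : ∀ u v w : ℝ, 0 ≤ u → 0 ≤ v → 0 ≤ w →
      Integrable (fun ω => Real.exp (-(A 0 u ω + A 1 v ω + A 2 w ω))) P := by
    intro u v w hu hv hw
    have hm : Measurable fun ω => Real.exp (-(A 0 u ω + A 1 v ω + A 2 w ω)) :=
      (((hAmeas 0 u hu).add (hAmeas 1 v hv)).add (hAmeas 2 w hw)).neg.exp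
    refine (integrable_const (1:ℝ)).mono' hm.aestronglyMeasurable
      (Filter.Eventually.of_forall fun ω => ?_)
    rw [Real.norm_eq_abs, abs_of_pos (Real.exp_pos _)]
    exact Real.exp_le_one_iff.mpr
      (by nlinarith [hA0 0 u ω hu, hA0 1 v ω hv, hA0 2 w ω hw])
  have hRHS : ∫ ω, (Real.exp (-(A 0 s ω + A 1 s ω + A 2 s ω))
          + Real.exp (-(A 0 t ω + A 1 t ω + A 2 t ω))
          - Real.exp (-(A 0 s ω) - A 1 t ω - A 2 t ω)
          - Real.exp (-(A 0 t ω) - A 1 s ω - A 2 t ω)) ∂P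
      = (∫ ω, Real.exp (-(A 0 s ω + A 1 s ω + A 2 s ω)) ∂P)
        + (∫ ω, Real.exp (-(A 0 t ω + A 1 t ω + A 2 t ω)) ∂P)
        - (∫ ω, Real.exp (-(A 0 s ω + A 1 t ω + A 2 t ω)) ∂P)
        - (∫ ω, Real.exp (-(A 0 t ω + A 1 s ω + A 2 t ω)) ∂P) := by
    have h3eq : ∀ ω : Ω, Real.exp (-(A 0 s ω) - A 1 t ω - A 2 t ω)
        = Real.exp (-(A 0 s ω + A 1 t ω + A 2 t ω)) := fun ω => by ring_nf
    have h4eq : ∀ ω : Ω, Real.exp (-(A 0 t ω) - A 1 s ω - A 2 t ω)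
        = Real.exp (-(A 0 t ω + A 1 s ω + A 2 t ω)) := fun ω => by ring_nf
    simp only [h3eq, h4eq]
    have hsub1 : ∫ ω, (Real.exp (-(A 0 s ω + A 1 s ω + A 2 s ω))
          + Real.exp (-(A 0 t ω + A 1 t ω + A 2 t ω))
          - Real.exp (-(A 0 s ω + A 1 t ω + A 2 t ω))
          - Real.exp (-(A 0 t ω + A 1 s ω + A 2 t ω))) ∂P
        = (∫ ω, (Real.exp (-(A 0 s ω + A 1 s ω + A 2 s ω))
            + Real.exp (-(A 0 t ω + A 1 t ω + A 2 t ω))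
            - Real.exp (-(A 0 s ω + A 1 t ω + A 2 t ω))) ∂P)
          - ∫ ω, Real.exp (-(A 0 t ω + A 1 s ω + A 2 t ω)) ∂P :=
      integral_sub (((hIntExp s s s hs hs hs).add (hIntExp t t t ht0 ht0 ht0)).sub
        (hIntExp s t t hs ht0 ht0)) (hIntExp t s t ht0 hs ht0)
    have hsub2 : ∫ ω, (Real.exp (-(A 0 s ω + A 1 s ω + A 2 s ω))
          + Real.exp (-(A 0 t ω + A 1 t ω + A 2 t ω))
          - Real.exp (-(A 0 s ω + A 1 t ω + A 2 t ω))) ∂P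
        = (∫ ω, (Real.exp (-(A 0 s ω + A 1 s ω + A 2 s ω))
            + Real.exp (-(A 0 t ω + A 1 t ω + A 2 t ω))) ∂P)
          - ∫ ω, Real.exp (-(A 0 s ω + A 1 t ω + A 2 t ω)) ∂P :=
      integral_sub ((hIntExp s s s hs hs hs).add (hIntExp t t t ht0 ht0 ht0))
        (hIntExp s t t hs ht0 ht0)
    have hadd : ∫ ω, (Real.exp (-(A 0 s ω + A 1 s ω + A 2 s ω))
          + Real.exp (-(A 0 t ω + A 1 t ω + A 2 t ω))) ∂P
        = (∫ ω, Real.exp (-(A 0 s ω + A 1 s ω + A 2 s ω)) ∂P)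
          + ∫ ω, Real.exp (-(A 0 t ω + A 1 t ω + A 2 t ω)) ∂P :=
      integral_add (hIntExp s s s hs hs hs) (hIntExp t t t ht0 ht0 ht0)
    rw [hsub1, hsub2, hadd]
  rw [hRHS, h2, h3]
  ring
end

section
/- (Theorem 3.1, joint survival function in the Gumbel model) For all s, t ≥ 0, the joint survival function of (τ_1, τ_2) satisfies P(τ_1 > s, τ_2 > t) = E[exp(−A^1_s − A^2_t − δ·A^1_s·A^2_t − A^3_{max(s,t)})]. -/
/-!
The sets `{η_i > u}` are `{A^i_u < Z_i}`, because `A^i` is continuous and increasing; hence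
`{τ₁ > s, τ₂ > t} = {A^1_s < Z_1, A^2_t < Z_2, A^3_{max(s,t)} < Z_3}`. The thresholds are
functionals of `X`, hence independent of `(Z_1, Z_2, Z_3)`, whose joint survival function is
`exp (-a - b - δab - c)`; integrating it against the law of the thresholds gives the formula.

The one delicate point is that `A^i_u = ∫_0^u α^i(X_r) dr` is measurable for `σ(X_t : t ≥ 0)`
(up to a null set) although `X` is only jointly measurable for the ambient σ-algebra. For a
bounded integrand `f(ω, r)` with `σ(X)`-measurable slices, Fubini shows that
`g = ∫ f(·, r) dr` satisfies `E[g²] = E[g · E[g | σ(X)]]`, which forces `g = E[g | σ(X)]` a.e.;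
truncation removes the boundedness.
-/

open MeasureTheory ProbabilityTheory Filter Set

section SubSigmaAlgebra

variable {Ω : Type*} {m : MeasurableSpace Ω} [mΩ : MeasurableSpace Ω] {μ : Measure Ω}

theorem integral_mul_condExp (hm : m ≤ mΩ) [SigmaFinite (μ.trim hm)] {f g : Ω → ℝ}
    (hf : AEStronglyMeasurable[m] f μ) (hfg : Integrable (f * g) μ) (hg : Integrable g μ) :
    ∫ ω, f ω * μ[g|m] ω ∂μ = ∫ ω, f ω * g ω ∂μ := calc
  _ = ∫ ω, μ[f * g|m] ω ∂μ :=
    integral_congr_ae (condExp_mul_of_aestronglyMeasurable_left hf hfg hg).symm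
  _ = _ := integral_condExp hm

theorem ae_eq_condExp_of_integral_mul_self (hm : m ≤ mΩ) [IsFiniteMeasure μ] {g : Ω → ℝ}
    (hg : StronglyMeasurable g) {C : ℝ} (hgC : ∀ ω, ‖g ω‖ ≤ C)
    (hgg : ∫ ω, g ω * g ω ∂μ = ∫ ω, g ω * μ[g|m] ω ∂μ) : g =ᵐ[μ] μ[g|m] := by
  set h := μ[g|m]
  have hgi : Integrable g μ :=
    (integrable_const C).mono' hg.aestronglyMeasurable (Eventually.of_forall hgC)
  have hhi : Integrable h μ := integrable_condExp
  have hhC : ∀ᵐ ω ∂μ, ‖h ω‖ ≤ C := by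
    simpa only [Real.norm_eq_abs] using
      ae_bdd_abs_condExp_of_ae_bdd_abs (m := m) (μ := μ) (R := C) (Eventually.of_forall hgC)
  have hhh : ∫ ω, h ω * h ω ∂μ = ∫ ω, h ω * g ω ∂μ :=
    integral_mul_condExp hm stronglyMeasurable_condExp.aestronglyMeasurable
      (hgi.bdd_mul hhi.aestronglyMeasurable hhC) hgi
  have hgg_int : Integrable (fun ω => g ω * g ω) μ :=
    hgi.bdd_mul hg.aestronglyMeasurable (Eventually.of_forall hgC)
  have hgh_int : Integrable (fun ω => g ω * h ω) μ :=
    hhi.bdd_mul hg.aestronglyMeasurable (Eventually.of_forall hgC)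
  have hhh_int : Integrable (fun ω => h ω * h ω) μ := hhi.bdd_mul hhi.aestronglyMeasurable hhC
  have expand : ∀ ω, (g ω - h ω) ^ 2 = g ω * g ω - 2 * (g ω * h ω) + h ω * h ω := fun ω => by
    ring
  have hsq_int : Integrable (fun ω => (g ω - h ω) ^ 2) μ := by
    simp_rw [expand]
    exact (hgg_int.sub (hgh_int.const_mul 2)).add hhh_int
  have hsq : ∫ ω, (g ω - h ω) ^ 2 ∂μ = 0 := by
    simp_rw [expand]
    rw [integral_add (f := fun ω => g ω * g ω - 2 * (g ω * h ω))
      (hgg_int.sub (hgh_int.const_mul 2)) hhh_int, integral_sub hgg_int (hgh_int.const_mul 2),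
      integral_const_mul, hgg, hhh]
    simp_rw [mul_comm (h _)]
    ring
  filter_upwards [(integral_eq_zero_iff_of_nonneg (fun ω => sq_nonneg _) hsq_int).1 hsq]
    with ω hω
  exact sub_eq_zero.1 (pow_eq_zero_iff two_ne_zero |>.1 hω)

theorem aestronglyMeasurable_of_tendsto_ae_real {f : ℕ → Ω → ℝ} {g : Ω → ℝ}
    (hf : ∀ n, AEStronglyMeasurable[m] (f n) μ)
    (hlim : ∀ᵐ ω ∂μ, Tendsto (fun n => f n ω) atTop (nhds (g ω))) :
    AEStronglyMeasurable[m] g μ := by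
  refine ⟨fun ω => limsup (fun n => (hf n).mk _ ω) atTop,
    (Measurable.limsup fun n => (hf n).stronglyMeasurable_mk.measurable).stronglyMeasurable, ?_⟩
  filter_upwards [hlim, ae_all_iff.2 fun n => (hf n).ae_eq_mk] with ω hω hmk
  simp only [← hmk]
  exact hω.limsup_eq.symm

variable {β : Type*} [MeasurableSpace β] [IsFiniteMeasure μ] (ν : Measure β) [IsFiniteMeasure ν]

theorem integral_integral_mul_swap {f : Ω × β → ℝ} (hf : StronglyMeasurable f) {c : ℝ}
    (hfc : ∀ z, ‖f z‖ ≤ c) {k : Ω → ℝ} (hk : Integrable k μ) :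
    ∫ ω, (∫ r, f (ω, r) ∂ν) * k ω ∂μ = ∫ r, ∫ ω, f (ω, r) * k ω ∂μ ∂ν := by
  simp_rw [← integral_mul_const]
  exact integral_integral_swap
    ((hk.comp_fst ν).bdd_mul hf.aestronglyMeasurable (Eventually.of_forall hfc))

theorem aestronglyMeasurable_integral_of_bdd (hm : m ≤ mΩ) {f : Ω × β → ℝ}
    (hf : StronglyMeasurable f) {c : ℝ} (hfc : ∀ z, ‖f z‖ ≤ c)
    (hslice : ∀ᵐ r ∂ν, StronglyMeasurable[m] fun ω => f (ω, r)) :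
    AEStronglyMeasurable[m] (fun ω => ∫ r, f (ω, r) ∂ν) μ := by
  set g := fun ω => ∫ r, f (ω, r) ∂ν
  have hgC : ∀ ω, ‖g ω‖ ≤ c * ν.real univ := fun ω =>
    norm_integral_le_of_norm_le_const (Eventually.of_forall fun r => hfc (ω, r))
  have hgi : Integrable g μ := (integrable_const _).mono'
    hf.integral_prod_right'.aestronglyMeasurable (Eventually.of_forall hgC)
  -- Fubini, then `E[f(·, r) g] = E[f(·, r) E[g | m]]` for every `m`-measurable slice
  have hgg : ∫ ω, g ω * g ω ∂μ = ∫ ω, g ω * μ[g|m] ω ∂μ := by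
    rw [integral_integral_mul_swap ν hf hfc hgi,
      integral_integral_mul_swap ν hf hfc integrable_condExp]
    refine integral_congr_ae ?_
    filter_upwards [hslice] with r hr
    exact (integral_mul_condExp hm hr.aestronglyMeasurable
      (hgi.bdd_mul (hf.comp_measurable measurable_prodMk_right).aestronglyMeasurable
        (Eventually.of_forall fun ω => hfc _)) hgi).symm
  exact ⟨μ[g|m], stronglyMeasurable_condExp,
    ae_eq_condExp_of_integral_mul_self hm hf.integral_prod_right' hgC hgg⟩

theorem aestronglyMeasurable_integral_of_ae_integrable (hm : m ≤ mΩ) {f : Ω × β → ℝ}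
    (hf : StronglyMeasurable f) (hslice : ∀ᵐ r ∂ν, StronglyMeasurable[m] fun ω => f (ω, r))
    (hint : ∀ᵐ ω ∂μ, Integrable (fun r => f (ω, r)) ν) :
    AEStronglyMeasurable[m] (fun ω => ∫ r, f (ω, r) ∂ν) μ := by
  set clip : ℕ → ℝ → ℝ := fun n x => max (-n) (min x n)
  have hclip : ∀ n, Continuous (clip n) := fun n => by fun_prop
  have hclip_le : ∀ n x, ‖clip n x‖ ≤ ‖x‖ := by
    intro n x
    have := le_abs_self x; have := neg_abs_le x; have : (0 : ℝ) ≤ n := n.cast_nonneg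
    simp only [clip, Real.norm_eq_abs, abs_le, le_max_iff, max_le_iff, min_le_iff, le_min_iff]
    grind
  have hclip_bound : ∀ n x, ‖clip n x‖ ≤ n := by
    intro n x
    have : (0 : ℝ) ≤ n := n.cast_nonneg
    simp only [clip, Real.norm_eq_abs, abs_le, le_max_iff, max_le_iff, min_le_iff, le_min_iff]
    grind
  have hclip_eq : ∀ x, ∀ᶠ n in atTop, clip n x = x := by
    intro x
    filter_upwards [eventually_ge_atTop ⌈|x|⌉₊] with n hn
    obtain ⟨hlo, hhi⟩ := abs_le.1 (Nat.ceil_le.1 hn)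
    simp only [clip, min_eq_left hhi, max_eq_right hlo]
  refine aestronglyMeasurable_of_tendsto_ae_real (fun n =>
    aestronglyMeasurable_integral_of_bdd ν hm ((hclip n).comp_stronglyMeasurable hf)
      (fun z => hclip_bound n (f z))
      (hslice.mono fun r hr => (hclip n).comp_stronglyMeasurable hr)) ?_
  filter_upwards [hint] with ω hω
  exact tendsto_integral_of_dominated_convergence (fun r => ‖f (ω, r)‖)
    (fun n => ((hclip n).comp_stronglyMeasurable
      (hf.comp_measurable measurable_prodMk_left)).aestronglyMeasurable) hω.norm
    (fun n => Eventually.of_forall fun r => hclip_le n _)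
    (Eventually.of_forall fun r => tendsto_nhds_of_eventually_eq (hclip_eq _))

theorem aestronglyMeasurable_intervalIntegral (hm : m ≤ mΩ) {f : Ω × ℝ → ℝ}
    (hf : StronglyMeasurable f) {u : ℝ} (hu : 0 ≤ u)
    (hslice : ∀ r ∈ Ioc 0 u, StronglyMeasurable[m] fun ω => f (ω, r))
    (hint : ∀ᵐ ω ∂μ, IntervalIntegrable (fun r => f (ω, r)) volume 0 u) :
    AEStronglyMeasurable[m] (fun ω => ∫ r in 0..u, f (ω, r)) μ := by
  simp_rw [intervalIntegral.integral_of_le hu]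
  exact aestronglyMeasurable_integral_of_ae_integrable _ hm hf
    ((ae_restrict_iff' measurableSet_Ioc).2 (Eventually.of_forall hslice))
    (hint.mono fun ω hω => (intervalIntegrable_iff_integrableOn_Ioc_of_le hu).1 hω)

end SubSigmaAlgebra

section FirstPassage

theorem lt_sInf_setOf_le_iff {F : ℝ → ℝ} (hcont : ContinuousOn F (Ici 0))
    (hmono : MonotoneOn F (Ici 0)) {z : ℝ} (hz : ∃ x, 0 ≤ x ∧ z ≤ F x) {u : ℝ} (hu : 0 ≤ u) :
    u < sInf {x | 0 ≤ x ∧ z ≤ F x} ↔ F u < z := by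
  set S := {x | 0 ≤ x ∧ z ≤ F x}
  have hbdd : BddBelow S := ⟨0, fun x hx => hx.1⟩
  have hmem : sInf S ∈ S :=
    (hcont.preimage_isClosed_of_isClosed isClosed_Ici isClosed_Ici).csInf_mem hz hbdd
  refine ⟨fun h => ?_, fun h => ?_⟩
  · by_contra hle
    exact h.not_ge (csInf_le hbdd ⟨hu, not_lt.1 hle⟩)
  · by_contra hle
    exact ((hmono hmem.1 hu (not_lt.1 hle)).trans_lt h).not_ge hmem.2

theorem intervalIntegrable_of_strictMonoOn_primitive {f : ℝ → ℝ}
    (hmono : StrictMonoOn (fun v => ∫ r in 0..v, f r) (Ici 0)) {u : ℝ} (hu : 0 ≤ u) :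
    IntervalIntegrable f volume 0 u := by
  rcases hu.eq_or_lt with rfl | hu
  · exact IntervalIntegrable.refl
  · by_contra hf
    have := hmono self_mem_Ici hu.le hu
    simp [intervalIntegral.integral_undef hf] at this

theorem continuousOn_primitive_Ici {f : ℝ → ℝ}
    (hf : ∀ u, 0 ≤ u → IntervalIntegrable f volume 0 u) :
    ContinuousOn (fun v => ∫ r in 0..v, f r) (Ici 0) := by
  intro x hx
  have hx1 : 0 ≤ x + 1 := by linarith [mem_Ici.1 hx]
  have hcont := intervalIntegral.continuousOn_primitive_interval' (hf (x + 1) hx1) left_mem_uIcc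
  rw [uIcc_of_le hx1] at hcont
  exact (hcont x ⟨hx, by linarith⟩).mono_of_mem_nhdsWithin
    (inter_mem_nhdsWithin _ (Iic_mem_nhds (by linarith)))

theorem lt_sInf_primitive_iff {F f : ℝ → ℝ} (hF : F = fun v => ∫ r in 0..v, f r)
    (hmono : StrictMonoOn F (Ici 0)) (htop : Tendsto F atTop atTop) (z : ℝ) {u : ℝ}
    (hu : 0 ≤ u) : u < sInf {x | 0 ≤ x ∧ z ≤ F x} ↔ F u < z := by
  subst hF
  exact lt_sInf_setOf_le_iff
    (continuousOn_primitive_Ici fun _ => intervalIntegrable_of_strictMonoOn_primitive hmono)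
    hmono.monotoneOn
    (((htop.eventually_ge_atTop z).and (eventually_ge_atTop 0)).exists.imp fun _ hx => hx.symm) hu

end FirstPassage

namespace ProbabilityTheory

variable {Ω : Type*}

theorem IndepFun.measureReal_preimage_eq_integral {α β : Type*} [MeasurableSpace Ω]
    [MeasurableSpace α] [MeasurableSpace β] {μ : Measure Ω} [IsFiniteMeasure μ]
    {V : Ω → α} {W : Ω → β} (hVW : IndepFun V W μ) (hV : AEMeasurable V μ)
    (hW : AEMeasurable W μ) {U : Set (α × β)} (hU : MeasurableSet U) :
    μ.real ((fun ω => (V ω, W ω)) ⁻¹' U) = ∫ ω, μ.real (W ⁻¹' (Prod.mk (V ω) ⁻¹' U)) ∂μ := by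
  have hslice : ∀ v, μ.map W (Prod.mk v ⁻¹' U) = μ (W ⁻¹' (Prod.mk v ⁻¹' U)) := fun v =>
    Measure.map_apply_of_aemeasurable hW (measurable_prodMk_left hU)
  have hmeas : Measurable fun v => μ.map W (Prod.mk v ⁻¹' U) := measurable_measure_prodMk_left hU
  rw [measureReal_def, ← Measure.map_apply_of_aemeasurable (hV.prodMk hW) hU,
    hVW.map_prod_eq_prod_map_map hV hW, Measure.prod_apply hU,
    lintegral_map' hmeas.aemeasurable hV,
    ← integral_toReal (f := fun ω => μ.map W (Prod.mk (V ω) ⁻¹' U))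
      (hmeas.comp_aemeasurable hV) (Eventually.of_forall fun _ => measure_lt_top _ _)]
  simp_rw [hslice, measureReal_def]

variable {β γ E : Type*} [MeasurableSpace β] [MeasurableSpace γ] [TopologicalSpace E]
  [TopologicalSpace.PseudoMetrizableSpace E] [MeasurableSpace E] [BorelSpace E]

theorem Indep.indepFun_of_aestronglyMeasurable {m₁ m₂ : MeasurableSpace Ω}
    [MeasurableSpace Ω] {μ : Measure Ω} (h : Indep m₁ m₂ μ) {f : Ω → E} {g : Ω → γ}
    (hf : AEStronglyMeasurable[m₁] f μ) (hg : Measurable[m₂] g) : IndepFun f g μ := by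
  refine IndepFun.congr (f := hf.mk f) ?_ hf.ae_eq_mk.symm EventuallyEq.rfl
  exact (IndepFun_iff_Indep _ _ _).2 (indep_of_indep_of_le h
    hf.stronglyMeasurable_mk.measurable.comap_le hg.comap_le)

theorem indepFun_prodMk_of_iIndep {m₀ m₁ m₂ : MeasurableSpace Ω} [mΩ : MeasurableSpace Ω]
    {μ : Measure Ω} (h : iIndep ![m₀, m₁, m₂] μ) (h₀ : m₀ ≤ mΩ) (h₁ : m₁ ≤ mΩ) (h₂ : m₂ ≤ mΩ)
    {V : Ω → E} {f : Ω → β} {g : Ω → γ}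
    (hV : AEStronglyMeasurable[m₂] V μ) (hf : Measurable[m₀] f) (hg : Measurable[m₁] g) :
    IndepFun V (fun ω => (f ω, g ω)) μ := by
  have h_le : ∀ i, ![m₀, m₁, m₂] i ≤ mΩ := by
    intro i
    fin_cases i
    exacts [h₀, h₁, h₂]
  have hindep := indep_iSup_of_disjoint h_le h (S := {2}) (T := {0, 1})
    (disjoint_singleton_left.2 (by simp))
  simp only [mem_singleton_iff, iSup_iSup_eq_left] at hindep
  have hle : ∀ i ∈ ({0, 1} : Set (Fin 3)), ![m₀, m₁, m₂] i ≤ ⨆ j ∈ ({0, 1} : Set (Fin 3)),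
      ![m₀, m₁, m₂] j := fun i hi => le_iSup₂ (f := fun j _ => ![m₀, m₁, m₂] j) i hi
  exact hindep.indepFun_of_aestronglyMeasurable hV <|
    (hf.mono (hle 0 (by simp)) le_rfl).prodMk (hg.mono (hle 1 (by simp)) le_rfl)

variable [MeasurableSpace Ω] {P : Measure Ω} {Z₁ Z₂ Z₃ : Ω → ℝ} {δ : ℝ}

theorem measureReal_gumbel_survival
    (h12 : ∀ s t : ℝ, 0 ≤ s → 0 ≤ t →
      P {ω | s < Z₁ ω ∧ t < Z₂ ω} = ENNReal.ofReal (Real.exp (-s - t - δ * s * t)))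
    (h3 : ∀ s : ℝ, 0 ≤ s → P {ω | s < Z₃ ω} = ENNReal.ofReal (Real.exp (-s)))
    (hZindep : Indep (MeasurableSpace.comap (fun ω => (Z₁ ω, Z₂ ω)) inferInstance)
      (MeasurableSpace.comap Z₃ inferInstance) P)
    {a b c : ℝ} (ha : 0 ≤ a) (hb : 0 ≤ b) (hc : 0 ≤ c) :
    P.real {ω | a < Z₁ ω ∧ b < Z₂ ω ∧ c < Z₃ ω} = Real.exp (-a - b - δ * a * b - c) := by
  have hsplit : {ω | a < Z₁ ω ∧ b < Z₂ ω ∧ c < Z₃ ω}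
      = {ω | a < Z₁ ω ∧ b < Z₂ ω} ∩ {ω | c < Z₃ ω} := by
    ext ω; exact and_assoc.symm
  have hS : MeasurableSet[MeasurableSpace.comap (fun ω => (Z₁ ω, Z₂ ω)) inferInstance]
      {ω | a < Z₁ ω ∧ b < Z₂ ω} := ⟨Ioi a ×ˢ Ioi b, measurableSet_Ioi.prod measurableSet_Ioi, rfl⟩
  have hT : MeasurableSet[MeasurableSpace.comap Z₃ inferInstance] {ω | c < Z₃ ω} :=
    ⟨Ioi c, measurableSet_Ioi, rfl⟩
  rw [measureReal_def, hsplit, (Indep_iff _ _ _).1 hZindep _ _ hS hT, h12 a b ha hb, h3 c hc,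
    ENNReal.toReal_mul, ENNReal.toReal_ofReal (Real.exp_nonneg _),
    ENNReal.toReal_ofReal (Real.exp_nonneg _), ← Real.exp_add]
  ring_nf

theorem measureReal_lt_gumbel_eq_integral [IsFiniteMeasure P] (hZ₁ : Measurable Z₁)
    (hZ₂ : Measurable Z₂) (hZ₃ : Measurable Z₃)
    (h12 : ∀ s t : ℝ, 0 ≤ s → 0 ≤ t →
      P {ω | s < Z₁ ω ∧ t < Z₂ ω} = ENNReal.ofReal (Real.exp (-s - t - δ * s * t)))
    (h3 : ∀ s : ℝ, 0 ≤ s → P {ω | s < Z₃ ω} = ENNReal.ofReal (Real.exp (-s)))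
    (hZindep : Indep (MeasurableSpace.comap (fun ω => (Z₁ ω, Z₂ ω)) inferInstance)
      (MeasurableSpace.comap Z₃ inferInstance) P)
    {B₁ B₂ B₃ : Ω → ℝ}
    (hB : AEMeasurable (fun ω => ((B₁ ω, B₂ ω), B₃ ω)) P)
    (hB₁ : ∀ ω, 0 ≤ B₁ ω) (hB₂ : ∀ ω, 0 ≤ B₂ ω) (hB₃ : ∀ ω, 0 ≤ B₃ ω)
    (hBZ : IndepFun (fun ω => ((B₁ ω, B₂ ω), B₃ ω)) (fun ω => ((Z₁ ω, Z₂ ω), Z₃ ω)) P) :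
    P.real {ω | B₁ ω < Z₁ ω ∧ B₂ ω < Z₂ ω ∧ B₃ ω < Z₃ ω}
      = ∫ ω, Real.exp (-B₁ ω - B₂ ω - δ * B₁ ω * B₂ ω - B₃ ω) ∂P := by
  have hU : MeasurableSet {p : ((ℝ × ℝ) × ℝ) × ((ℝ × ℝ) × ℝ) |
      p.1.1.1 < p.2.1.1 ∧ p.1.1.2 < p.2.1.2 ∧ p.1.2 < p.2.2} := by
    simp only [ofPred_and]
    exact (measurableSet_lt (by fun_prop) (by fun_prop)).inter
      ((measurableSet_lt (by fun_prop) (by fun_prop)).inter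
        (measurableSet_lt (by fun_prop) (by fun_prop)))
  refine (hBZ.measureReal_preimage_eq_integral hB ((hZ₁.prodMk hZ₂).prodMk hZ₃).aemeasurable
    hU).trans (integral_congr_ae <| Eventually.of_forall fun ω => ?_)
  exact measureReal_gumbel_survival h12 h3 hZindep (hB₁ ω) (hB₂ ω) (hB₃ ω)

end ProbabilityTheory

section PathSigmaAlgebra

variable {Ω E : Type*} [MeasurableSpace E]

abbrev sigmaOfProcess (X : ℝ → Ω → E) : MeasurableSpace Ω :=
  ⨆ t ∈ Ici (0 : ℝ), MeasurableSpace.comap (X t) inferInstance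

theorem sigmaOfProcess_le [mΩ : MeasurableSpace Ω] {X : ℝ → Ω → E}
    (hX : ∀ t, Measurable (X t)) : sigmaOfProcess X ≤ mΩ :=
  iSup₂_le fun t _ => (hX t).comap_le

theorem measurable_sigmaOfProcess (X : ℝ → Ω → E) {t : ℝ} (ht : 0 ≤ t) :
    Measurable[sigmaOfProcess X] (X t) :=
  measurable_iff_comap_le.2 <|
    le_iSup₂ (f := fun t (_ : t ∈ Ici (0 : ℝ)) => MeasurableSpace.comap (X t) inferInstance) t ht

theorem aestronglyMeasurable_sigmaOfProcess_intervalIntegral [MeasurableSpace Ω]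
    {μ : Measure Ω} [IsFiniteMeasure μ] {X : ℝ → Ω → E} (hX : Measurable (Function.uncurry X))
    {a : E → ℝ} (ha : Measurable a) {u : ℝ} (hu : 0 ≤ u)
    (hint : ∀ᵐ ω ∂μ, IntervalIntegrable (fun r => a (X r ω)) volume 0 u) :
    AEStronglyMeasurable[sigmaOfProcess X] (fun ω => ∫ r in 0..u, a (X r ω)) μ :=
  aestronglyMeasurable_intervalIntegral (f := fun z => a (X z.2 z.1))
    (sigmaOfProcess_le fun _ => hX.of_uncurry_left)
    (ha.comp (hX.comp measurable_swap)).stronglyMeasurable hu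
    (fun _ hr => (ha.comp (measurable_sigmaOfProcess X hr.1.le)).stronglyMeasurable) hint

end PathSigmaAlgebra

theorem stmt11_general
    {Ω : Type*} [MeasurableSpace Ω] (P : Measure Ω) [IsProbabilityMeasure P]
    {d : ℕ} (X : ℝ → Ω → (Fin d → ℝ))
    (hX : Measurable (Function.uncurry X))
    (δ : ℝ)
    (Z : Fin 3 → Ω → ℝ) (hZmeas : ∀ i, Measurable (Z i))
    (hZ12 : ∀ s t : ℝ, 0 ≤ s → 0 ≤ t →
      P {ω | s < Z 0 ω ∧ t < Z 1 ω} = ENNReal.ofReal (Real.exp (-s - t - δ * s * t)))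
    (hZ3 : ∀ s : ℝ, 0 ≤ s →
      P {ω | s < Z 2 ω} = ENNReal.ofReal (Real.exp (-s)))
    (hindep : iIndep
      ![MeasurableSpace.comap (fun ω => (Z 0 ω, Z 1 ω)) inferInstance,
        MeasurableSpace.comap (Z 2) inferInstance,
        ⨆ t ∈ Set.Ici (0 : ℝ), MeasurableSpace.comap (X t) inferInstance] P)
    (α : Fin 3 → (Fin d → ℝ) → ℝ)
    (hαcont : ∀ i, Continuous (α i)) (hαpos : ∀ i x, 0 ≤ α i x)
    (A : Fin 3 → ℝ → Ω → ℝ)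
    (hA : ∀ i s ω, A i s ω = ∫ r in (0 : ℝ)..s, α i (X r ω))
    (hAmono : ∀ᵐ ω ∂P, ∀ i, StrictMonoOn (fun s => A i s ω) (Set.Ici (0 : ℝ)))
    (hAtop : ∀ᵐ ω ∂P, ∀ i, Filter.Tendsto (fun s => A i s ω) Filter.atTop Filter.atTop)
    (η : Fin 3 → Ω → ℝ)
    (hη : ∀ i ω, η i ω = sInf {s : ℝ | 0 ≤ s ∧ Z i ω ≤ A i s ω})
    (τ₁ τ₂ : Ω → ℝ)
    (hτ₁ : ∀ ω, τ₁ ω = min (η 0 ω) (η 2 ω))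
    (hτ₂ : ∀ ω, τ₂ ω = min (η 1 ω) (η 2 ω))
    (s t : ℝ) (hs : 0 ≤ s) (ht : 0 ≤ t) :
    (P {ω | s < τ₁ ω ∧ t < τ₂ ω}).toReal
      = ∫ ω, Real.exp (-(A 0 s ω) - A 1 t ω - δ * A 0 s ω * A 1 t ω
          - A 2 (max s t) ω) ∂P := by
  have hAmeas : ∀ i u, 0 ≤ u → AEStronglyMeasurable[sigmaOfProcess X] (A i u) P := by
    intro i u hu
    rw [show A i u = _ from funext (hA i u)]
    exact aestronglyMeasurable_sigmaOfProcess_intervalIntegral hX (hαcont i).measurable hu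
      (hAmono.mono fun ω h => intervalIntegrable_of_strictMonoOn_primitive
        (by simpa only [hA] using h i) hu)
  have hAnonneg : ∀ i u ω, 0 ≤ u → 0 ≤ A i u ω := fun i u ω hu =>
    (hA i u ω).symm ▸ intervalIntegral.integral_nonneg hu fun r _ => hαpos i _
  have hevent : {ω | s < τ₁ ω ∧ t < τ₂ ω} =ᵐ[P]
      {ω | A 0 s ω < Z 0 ω ∧ A 1 t ω < Z 1 ω ∧ A 2 (max s t) ω < Z 2 ω} := by
    rw [eventuallyEq_set]
    filter_upwards [hAmono, hAtop] with ω hmono htop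
    have hhit := fun i {u : ℝ} (hu : 0 ≤ u) =>
      lt_sInf_primitive_iff (funext fun v => hA i v ω) (hmono i) (htop i) (Z i ω) hu
    simp only [hτ₁, hτ₂, hη, lt_min_iff]
    rw [← hhit 0 hs, ← hhit 1 ht, ← hhit 2 (le_max_of_le_left hs), max_lt_iff]
    tauto
  have hmax : 0 ≤ max s t := le_max_of_le_left hs
  have hV := ((hAmeas 0 s hs).prodMk (hAmeas 1 t ht)).prodMk (hAmeas 2 _ hmax)
  rw [measure_congr hevent, ← measureReal_def]
  exact measureReal_lt_gumbel_eq_integral (hZmeas 0) (hZmeas 1) (hZmeas 2) hZ12 hZ3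
    (hindep.indep (i := 0) (j := 1) (by decide))
    (hV.mono (sigmaOfProcess_le fun _ => hX.of_uncurry_left)).aemeasurable
    (hAnonneg 0 s · hs) (hAnonneg 1 t · ht) (hAnonneg 2 _ · hmax)
    (indepFun_prodMk_of_iIndep hindep ((hZmeas 0).prodMk (hZmeas 1)).comap_le (hZmeas 2).comap_le
      (sigmaOfProcess_le fun _ => hX.of_uncurry_left) hV (comap_measurable _) (comap_measurable _))

theorem stmt11
    {Ω : Type*} [MeasurableSpace Ω] (P : Measure Ω) [IsProbabilityMeasure P]
    {d : ℕ} (X : ℝ → Ω → (Fin d → ℝ))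
    (hX : Measurable (Function.uncurry X))
    (δ : ℝ) (hδ0 : 0 ≤ δ) (hδ1 : δ ≤ 1)
    (Z : Fin 3 → Ω → ℝ) (hZmeas : ∀ i, Measurable (Z i))
    (hZ12 : ∀ s t : ℝ, 0 ≤ s → 0 ≤ t →
      P {ω | s < Z 0 ω ∧ t < Z 1 ω} = ENNReal.ofReal (Real.exp (-s - t - δ * s * t)))
    (hZ3 : ∀ s : ℝ, 0 ≤ s →
      P {ω | s < Z 2 ω} = ENNReal.ofReal (Real.exp (-s)))
    (hindep : iIndep
      ![MeasurableSpace.comap (fun ω => (Z 0 ω, Z 1 ω)) inferInstance,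
        MeasurableSpace.comap (Z 2) inferInstance,
        ⨆ t ∈ Set.Ici (0 : ℝ), MeasurableSpace.comap (X t) inferInstance] P)
    (α : Fin 3 → (Fin d → ℝ) → ℝ)
    (hαcont : ∀ i, Continuous (α i)) (hαpos : ∀ i x, 0 ≤ α i x)
    (A : Fin 3 → ℝ → Ω → ℝ)
    (hA : ∀ i s ω, A i s ω = ∫ r in (0 : ℝ)..s, α i (X r ω))
    (hAmono : ∀ᵐ ω ∂P, ∀ i, StrictMonoOn (fun s => A i s ω) (Set.Ici (0 : ℝ)))
    (hAtop : ∀ᵐ ω ∂P, ∀ i, Filter.Tendsto (fun s => A i s ω) Filter.atTop Filter.atTop)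
    (η : Fin 3 → Ω → ℝ)
    (hη : ∀ i ω, η i ω = sInf {s : ℝ | 0 ≤ s ∧ Z i ω ≤ A i s ω})
    (τ₁ τ₂ : Ω → ℝ)
    (hτ₁ : ∀ ω, τ₁ ω = min (η 0 ω) (η 2 ω))
    (hτ₂ : ∀ ω, τ₂ ω = min (η 1 ω) (η 2 ω))
    (s t : ℝ) (hs : 0 ≤ s) (ht : 0 ≤ t) :
    (P {ω | s < τ₁ ω ∧ t < τ₂ ω}).toReal
      = ∫ ω, Real.exp (-(A 0 s ω) - A 1 t ω - δ * A 0 s ω * A 1 t ω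
          - A 2 (max s t) ω) ∂P :=
  stmt11_general P X hX δ Z hZmeas hZ12 hZ3 hindep α hαcont hαpos A hA hAmono hAtop η hη τ₁ τ₂ hτ₁
    hτ₂ s t hs ht
end

section
/- (Proposition 3.2, dependence parameter decreases the probability of equality) Fix constants λ_1, λ_2, λ_3 > 0 and δ ∈ (0, 1]. In the constant-intensity Gumbel model, the probability of equality satisfies P(τ_1 = τ_2) = ∫_0^∞ λ_3 · exp(−(λ_1 + λ_2 + λ_3)·t − δ·λ_1·λ_2·t²) dt ≤ λ_3/(λ_1 + λ_2 + λ_3); that is, the probability of equality when δ ≠ 0 is at most its value λ_3/(λ_1 + λ_2 + λ_3) in the case δ = 0. -/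
open MeasureTheory ProbabilityTheory
open Real Filter Set
open scoped ENNReal


private lemma key_exp (A α β γ : ℝ) (hα : 0 ≤ α) (hβ : 0 ≤ β) (hγ : 0 ≤ γ) :
    exp (-A) + exp (-A - α - β - γ) ≤ exp (-A - α) + exp (-A - β) + exp (-A) * (α * β) := by
  have e1 : exp (-A - α) = exp (-A) * exp (-α) := by rw [← exp_add]; ring_nf
  have e2 : exp (-A - β) = exp (-A) * exp (-β) := by rw [← exp_add]; ring_nf
  have e3 : exp (-A - α - β - γ) ≤ exp (-A) * (exp (-α) * exp (-β)) := by
    rw [← exp_add, ← exp_add]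
    exact exp_le_exp.2 (by linarith)
  have p1 : 0 ≤ 1 - exp (-α) := by
    have : exp (-α) ≤ exp 0 := exp_le_exp.2 (by linarith)
    simpa using this
  have p2 : 0 ≤ 1 - exp (-β) := by
    have : exp (-β) ≤ exp 0 := exp_le_exp.2 (by linarith)
    simpa using this
  have q1 : 1 - exp (-α) ≤ α := by nlinarith [add_one_le_exp (-α)]
  have q2 : 1 - exp (-β) ≤ β := by nlinarith [add_one_le_exp (-β)]
  have hprod : (1 - exp (-α)) * (1 - exp (-β)) ≤ α * β := mul_le_mul q1 q2 p2 hα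
  have hE : 0 < exp (-A) := exp_pos _
  nlinarith [mul_le_mul_of_nonneg_left hprod hE.le]

private lemma one_add_mul_exp_neg_le_one {x : ℝ} (hx : 0 ≤ x) : (1 + x) * exp (-x) ≤ 1 := by
  have h1 : 1 + x ≤ exp x := by linarith [add_one_le_exp x]
  calc (1 + x) * exp (-x) ≤ exp x * exp (-x) :=
        mul_le_mul_of_nonneg_right h1 (exp_nonneg _)
    _ = 1 := by rw [← exp_add]; simp

private lemma one_add_mul_exp_neg_le_two {x : ℝ} (hx : 0 ≤ x) :
    (1 + x) * exp (-x) ≤ 2 * exp (-(x / 2)) := by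
  have h1 : 1 + x ≤ 2 * exp (x / 2) := by linarith [add_one_le_exp (x / 2)]
  calc (1 + x) * exp (-x) ≤ 2 * exp (x / 2) * exp (-x) :=
        mul_le_mul_of_nonneg_right h1 (exp_nonneg _)
    _ = 2 * exp (-(x / 2)) := by rw [mul_assoc, ← exp_add]; ring_nf

private lemma rect_bound (δ c h : ℝ) (k : ℕ) (hδ0 : 0 ≤ δ) (hδ1 : δ ≤ 1) (hc : 0 < c)
    (hh0 : 0 < h) (a t : ℝ) (ha : a = k * h) (ht : t = c * a) :
    exp (-a - t - δ * a * t) + exp (-(a + h) - (t + c * h) - δ * (a + h) * (t + c * h)) ≤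
      exp (-(a + h) - t - δ * (a + h) * t) + exp (-a - (t + c * h) - δ * a * (t + c * h))
        + 2 * c * h ^ 2 * exp (-(k * h) / 2) := by
  have ha0 : 0 ≤ a := by rw [ha]; positivity
  have ht0 : 0 ≤ t := by rw [ht]; positivity
  set A := a + t + δ * a * t with hA
  set α := h * (1 + δ * t) with hα
  set β := c * h * (1 + δ * a) with hβ
  set γ := δ * c * h ^ 2 with hγ
  have hα0 : 0 ≤ α := by rw [hα]; positivity
  have hβ0 : 0 ≤ β := by rw [hβ]; positivity
  have hγ0 : 0 ≤ γ := by rw [hγ]; positivity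
  have e0 : -a - t - δ * a * t = -A := by rw [hA]; ring
  have e1 : -(a + h) - t - δ * (a + h) * t = -A - α := by rw [hA, hα]; ring
  have e2 : -a - (t + c * h) - δ * a * (t + c * h) = -A - β := by rw [hA, hβ]; ring
  have e3 : -(a + h) - (t + c * h) - δ * (a + h) * (t + c * h) = -A - α - β - γ := by
    rw [hA, hα, hβ, hγ]; ring
  rw [e0, e1, e2, e3]
  have hkey := key_exp A α β γ hα0 hβ0 hγ0
  have hbound : exp (-A) * (α * β) ≤ 2 * c * h ^ 2 * exp (-(k * h) / 2) := by
    have hEA : exp (-A) ≤ exp (-a) * exp (-t) := by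
      rw [← exp_add]
      exact exp_le_exp.2 (by rw [hA]; nlinarith [mul_nonneg (mul_nonneg hδ0 ha0) ht0])
    have hαle : α ≤ h * (1 + t) := by
      rw [hα]
      have : δ * t ≤ t := by nlinarith
      nlinarith
    have hβle : β ≤ c * h * (1 + a) := by
      rw [hβ]
      have : δ * a ≤ a := by nlinarith
      nlinarith [mul_pos hc hh0]
    have h1 : exp (-A) * (α * β) ≤ (exp (-a) * exp (-t)) * (h * (1 + t) * (c * h * (1 + a))) := by
      apply mul_le_mul hEA (mul_le_mul hαle hβle hβ0 (by positivity)) (by positivity)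
      positivity
    refine h1.trans ?_
    have u1 : (1 + t) * exp (-t) ≤ 1 := one_add_mul_exp_neg_le_one ht0
    have u2 : (1 + a) * exp (-a) ≤ 2 * exp (-(a / 2)) := one_add_mul_exp_neg_le_two ha0
    have expos1 : (0:ℝ) < exp (-a) := exp_pos _
    have expos2 : (0:ℝ) < exp (-t) := exp_pos _
    have : exp (-a) * exp (-t) * (h * (1 + t) * (c * h * (1 + a)))
        = (c * h ^ 2) * (((1 + t) * exp (-t)) * ((1 + a) * exp (-a))) := by ring
    rw [this]
    have hfin : ((1 + t) * exp (-t)) * ((1 + a) * exp (-a)) ≤ 2 * exp (-(a / 2)) := by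
      calc ((1 + t) * exp (-t)) * ((1 + a) * exp (-a)) ≤ 1 * ((1 + a) * exp (-a)) :=
            mul_le_mul_of_nonneg_right u1 (by positivity)
        _ = (1 + a) * exp (-a) := one_mul _
        _ ≤ 2 * exp (-(a / 2)) := u2
    calc (c * h ^ 2) * (((1 + t) * exp (-t)) * ((1 + a) * exp (-a)))
        ≤ (c * h ^ 2) * (2 * exp (-(a / 2))) := by
          exact mul_le_mul_of_nonneg_left hfin (by positivity)
      _ = 2 * c * h ^ 2 * exp (-(k * h) / 2) := by rw [ha]; ring_nf
  linarith

private lemma diag_null {Ω : Type*} [MeasurableSpace Ω] (P : Measure Ω) [IsProbabilityMeasure P]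
    (δ : ℝ) (hδ0 : 0 ≤ δ) (hδ1 : δ ≤ 1) (X Y : Ω → ℝ) (hX : Measurable X) (hY : Measurable Y)
    (hst : ∀ s t : ℝ, 0 ≤ s → 0 ≤ t →
      P {ω | s < X ω ∧ t < Y ω} = ENNReal.ofReal (Real.exp (-s - t - δ * s * t)))
    (c : ℝ) (hc : 0 < c) : P {ω | Y ω = c * X ω} = 0 := by
  -- the positive-quadrant event has full probability
  have hposmeas : MeasurableSet {ω | 0 < X ω ∧ 0 < Y ω} :=
    (measurableSet_lt measurable_const hX).inter (measurableSet_lt measurable_const hY)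
  have hpos1 : P {ω | 0 < X ω ∧ 0 < Y ω} = 1 := by
    have := hst 0 0 le_rfl le_rfl
    simpa using this
  have hcompl0 : P {ω | 0 < X ω ∧ 0 < Y ω}ᶜ = 0 :=
    (prob_compl_eq_zero_iff hposmeas).mpr hpos1
  -- main quantitative bound
  have hn : ∀ n : ℕ, P {ω | Y ω = c * X ω} ≤ ENNReal.ofReal (8 * c * (1 / ((n : ℝ) + 1))) := by
    intro n
    set h : ℝ := 1 / ((n : ℝ) + 1) with hh
    have hh0 : 0 < h := by positivity
    have hh1 : h ≤ 1 := by
      rw [hh]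
      rw [div_le_one (by positivity)]
      simp
    -- covering rectangles
    set E : ℕ → Set Ω := fun k =>
      {ω | k * h < X ω ∧ X ω ≤ (k + 1) * h ∧ c * (k * h) < Y ω ∧ Y ω ≤ c * ((k + 1) * h)}
      with hE
    have cover : {ω | Y ω = c * X ω} ⊆ (⋃ k, E k) ∪ {ω | 0 < X ω ∧ 0 < Y ω}ᶜ := by
      intro ω hω
      by_cases hx : 0 < X ω ∧ 0 < Y ω
      · left
        have hr : 0 < X ω / h := div_pos hx.1 hh0
        set m : ℕ := ⌈X ω / h⌉₊ with hm
        have hm1 : 1 ≤ m := Nat.one_le_iff_ne_zero.mpr (by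
          simp only [hm, ne_eq, Nat.ceil_eq_zero, not_le]
          exact hr)
        have hcast : ((m - 1 : ℕ) : ℝ) = (m : ℝ) - 1 := by
          push_cast [Nat.cast_sub hm1]; ring
        have hub : X ω / h ≤ (m : ℝ) := Nat.le_ceil _
        have hlb : (m : ℝ) - 1 < X ω / h := by
          have := Nat.ceil_lt_add_one hr.le
          linarith [this]
        refine mem_iUnion.mpr ⟨m - 1, ?_⟩
        have hXlb : ((m - 1 : ℕ) : ℝ) * h < X ω := by
          rw [hcast]
          calc ((m : ℝ) - 1) * h < (X ω / h) * h := by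
                exact mul_lt_mul_of_pos_right hlb hh0
            _ = X ω := by field_simp
        have hXub : X ω ≤ ((m - 1 : ℕ) + 1 : ℝ) * h := by
          rw [hcast]
          have : X ω = (X ω / h) * h := by field_simp
          rw [this]
          apply mul_le_mul_of_nonneg_right _ hh0.le
          simpa using hub
        have hYlb : c * (((m - 1 : ℕ) : ℝ) * h) < Y ω := by
          rw [hω]; exact mul_lt_mul_of_pos_left hXlb hc
        have hYub : Y ω ≤ c * (((m - 1 : ℕ) + 1 : ℝ) * h) := by
          rw [hω]; exact mul_le_mul_of_nonneg_left hXub hc.le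
        exact ⟨hXlb, hXub, hYlb, hYub⟩
      · right; exact hx
    -- per-rectangle bound
    have perk : ∀ k : ℕ, P (E k) ≤ ENNReal.ofReal (2 * c * h ^ 2 * exp (-(k * h) / 2)) := by
      intro k
      set a : ℝ := k * h with ha'
      set b : ℝ := a + h with hb'
      set t : ℝ := c * a with ht'
      set t' : ℝ := t + c * h with ht''
      have ha0 : 0 ≤ a := by rw [ha']; positivity
      have ht0 : 0 ≤ t := by rw [ht']; positivity
      have hb0 : 0 ≤ b := by rw [hb']; positivity
      have ht'0 : 0 ≤ t' := by rw [ht'']; positivity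
      have hab : a ≤ b := by rw [hb']; linarith
      have htt : t ≤ t' := by rw [ht'']; nlinarith [mul_pos hc hh0]
      set Q : ℝ → ℝ → Set Ω := fun s u => {ω | s < X ω ∧ u < Y ω} with hQ
      have hQmeas : ∀ s u, MeasurableSet (Q s u) := fun s u =>
        (measurableSet_lt measurable_const hX).inter (measurableSet_lt measurable_const hY)
      have hEQ : E k ⊆ Q a t := by
        intro ω hω
        exact ⟨hω.1, hω.2.2.1⟩
      have hEk : E k = {ω | a < X ω ∧ X ω ≤ b ∧ t < Y ω ∧ Y ω ≤ t'} := by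
        rw [hE]
        have h1 : ((k : ℝ) + 1) * h = b := by rw [hb', ha']; ring
        have h2 : c * (((k : ℝ) + 1) * h) = t' := by rw [ht'', ht', ha']; ring
        have h3 : c * ((k : ℝ) * h) = t := by rw [ht', ha']
        have h4 : c * b = t' := by rw [hb', ht'', ht']; ring
        simp only [← ha', h1, h2, h3, h4, ← ht']
      have hdisj : Disjoint (E k) (Q b t ∪ Q a t') := by
        rw [Set.disjoint_left]
        intro ω hω hω'
        rw [hEk] at hω
        rcases hω' with h' | h'
        · exact absurd h'.1 (not_lt.mpr hω.2.1)
        · exact absurd h'.2 (not_lt.mpr hω.2.2.2)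
      have hinter : Q b t ∩ Q a t' = Q b t' := by
        ext ω
        constructor
        · rintro ⟨⟨h1, _⟩, ⟨_, h4⟩⟩; exact ⟨h1, h4⟩
        · rintro ⟨h1, h2⟩
          exact ⟨⟨h1, lt_of_le_of_lt htt h2⟩, ⟨lt_of_le_of_lt hab h1, h2⟩⟩
      have hsub : E k ∪ (Q b t ∪ Q a t') ⊆ Q a t := by
        apply Set.union_subset hEQ
        apply Set.union_subset
        · intro ω hω; exact ⟨lt_of_le_of_lt hab hω.1, hω.2⟩
        · intro ω hω; exact ⟨hω.1, lt_of_le_of_lt htt hω.2⟩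
      have chain : P (E k) + (P (Q b t) + P (Q a t')) ≤ P (Q a t) + P (Q b t') := by
        have e1 : P (Q b t) + P (Q a t') = P (Q b t ∪ Q a t') + P (Q b t') := by
          rw [← hinter, ← measure_union_add_inter _ (hQmeas a t')]
        rw [e1, ← add_assoc, ← measure_union hdisj ((hQmeas b t).union (hQmeas a t'))]
        exact add_le_add_left (measure_mono hsub) _
      have hval : ∀ s u, 0 ≤ s → 0 ≤ u → P (Q s u) = ENNReal.ofReal (exp (-s - u - δ * s * u)) :=
        fun s u hs hu => hst s u hs hu
      rw [hval a t ha0 ht0, hval b t hb0 ht0, hval a t' ha0 ht'0, hval b t' hb0 ht'0] at chain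
      have hreal : exp (-a - t - δ * a * t) + exp (-b - t' - δ * b * t') ≤
          exp (-b - t - δ * b * t) + exp (-a - t' - δ * a * t')
            + 2 * c * h ^ 2 * exp (-(k * h) / 2) := by
        rw [hb', ht'']
        exact rect_bound δ c h k hδ0 hδ1 hc hh0 a t ha' ht'
      -- turn into ENNReal cancellation
      have hofreal : ENNReal.ofReal (exp (-a - t - δ * a * t)) + ENNReal.ofReal (exp (-b - t' - δ * b * t'))
          ≤ (ENNReal.ofReal (exp (-b - t - δ * b * t)) + ENNReal.ofReal (exp (-a - t' - δ * a * t')))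
            + ENNReal.ofReal (2 * c * h ^ 2 * exp (-(k * h) / 2)) := by
        calc ENNReal.ofReal (exp (-a - t - δ * a * t)) + ENNReal.ofReal (exp (-b - t' - δ * b * t'))
            = ENNReal.ofReal (exp (-a - t - δ * a * t) + exp (-b - t' - δ * b * t')) :=
              (ENNReal.ofReal_add (exp_nonneg _) (exp_nonneg _)).symm
          _ ≤ ENNReal.ofReal ((exp (-b - t - δ * b * t) + exp (-a - t' - δ * a * t'))
                + 2 * c * h ^ 2 * exp (-(k * h) / 2)) :=
              ENNReal.ofReal_le_ofReal (by linarith)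
          _ = _ := by
              rw [ENNReal.ofReal_add (by positivity) (by positivity),
                ENNReal.ofReal_add (exp_nonneg _) (exp_nonneg _)]
      have final : P (E k) + (ENNReal.ofReal (exp (-b - t - δ * b * t)) + ENNReal.ofReal (exp (-a - t' - δ * a * t')))
          ≤ ENNReal.ofReal (2 * c * h ^ 2 * exp (-(k * h) / 2)) + (ENNReal.ofReal (exp (-b - t - δ * b * t)) + ENNReal.ofReal (exp (-a - t' - δ * a * t'))) :=
        (chain.trans hofreal).trans (le_of_eq (add_comm _ _))
      exact (ENNReal.add_le_add_iff_right
        (ENNReal.add_ne_top.mpr ⟨ENNReal.ofReal_ne_top, ENNReal.ofReal_ne_top⟩)).mp final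
    -- sum the bounds
    have hsum : ∑' k, P (E k) ≤ ENNReal.ofReal (8 * c * h) := by
      have hq0 : (0:ℝ) ≤ exp (-(h / 2)) := exp_nonneg _
      calc ∑' k, P (E k) ≤ ∑' k : ℕ, ENNReal.ofReal (2 * c * h ^ 2 * exp (-(k * h) / 2)) :=
            ENNReal.tsum_le_tsum perk
        _ = ENNReal.ofReal (2 * c * h ^ 2) * ∑' k : ℕ, (ENNReal.ofReal (exp (-(h / 2)))) ^ k := by
            rw [← ENNReal.tsum_mul_left]
            congr 1
            ext k
            rw [← ENNReal.ofReal_pow hq0, ← ENNReal.ofReal_mul (by positivity)]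
            congr 1
            rw [← Real.exp_nat_mul]
            congr 1
            ring
        _ = ENNReal.ofReal (2 * c * h ^ 2) * (1 - ENNReal.ofReal (exp (-(h / 2))))⁻¹ := by
            rw [ENNReal.tsum_geometric]
        _ ≤ ENNReal.ofReal (2 * c * h ^ 2) * ENNReal.ofReal (4 / h) := by
            apply mul_le_mul_right
            have hq1 : exp (-(h / 2)) ≤ 1 := by
              have : exp (-(h / 2)) ≤ exp 0 := exp_le_exp.2 (by linarith)
              simpa using this
            have hsub : (1 : ℝ≥0∞) - ENNReal.ofReal (exp (-(h / 2))) = ENNReal.ofReal (1 - exp (-(h / 2))) := by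
              rw [ENNReal.ofReal_sub _ hq0, ENNReal.ofReal_one]
            rw [hsub]
            have hlow : h / 4 ≤ 1 - exp (-(h / 2)) := by
              have hv : 1 + h / 2 ≤ exp (h / 2) := by linarith [add_one_le_exp (h / 2)]
              have huv : exp (-(h / 2)) * exp (h / 2) = 1 := by rw [← exp_add]; simp
              nlinarith [exp_pos (-(h / 2)), mul_le_mul_of_nonneg_left hv (exp_pos (-(h / 2))).le]
            have hpos : (0:ℝ) < 1 - exp (-(h / 2)) := lt_of_lt_of_le (by positivity) hlow
            rw [← ENNReal.ofReal_inv_of_pos hpos]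
            apply ENNReal.ofReal_le_ofReal
            rw [inv_le_iff_one_le_mul₀ hpos]
            rw [div_mul_eq_mul_div, le_div_iff₀ hh0]
            nlinarith
        _ = ENNReal.ofReal (8 * c * h) := by
            rw [← ENNReal.ofReal_mul (by positivity)]
            congr 1
            field_simp
            ring
    calc P {ω | Y ω = c * X ω} ≤ P ((⋃ k, E k) ∪ {ω | 0 < X ω ∧ 0 < Y ω}ᶜ) := measure_mono cover
      _ ≤ P (⋃ k, E k) + P ({ω | 0 < X ω ∧ 0 < Y ω}ᶜ) := measure_union_le _ _
      _ = P (⋃ k, E k) := by rw [hcompl0, add_zero]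
      _ ≤ ∑' k, P (E k) := measure_iUnion_le E
      _ ≤ ENNReal.ofReal (8 * c * h) := hsum
  -- take the limit n → ∞
  refine le_antisymm ?_ zero_le
  have htend : Tendsto (fun n : ℕ => ENNReal.ofReal (8 * c * (1 / ((n : ℝ) + 1)))) atTop (nhds 0) := by
    rw [← ENNReal.ofReal_zero]
    apply ENNReal.tendsto_ofReal
    have := tendsto_one_div_add_atTop_nhds_zero_nat.const_mul (8 * c)
    simpa using this
  exact ge_of_tendsto' htend hn

private lemma law_aux (μ : Measure ℝ) [IsProbabilityMeasure μ]
    (hs : ∀ s : ℝ, 0 ≤ s → μ (Set.Ioi s) = ENNReal.ofReal (exp (-s))) :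
    (∀ y : ℝ, μ {y} = 0) ∧ μ (Set.Iic 0) = 0 ∧
      (∀ x : ℝ, 0 < x → μ (Set.Iio x) = ENNReal.ofReal (1 - exp (-x))) := by
  have h1 : μ (Set.Ioi (0:ℝ)) = 1 := by simpa using hs 0 le_rfl
  have hIic : μ (Set.Iic (0:ℝ)) = 0 := by
    have : Set.Iic (0:ℝ) = (Set.Ioi (0:ℝ))ᶜ := by simp
    rw [this, prob_compl_eq_zero_iff measurableSet_Ioi, h1]
  have hsing : ∀ y : ℝ, μ {y} = 0 := by
    intro y
    rcases le_or_gt y 0 with hy | hy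
    · exact measure_mono_null (by simp [hy]) hIic
    · have key : ∀ n : ℕ, μ {y} ≤
          ENNReal.ofReal (exp (-(y - y / (n + 1))) - exp (-y)) := by
        intro n
        have hε0 : 0 < y / ((n:ℝ) + 1) := by positivity
        have hε1 : y / ((n:ℝ) + 1) ≤ y := by
          rw [div_le_iff₀ (by positivity)]
          nlinarith [Nat.cast_nonneg (α := ℝ) n]
        have hsub : {y} ⊆ Set.Ioi (y - y / (n+1)) \ Set.Ioi y := by
          intro x hx
          simp only [Set.mem_singleton_iff] at hx
          subst hx
          constructor
          · simp only [Set.mem_Ioi]; linarith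
          · simp
        calc μ {y} ≤ μ (Set.Ioi (y - y / (n+1)) \ Set.Ioi y) := measure_mono hsub
          _ = μ (Set.Ioi (y - y / (n+1))) - μ (Set.Ioi y) := by
              rw [measure_diff (by intro x hx; simp only [Set.mem_Ioi] at *; linarith)
                measurableSet_Ioi.nullMeasurableSet (measure_ne_top μ _)]
          _ = ENNReal.ofReal (exp (-(y - y / (n+1)))) - ENNReal.ofReal (exp (-y)) := by
              rw [hs _ (by linarith), hs _ hy.le]
          _ = ENNReal.ofReal (exp (-(y - y / (n+1))) - exp (-y)) := by
              rw [ENNReal.ofReal_sub _ (exp_nonneg _)]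
      refine le_antisymm ?_ zero_le
      have htend : Tendsto (fun n : ℕ => ENNReal.ofReal (exp (-(y - y / (n + 1))) - exp (-y)))
          atTop (nhds 0) := by
        rw [← ENNReal.ofReal_zero]
        apply ENNReal.tendsto_ofReal
        have h2 : Tendsto (fun n : ℕ => y / ((n:ℝ) + 1)) atTop (nhds 0) := by
          have := tendsto_one_div_add_atTop_nhds_zero_nat.const_mul y
          simpa [div_eq_mul_inv, mul_comm] using this
        have h3 : Tendsto (fun n : ℕ => exp (-(y - y / (n + 1)))) atTop (nhds (exp (-y))) := by
          apply (Real.continuous_exp.tendsto _).comp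
          have : Tendsto (fun n : ℕ => -(y - y / (n + 1))) atTop (nhds (-(y - 0))) :=
            ((tendsto_const_nhds.sub h2)).neg
          simpa using this
        have h4 : Tendsto (fun n : ℕ => exp (-(y - y / (n + 1))) - exp (-y)) atTop
            (nhds (exp (-y) - exp (-y))) := h3.sub tendsto_const_nhds
        simpa using h4
      exact ge_of_tendsto' htend key
  refine ⟨hsing, hIic, ?_⟩
  intro x hx
  have hIci : μ (Set.Ici x) = ENNReal.ofReal (exp (-x)) := by
    have : Set.Ici x = {x} ∪ Set.Ioi x := by
      ext z; simp [Set.mem_Ici, Set.mem_Ioi, le_iff_lt_or_eq, or_comm, eq_comm]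
    rw [this, measure_union (by simp) measurableSet_Ioi, hsing x, zero_add, hs x hx.le]
  have : Set.Iio x = (Set.Ici x)ᶜ := by simp
  rw [this, measure_compl measurableSet_Ici (measure_ne_top μ _), measure_univ, hIci,
    ← ENNReal.ofReal_one, ← ENNReal.ofReal_sub _ (exp_nonneg _)]

private lemma indep_diag {Ω : Type*} [MeasurableSpace Ω] (P : Measure Ω) [IsProbabilityMeasure P]
    (W X : Ω → ℝ) (hW : Measurable W) (hX : Measurable X)
    (hind : ProbabilityTheory.IndepFun W X P)
    (hsing : ∀ y : ℝ, P.map X {y} = 0) (c : ℝ) :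
    P {ω | X ω = c * W ω} = 0 := by
  have hmap : P.map (fun ω => (W ω, X ω)) = (P.map W).prod (P.map X) :=
    (ProbabilityTheory.indepFun_iff_map_prod_eq_prod_map_map hW.aemeasurable hX.aemeasurable).mp hind
  have hset : MeasurableSet {p : ℝ × ℝ | p.2 = c * p.1} :=
    measurableSet_eq_fun measurable_snd (measurable_fst.const_mul c)
  have heq : P {ω | X ω = c * W ω} = P.map (fun ω => (W ω, X ω)) {p : ℝ × ℝ | p.2 = c * p.1} := by
    rw [Measure.map_apply (hW.prodMk hX) hset]
    rfl
  rw [heq, hmap, Measure.prod_apply hset]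
  have hz : ∀ w : ℝ, (P.map X) (Prod.mk w ⁻¹' {p : ℝ × ℝ | p.2 = c * p.1}) = 0 := by
    intro w
    have : Prod.mk w ⁻¹' {p : ℝ × ℝ | p.2 = c * p.1} = {c * w} := by
      ext x; simp [eq_comm]
    rw [this]
    exact hsing _
  simp only [hz]
  simp

private lemma prob_lt_eq {Ω : Type*} [MeasurableSpace Ω] (P : Measure Ω) [IsProbabilityMeasure P]
    (W X : Ω → ℝ) (hW : Measurable W) (hX : Measurable X)
    (hind : ProbabilityTheory.IndepFun W X P)
    (l₃ : ℝ) (hl₃ : 0 < l₃)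
    (hXs : ∀ s : ℝ, 0 ≤ s → P {ω | s < X ω} = ENNReal.ofReal (exp (-s)))
    (G : ℝ → ℝ) (hGnn : ∀ s : ℝ, 0 ≤ G s)
    (hG : ∀ s : ℝ, 0 ≤ s → P {ω | s < W ω} = ENNReal.ofReal (G s)) :
    P {ω | X ω < l₃ * W ω}
      = ∫⁻ s in Set.Ioi (0:ℝ), ENNReal.ofReal (l₃ * exp (-(l₃ * s)) * G s) := by
  set μW := P.map W with hμW
  set μX := P.map X with hμX
  have hμXlaw : ∀ s : ℝ, 0 ≤ s → μX (Set.Ioi s) = ENNReal.ofReal (exp (-s)) := by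
    intro s hsge
    rw [hμX, Measure.map_apply hX measurableSet_Ioi]
    exact hXs s hsge
  have : IsProbabilityMeasure μX := by
    rw [hμX]; exact Measure.isProbabilityMeasure_map hX.aemeasurable
  obtain ⟨hsingX, hIicX, hIioX⟩ := law_aux μX hμXlaw
  have hμWlaw : ∀ s : ℝ, 0 ≤ s → μW (Set.Ioi s) = ENNReal.ofReal (G s) := by
    intro s hsge
    rw [hμW, Measure.map_apply hW measurableSet_Ioi]
    exact hG s hsge
  -- step A : product representation
  have hmap : P.map (fun ω => (W ω, X ω)) = μW.prod μX :=
    (ProbabilityTheory.indepFun_iff_map_prod_eq_prod_map_map hW.aemeasurable hX.aemeasurable).mp hind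
  have hsetE : MeasurableSet {p : ℝ × ℝ | p.2 < l₃ * p.1} :=
    measurableSet_lt measurable_snd (measurable_fst.const_mul l₃)
  have hA : P {ω | X ω < l₃ * W ω} = ∫⁻ w, μX (Set.Iio (l₃ * w)) ∂μW := by
    have h1 : P {ω | X ω < l₃ * W ω}
        = P.map (fun ω => (W ω, X ω)) {p : ℝ × ℝ | p.2 < l₃ * p.1} := by
      rw [Measure.map_apply (hW.prodMk hX) hsetE]
      rfl
    rw [h1, hmap, Measure.prod_apply hsetE]
    rfl
  -- the two-variable integrand
  set g : ℝ × ℝ → ℝ≥0∞ := fun q =>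
    Set.indicator {q : ℝ × ℝ | 0 < q.2 ∧ q.2 < q.1}
      (fun q => ENNReal.ofReal (l₃ * exp (-(l₃ * q.2)))) q with hg
  have hgmeas : Measurable g := by
    apply Measurable.indicator
    · exact (ENNReal.measurable_ofReal.comp ((measurable_const.mul
        ((Real.measurable_exp.comp ((measurable_snd.const_mul l₃).neg)))))).comp measurable_id
        |>.comp measurable_id
    · exact (measurableSet_lt measurable_const measurable_snd).inter
        (measurableSet_lt measurable_snd measurable_fst)
  -- step B : slice in s
  have hB : ∀ w : ℝ, μX (Set.Iio (l₃ * w)) = ∫⁻ s, g (w, s) := by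
    intro w
    rcases le_or_gt w 0 with hw | hw
    · have h1 : μX (Set.Iio (l₃ * w)) = 0 := by
        apply measure_mono_null _ hIicX
        intro x hx
        simp only [Set.mem_Iio] at hx
        have : l₃ * w ≤ 0 := mul_nonpos_of_nonneg_of_nonpos hl₃.le hw
        simp only [Set.mem_Iic]
        linarith
      have h2 : ∀ s : ℝ, g (w, s) = 0 := by
        intro s
        simp only [hg]
        apply Set.indicator_of_notMem
        simp only [Set.mem_setOf_eq, not_and]
        intro hs1 hs2
        linarith
      rw [h1]
      simp only [h2]
      simp
    · -- w > 0
      have hiw : ∀ s : ℝ, g (w, s) = (Set.Ioo (0:ℝ) w).indicator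
          (fun s => ENNReal.ofReal (l₃ * exp (-(l₃ * s)))) s := by
        intro s
        simp only [hg]
        rcases Classical.em (0 < s ∧ s < w) with hmem | hmem
        · rw [Set.indicator_of_mem (by exact hmem) , Set.indicator_of_mem (by exact hmem)]
        · rw [Set.indicator_of_notMem (by exact hmem), Set.indicator_of_notMem (by exact hmem)]
      simp only [hiw]
      rw [lintegral_indicator measurableSet_Ioo]
      have hcont : Continuous (fun s : ℝ => l₃ * exp (-(l₃ * s))) :=
        continuous_const.mul (Real.continuous_exp.comp ((continuous_const.mul continuous_id : Continuous fun u : ℝ => l₃ * u).neg))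
      have hint : IntegrableOn (fun s => l₃ * exp (-(l₃ * s))) (Set.Ioo 0 w) := by
        apply IntegrableOn.mono_set _ Set.Ioo_subset_Icc_self
        exact hcont.continuousOn.integrableOn_compact isCompact_Icc
      rw [← ofReal_integral_eq_lintegral_ofReal hint
        (ae_of_all _ fun s => by positivity)]
      rw [hIioX _ (by positivity)]
      congr 1
      have : ∫ s in Set.Ioo 0 w, l₃ * exp (-(l₃ * s)) = ∫ s in Set.Ioc 0 w, l₃ * exp (-(l₃ * s)) :=
        (MeasureTheory.integral_Ioc_eq_integral_Ioo).symm
      rw [this, ← intervalIntegral.integral_of_le hw.le]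
      have hderiv : ∀ u ∈ Set.uIcc (0:ℝ) w,
          HasDerivAt (fun u => -exp (-(l₃ * u))) (l₃ * exp (-(l₃ * u))) u := by
        intro u _
        have h1 : HasDerivAt (fun u : ℝ => -(l₃ * u)) (-l₃) u := by
          exact (((hasDerivAt_id' u).const_mul l₃).neg).congr_deriv (by ring)
        have h2 := (Real.hasDerivAt_exp (-(l₃ * u))).comp u h1
        have h3 := h2.neg
        refine h3.congr_deriv ?_
        ring
      have hii : IntervalIntegrable (fun u => l₃ * exp (-(l₃ * u))) volume 0 w := by
        apply Continuous.intervalIntegrable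
        exact continuous_const.mul ((Real.continuous_exp.comp ((continuous_const.mul continuous_id : Continuous fun u : ℝ => l₃ * u).neg)))
      rw [intervalIntegral.integral_eq_sub_of_hasDerivAt hderiv hii]
      simp only [mul_zero, neg_zero, Real.exp_zero]
      ring
  -- step C : swap
  have hC : P {ω | X ω < l₃ * W ω}
      = ∫⁻ s, ∫⁻ w, g (w, s) ∂μW := by
    rw [hA]
    simp only [hB]
    exact lintegral_lintegral_swap hgmeas.aemeasurable
  -- step D : inner integral
  have hD : ∀ s : ℝ, (∫⁻ w, g (w, s) ∂μW) = (Set.Ioi (0:ℝ)).indicator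
      (fun s => ENNReal.ofReal (l₃ * exp (-(l₃ * s))) * μW (Set.Ioi s)) s := by
    intro s
    rcases le_or_gt s 0 with hs | hs
    · have h2 : ∀ w : ℝ, g (w, s) = 0 := by
        intro w
        simp only [hg]
        apply Set.indicator_of_notMem
        simp only [Set.mem_setOf_eq, not_and]
        intro hs1
        linarith
      simp only [h2]
      rw [Set.indicator_of_notMem (by simpa using hs)]
      simp
    · have h2 : ∀ w : ℝ, g (w, s) = (Set.Ioi s).indicator
          (fun _ => ENNReal.ofReal (l₃ * exp (-(l₃ * s)))) w := by
        intro w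
        simp only [hg]
        rcases Classical.em (s < w) with hmem | hmem
        · rw [Set.indicator_of_mem (by exact ⟨hs, hmem⟩), Set.indicator_of_mem (by exact hmem)]
        · rw [Set.indicator_of_notMem (by simp only [Set.mem_setOf_eq, not_and]; intro; exact hmem),
            Set.indicator_of_notMem (by exact hmem)]
      simp only [h2]
      rw [lintegral_indicator measurableSet_Ioi, Set.indicator_of_mem (by simpa using hs)]
      simp [Measure.restrict_apply]
  -- assemble
  rw [hC]
  simp only [hD]
  rw [lintegral_indicator measurableSet_Ioi]
  apply setLIntegral_congr_fun measurableSet_Ioi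
  intro s hs
  simp only [Set.mem_Ioi] at hs
  beta_reduce
  rw [hμWlaw s hs.le, ← ENNReal.ofReal_mul (by positivity)]

theorem stmt13
    {Ω : Type*} [MeasurableSpace Ω] (P : Measure Ω) [IsProbabilityMeasure P]
    (δ : ℝ) (hδ0 : 0 < δ) (hδ1 : δ ≤ 1)
    (l₁ l₂ l₃ : ℝ) (hl₁ : 0 < l₁) (hl₂ : 0 < l₂) (hl₃ : 0 < l₃)
    (Z : Fin 3 → Ω → ℝ) (hZmeas : ∀ i, Measurable (Z i))
    (hZ12 : ∀ s t : ℝ, 0 ≤ s → 0 ≤ t →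
      P {ω | s < Z 0 ω ∧ t < Z 1 ω} = ENNReal.ofReal (Real.exp (-s - t - δ * s * t)))
    (hZ3 : ∀ s : ℝ, 0 ≤ s →
      P {ω | s < Z 2 ω} = ENNReal.ofReal (Real.exp (-s)))
    (hindep : IndepFun (fun ω => (Z 0 ω, Z 1 ω)) (Z 2) P)
    (η : Fin 3 → Ω → ℝ)
    (hη₁ : ∀ ω, η 0 ω = Z 0 ω / l₁)
    (hη₂ : ∀ ω, η 1 ω = Z 1 ω / l₂)
    (hη₃ : ∀ ω, η 2 ω = Z 2 ω / l₃)
    (τ₁ τ₂ : Ω → ℝ)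
    (hτ₁ : ∀ ω, τ₁ ω = min (η 0 ω) (η 2 ω))
    (hτ₂ : ∀ ω, τ₂ ω = min (η 1 ω) (η 2 ω)) :
    (P {ω | τ₁ ω = τ₂ ω}).toReal
        = ∫ t in Set.Ioi (0 : ℝ),
            l₃ * Real.exp (-(l₁ + l₂ + l₃) * t - δ * l₁ * l₂ * t ^ 2) ∧
    (P {ω | τ₁ ω = τ₂ ω}).toReal ≤ l₃ / (l₁ + l₂ + l₃) := by
  set W : Ω → ℝ := fun ω => min (Z 0 ω / l₁) (Z 1 ω / l₂) with hW
  have hWmeas : Measurable W := ((hZmeas 0).div_const l₁).min ((hZmeas 1).div_const l₂)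
  have hindWX : IndepFun W (Z 2) P := by
    have hφ : Measurable (fun p : ℝ × ℝ => min (p.1 / l₁) (p.2 / l₂)) :=
      (measurable_fst.div_const l₁).min (measurable_snd.div_const l₂)
    exact hindep.comp hφ measurable_id
  -- survival function of W
  set G : ℝ → ℝ := fun s => exp (-(l₁ * s) - l₂ * s - δ * (l₁ * s) * (l₂ * s)) with hG
  have hGnn : ∀ s : ℝ, 0 ≤ G s := fun s => exp_nonneg _
  have hGsurv : ∀ s : ℝ, 0 ≤ s → P {ω | s < W ω} = ENNReal.ofReal (G s) := by
    intro s hs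
    have hset : {ω | s < W ω} = {ω | l₁ * s < Z 0 ω ∧ l₂ * s < Z 1 ω} := by
      ext ω
      simp only [hW, Set.mem_setOf_eq, lt_min_iff, lt_div_iff₀ hl₁, lt_div_iff₀ hl₂, mul_comm]
    rw [hset, hZ12 (l₁ * s) (l₂ * s) (by positivity) (by positivity)]
  -- the event as a nice set
  set E : Set Ω := {ω | Z 2 ω < l₃ * W ω} with hE
  -- law of Z 2 has null singletons
  have hmap2 : IsProbabilityMeasure (P.map (Z 2)) := Measure.isProbabilityMeasure_map (hZmeas 2).aemeasurable
  have hlaw2 : ∀ s : ℝ, 0 ≤ s → (P.map (Z 2)) (Set.Ioi s) = ENNReal.ofReal (exp (-s)) := by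
    intro s hs
    rw [Measure.map_apply (hZmeas 2) measurableSet_Ioi]
    exact hZ3 s hs
  obtain ⟨hsing2, -, -⟩ := law_aux (P.map (Z 2)) hlaw2
  -- null sets
  have hN1 : P {ω | η 0 ω = η 1 ω} = 0 := by
    have hset : {ω | η 0 ω = η 1 ω} = {ω | Z 1 ω = (l₂ / l₁) * Z 0 ω} := by
      ext ω
      rw [Set.mem_setOf_eq, Set.mem_setOf_eq, hη₁, hη₂, div_eq_div_iff hl₁.ne' hl₂.ne']
      rw [div_mul_eq_mul_div, eq_div_iff hl₁.ne']
      constructor <;> intro h <;> linarith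
    rw [hset]
    exact diag_null P δ hδ0.le hδ1 (Z 0) (Z 1) (hZmeas 0) (hZmeas 1) hZ12 _ (by positivity)
  have hN2 : P {ω | η 2 ω = η 0 ω} = 0 := by
    have hset : {ω | η 2 ω = η 0 ω} = {ω | Z 2 ω = (l₃ / l₁) * Z 0 ω} := by
      ext ω
      rw [Set.mem_setOf_eq, Set.mem_setOf_eq, hη₃, hη₁, div_eq_div_iff hl₃.ne' hl₁.ne']
      rw [div_mul_eq_mul_div, eq_div_iff hl₁.ne']
      constructor <;> intro h <;> linarith
    rw [hset]
    exact indep_diag P (Z 0) (Z 2) (hZmeas 0) (hZmeas 2)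
      (hindep.comp measurable_fst measurable_id) hsing2 _
  have hN3 : P {ω | η 2 ω = η 1 ω} = 0 := by
    have hset : {ω | η 2 ω = η 1 ω} = {ω | Z 2 ω = (l₃ / l₂) * Z 1 ω} := by
      ext ω
      rw [Set.mem_setOf_eq, Set.mem_setOf_eq, hη₃, hη₂, div_eq_div_iff hl₃.ne' hl₂.ne']
      rw [div_mul_eq_mul_div, eq_div_iff hl₂.ne']
      constructor <;> intro h <;> linarith
    rw [hset]
    exact indep_diag P (Z 1) (Z 2) (hZmeas 1) (hZmeas 2)
      (hindep.comp measurable_snd measurable_id) hsing2 _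
  -- E in η terms
  have hEeta : ∀ ω, (ω ∈ E ↔ η 2 ω < min (η 0 ω) (η 1 ω)) := by
    intro ω
    rw [hE, Set.mem_setOf_eq, hη₃, hη₁, hη₂, hW, div_lt_iff₀ hl₃, mul_comm]
  -- P T = P E
  have hTE : P {ω | τ₁ ω = τ₂ ω} = P E := by
    have hsub1 : E ⊆ {ω | τ₁ ω = τ₂ ω} := by
      intro ω hω
      rw [hEeta ω, lt_min_iff] at hω
      rw [Set.mem_setOf_eq, hτ₁, hτ₂, min_eq_right hω.1.le, min_eq_right hω.2.le]
    have hsub2 : {ω | τ₁ ω = τ₂ ω} ⊆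
        E ∪ ({ω | η 0 ω = η 1 ω} ∪ {ω | η 2 ω = η 0 ω} ∪ {ω | η 2 ω = η 1 ω}) := by
      intro ω hω
      rw [Set.mem_setOf_eq, hτ₁, hτ₂] at hω
      by_cases hωE : ω ∈ E
      · exact Or.inl hωE
      right
      rw [hEeta ω] at hωE
      push_neg at hωE
      set x := η 0 ω
      set y := η 1 ω
      set z := η 2 ω
      rcases le_total x y with hxy | hxy
      · have hxz : x ≤ z := by rwa [min_eq_left hxy] at hωE
        rcases eq_or_lt_of_le hxz with heq | hlt
        · exact Or.inl (Or.inr heq.symm)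
        · have h1 : min x z = x := min_eq_left hxz
          rcases min_cases y z with ⟨h2, h3⟩ | ⟨h2, h3⟩
          · exact Or.inl (Or.inl (by rw [Set.mem_setOf_eq]; rw [h1, h2] at hω; exact hω))
          · rw [h1, h2] at hω; exact absurd (hω ▸ hlt) (lt_irrefl _)
      · have hyz : y ≤ z := by rwa [min_eq_right hxy] at hωE
        rcases eq_or_lt_of_le hyz with heq | hlt
        · exact Or.inr heq.symm
        · have h1 : min y z = y := min_eq_left hyz
          rcases min_cases x z with ⟨h2, h3⟩ | ⟨h2, h3⟩
          · exact Or.inl (Or.inl (by rw [Set.mem_setOf_eq]; rw [h1, h2] at hω; exact hω))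
          · rw [h1, h2] at hω; exact absurd (hω ▸ hlt) (lt_irrefl _)
    refine le_antisymm ?_ (measure_mono hsub1)
    calc P {ω | τ₁ ω = τ₂ ω}
        ≤ P (E ∪ ({ω | η 0 ω = η 1 ω} ∪ {ω | η 2 ω = η 0 ω} ∪ {ω | η 2 ω = η 1 ω})) :=
          measure_mono hsub2
      _ ≤ P E + P ({ω | η 0 ω = η 1 ω} ∪ {ω | η 2 ω = η 0 ω} ∪ {ω | η 2 ω = η 1 ω}) :=
          measure_union_le _ _
      _ ≤ P E + ((P {ω | η 0 ω = η 1 ω} + P {ω | η 2 ω = η 0 ω}) + P {ω | η 2 ω = η 1 ω}) := by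
          gcongr
          exact le_trans (measure_union_le _ _) (add_le_add_left (measure_union_le _ _) _)
      _ = P E := by rw [hN1, hN2, hN3]; simp
  -- the lintegral formula
  have hPE : P E = ∫⁻ s in Set.Ioi (0:ℝ),
      ENNReal.ofReal (l₃ * exp (-(l₁ + l₂ + l₃) * s - δ * l₁ * l₂ * s ^ 2)) := by
    rw [hE, prob_lt_eq P W (Z 2) hWmeas (hZmeas 2) hindWX l₃ hl₃ hZ3 G hGnn hGsurv]
    apply setLIntegral_congr_fun measurableSet_Ioi
    intro s hs
    beta_reduce
    congr 1
    rw [mul_assoc, ← Real.exp_add]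
    congr 1
    ring
  rw [hTE, hPE]
  -- integrability
  set L : ℝ := l₁ + l₂ + l₃ with hL
  have hLpos : 0 < L := by rw [hL]; positivity
  set f : ℝ → ℝ := fun s => l₃ * exp (-L * s - δ * l₁ * l₂ * s ^ 2) with hf
  set gb : ℝ → ℝ := fun s => l₃ * exp (-L * s) with hgb
  have hgbint : IntegrableOn gb (Set.Ioi (0:ℝ)) := by
    rw [hgb]
    exact (exp_neg_integrableOn_Ioi 0 hLpos).const_mul l₃
  have hfg : ∀ s : ℝ, f s ≤ gb s := by
    intro s
    rw [hf, hgb]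
    apply mul_le_mul_of_nonneg_left _ hl₃.le
    apply exp_le_exp.2
    nlinarith [sq_nonneg s, mul_pos (mul_pos hδ0 hl₁) hl₂]
  have hfcont : Continuous f := by
    rw [hf]
    apply continuous_const.mul
    apply Real.continuous_exp.comp
    exact ((continuous_const.mul continuous_id).sub (continuous_const.mul (continuous_pow 2)))
  have hfint : IntegrableOn f (Set.Ioi (0:ℝ)) := by
    apply Integrable.mono' hgbint hfcont.aestronglyMeasurable.restrict
    apply ae_of_all
    intro s
    rw [Real.norm_eq_abs, abs_of_nonneg (by rw [hf]; positivity)]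
    exact hfg s
  have hfnn : ∀ s : ℝ, 0 ≤ f s := fun s => by rw [hf]; positivity
  have hlr : (∫⁻ s in Set.Ioi (0:ℝ), ENNReal.ofReal (f s)) = ENNReal.ofReal (∫ s in Set.Ioi (0:ℝ), f s) :=
    (ofReal_integral_eq_lintegral_ofReal hfint (ae_of_all _ hfnn)).symm
  have hintnn : 0 ≤ ∫ s in Set.Ioi (0:ℝ), f s :=
    setIntegral_nonneg measurableSet_Ioi fun s _ => hfnn s
  constructor
  · rw [hlr, ENNReal.toReal_ofReal hintnn]
  · rw [hlr, ENNReal.toReal_ofReal hintnn]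
    have hmono : (∫ s in Set.Ioi (0:ℝ), f s) ≤ ∫ s in Set.Ioi (0:ℝ), gb s :=
      setIntegral_mono_on hfint hgbint measurableSet_Ioi fun s _ => hfg s
    refine hmono.trans ?_
    have hFd : ∀ x ∈ Set.Ici (0:ℝ), HasDerivAt (fun s => -(l₃ / L) * exp (-L * s)) (gb x) x := by
      intro x _
      have h1 : HasDerivAt (fun s : ℝ => -L * s) (-L) x := by
        simpa using (hasDerivAt_id x).const_mul (-L)
      have h2 := (Real.hasDerivAt_exp (-L * x)).comp x h1
      have h3 := h2.const_mul (-(l₃ / L))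
      refine h3.congr_deriv ?_
      rw [hgb]
      field_simp
    have htend : Tendsto (fun s => -(l₃ / L) * exp (-L * s)) atTop (nhds 0) := by
      have h1 : Tendsto (fun s : ℝ => -L * s) atTop atBot := by
        apply Tendsto.const_mul_atTop_of_neg (by linarith : -L < 0) tendsto_id
      have h2 : Tendsto (fun s : ℝ => exp (-L * s)) atTop (nhds 0) :=
        Real.tendsto_exp_atBot.comp h1
      have := h2.const_mul (-(l₃ / L))
      simpa using this
    have := integral_Ioi_of_hasDerivAt_of_tendsto' hFd hgbint htend
    rw [this]
    simp
end
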